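/- arXiv:2311.13122 — 8 statements merged into one kernel-verified Lean document; each statement's English description precedes it below -/
import Mathlib

section
/- Let K be a compact Hausdorff topological space, I a directed set, and ((X_i, d_i))_{i ∈ I} a directed system of complete metric spaces (distances allowed to take the value +∞) with nonexpansive connecting maps ι_{ji} : X_i → X_j for i ≤ j, and let (X, d) be a complete metric space with compatible nonexpansive maps ι_i : X_i → X presenting X as the filtered colimit, so that in particular d(ι_i(x), ι_i(y)) = inf_{j ≥ i} d_j(ι_{ji}(x), ι_{ji}(y)) for all i ∈ I and x, y ∈ X_i. Then for every i ∈ I and all continuous maps f, g : K → X_i one has sup_{p ∈ K} d(ι_i(f(p)), ι_i(g(p))) = inf_{j ≥ i} sup_{p ∈ K} d_j(ι_{ji}(f(p)), ι_{ji}(g(p))); that is, the canonical map from the colimit of the spaces of continuous maps Cont(K, X_i), each metrized by the supremum distance, to Cont(K, X) is an isometric embedding. -/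
/-!
Each map `p ↦ d_j(ι_{ji} (f p), ι_{ji} (g p))` is continuous and decreases as `j` grows, and its
pointwise infimum over `j ≥ i` is `p ↦ d(ι_i (f p), ι_i (g p))`. A Dini-type argument then lets the
infimum over `j` pass through the supremum over the compact space `K`: if the latter supremum is
`< c`, the open sets `{p | d_j(…) < c}` form a directed cover of `K`, so a single `j` covers it.
-/

open Set

instance Subtype.isDirectedOrder_le {I : Type*} [Preorder I] [IsDirectedOrder I] (i : I) :
    IsDirectedOrder {j // i ≤ j} where
  directed a b :=
    let ⟨c, hac, hbc⟩ := exists_ge_ge a.1 b.1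
    ⟨⟨c, a.2.trans hac⟩, hac, hbc⟩

theorem iSup_iInf_eq_iInf_iSup_of_antitone_of_upperSemicontinuous
    {K J α : Type*} [TopologicalSpace K] [CompactSpace K] [Preorder J] [IsDirectedOrder J]
    [Nonempty J] [CompleteLinearOrder α] [DenselyOrdered α]
    {F : J → K → α} (hF : Antitone F) (hFu : ∀ j, UpperSemicontinuous (F j)) :
    ⨆ p, ⨅ j, F j p = ⨅ j, ⨆ p, F j p := by
  refine le_antisymm (iSup_iInf_le_iInf_iSup _) (le_of_forall_gt_imp_ge_of_dense fun c hc => ?_)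
  have hcover : univ ⊆ ⋃ j, F j ⁻¹' Iio c := fun p _ =>
    mem_iUnion.2 (iInf_lt_iff.1 ((le_iSup (fun p => ⨅ j, F j p) p).trans_lt hc))
  obtain ⟨j, hj⟩ := isCompact_univ.elim_directed_cover _
    (fun j => upperSemicontinuous_iff_isOpen_preimage.1 (hFu j) c) hcover
    (Monotone.directed_le fun _ _ hjk _ hp => (hF hjk _).trans_lt hp)
  exact iInf_le_of_le j (iSup_le fun p => (hj (mem_univ p)).le)

theorem stmt0_general
    {K : Type*} [TopologicalSpace K] [CompactSpace K]
    {I : Type*} [Preorder I] [IsDirected I (· ≤ ·)]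
    {X : I → Type*} [∀ i, EMetricSpace (X i)]
    {Y : Type*} [EMetricSpace Y]
    (ι : ∀ i j, i ≤ j → X i → X j)
    (ιc : ∀ i, X i → Y)
    (hι1 : ∀ i j (h : i ≤ j) (x y : X i), edist (ι i j h x) (ι i j h y) ≤ edist x y)
    (htrans : ∀ i j k (hij : i ≤ j) (hjk : j ≤ k) (x : X i),
      ι j k hjk (ι i j hij x) = ι i k (hij.trans hjk) x)
    (hdist : ∀ i (x y : X i),
      edist (ιc i x) (ιc i y) = ⨅ j : {j // i ≤ j}, edist (ι i j.1 j.2 x) (ι i j.1 j.2 y))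
    (i : I) (f g : K → X i) (hf : Continuous f) (hg : Continuous g) :
    (⨆ p : K, edist (ιc i (f p)) (ιc i (g p)))
      = ⨅ j : {j // i ≤ j}, ⨆ p : K, edist (ι i j.1 j.2 (f p)) (ι i j.1 j.2 (g p)) := by
  have : Nonempty {j // i ≤ j} := ⟨⟨i, le_rfl⟩⟩
  simp only [hdist]
  refine iSup_iInf_eq_iInf_iSup_of_antitone_of_upperSemicontinuous (fun a b hab p => ?_)
    fun j => Continuous.upperSemicontinuous ?_
  · simp only [← htrans i a.1 b.1 a.2 hab]
    exact hι1 _ _ _ _ _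
  · have hιj := (LipschitzWith.of_edist_le (hι1 i j.1 j.2)).continuous
    exact (hιj.comp hf).edist (hιj.comp hg)

/-- For a compact Hausdorff space `K` and a filtered colimit
`(X, d) = colim (X i, d i)` of complete (extended-)metric spaces along
nonexpansive connecting maps, the canonical map from the colimit of the spaces
`Cont(K, X i)` (with supremum distance) to `Cont(K, X)` is an isometric
embedding: for continuous `f g : K → X i`,
`sup_p d(ι_i (f p), ι_i (g p)) = inf_{j ≥ i} sup_p d_j (ι_{ji} (f p), ι_{ji} (g p))`. -/
theorem stmt0
    {K : Type*} [TopologicalSpace K] [CompactSpace K] [T2Space K]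
    {I : Type*} [Preorder I] [IsDirected I (· ≤ ·)] [Nonempty I]
    {X : I → Type*} [∀ i, EMetricSpace (X i)] [∀ i, CompleteSpace (X i)]
    {Y : Type*} [EMetricSpace Y] [CompleteSpace Y]
    (ι : ∀ i j, i ≤ j → X i → X j)
    (ιc : ∀ i, X i → Y)
    (hι1 : ∀ i j (h : i ≤ j) (x y : X i), edist (ι i j h x) (ι i j h y) ≤ edist x y)
    (hιc1 : ∀ i (x y : X i), edist (ιc i x) (ιc i y) ≤ edist x y)
    (hcomp : ∀ i j (h : i ≤ j) (x : X i), ιc j (ι i j h x) = ιc i x)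
    (htrans : ∀ i j k (hij : i ≤ j) (hjk : j ≤ k) (x : X i),
      ι j k hjk (ι i j hij x) = ι i k (hij.trans hjk) x)
    (hid : ∀ i (x : X i), ι i i le_rfl x = x)
    (hdense : Dense (⋃ i, Set.range (ιc i)))
    (hdist : ∀ i (x y : X i),
      edist (ιc i x) (ιc i y) = ⨅ j : {j // i ≤ j}, edist (ι i j.1 j.2 x) (ι i j.1 j.2 y))
    (i : I) (f g : K → X i) (hf : Continuous f) (hg : Continuous g) :
    (⨆ p : K, edist (ιc i (f p)) (ιc i (g p)))
      = ⨅ j : {j // i ≤ j}, ⨆ p : K, edist (ι i j.1 j.2 (f p)) (ι i j.1 j.2 (g p)) :=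
  stmt0_general ι ιc hι1 htrans hdist i f g hf hg
end

section
/- Let K be a compact Hausdorff topological space, I a directed set, (E_i)_{i ∈ I} a directed system of Banach spaces with linear contractions ι_{ji} : E_i → E_j (i ≤ j) as connecting maps, and E a Banach space with compatible linear contractions ι_i : E_i → E such that ⋃_i ι_i(E_i) is dense in E and ‖ι_i(x)‖ = inf_{j ≥ i} ‖ι_{ji}(x)‖ for every i and every x ∈ E_i. Then: (i) for every i and all continuous maps f, g : K → E_i, sup_{p ∈ K} ‖ι_i(f(p)) − ι_i(g(p))‖ = inf_{j ≥ i} sup_{p ∈ K} ‖ι_{ji}(f(p)) − ι_{ji}(g(p))‖; and (ii) for every continuous map φ : K → E and every ε > 0 there exist i ∈ I and a continuous map ψ : K → E_i with sup_{p ∈ K} ‖φ(p) − ι_i(ψ(p))‖ ≤ ε. In other words, the functor Cont(K, −) from Banach spaces with linear contractions to complete metric spaces (with supremum distance and nonexpansive maps) preserves filtered colimits. -/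
/-!
Part (i) is Dini's theorem: for `x = f - g`, the functions `p ↦ ‖ι i j (x p)‖` decrease in
`j` and converge pointwise to the continuous function `p ↦ ‖ιc i (x p)‖`, hence uniformly on the
compact space `K`, so their suprema converge to the supremum of the limit.

Part (ii): by density, every point of `K` has a neighbourhood on which `φ` is `ε`-close to a
constant `ιc i c`. By compactness finitely many such neighbourhoods suffice, and pushing the
constants to a common stage `i` gives a locally constant approximation in `E i`; since the
condition `‖φ p - ιc i x‖ < ε` is convex in `x`, a partition of unity glues these into a
continuous `ψ : K → E i`.
-/

open Filter Topology

theorem iSup_eq_iInf_iSup_of_antitone_tendsto {K J : Type*} [TopologicalSpace K] [CompactSpace K]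
    [Preorder J] [IsDirected J (· ≤ ·)] [Nonempty J] {g : J → K → ℝ} {f : K → ℝ}
    (hg : ∀ j, Continuous (g j)) (hf : Continuous f) (hanti : Antitone g)
    (hlim : ∀ p, Tendsto (g · p) atTop (𝓝 (f p))) :
    ⨆ p, f p = ⨅ j, ⨆ p, g j p := by
  rcases isEmpty_or_nonempty K with hK | hK
  · simp [Real.iSup_of_isEmpty]
  have hle : ∀ j, ⨆ p, f p ≤ ⨆ p, g j p := fun j =>
    ciSup_mono (isCompact_range (hg j)).bddAbove fun p =>
      Antitone.le_of_tendsto (fun _ _ hjk => hanti hjk p) (hlim p) j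
  refine le_antisymm (le_ciInf hle) (le_of_forall_pos_le_add fun ε hε => ?_)
  obtain ⟨j, hj⟩ := (Metric.tendstoUniformly_iff.1
    (Antitone.tendstoUniformly_of_forall_tendsto hg hanti hf hlim) ε hε).exists
  calc ⨅ j, ⨆ p, g j p ≤ ⨆ p, g j p := ciInf_le ⟨_, Set.forall_mem_range.2 hle⟩ j
    _ ≤ (⨆ p, f p) + ε := ciSup_le fun p => by
      have := le_ciSup (isCompact_range hf).bddAbove p
      have := (abs_sub_lt_iff.1 (Real.dist_eq _ _ ▸ hj p)).2
      linarith

theorem exists_forall_of_forall_eventually_nhds {K I : Type*} [TopologicalSpace K]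
    [CompactSpace K] [Preorder I] [IsDirected I (· ≤ ·)] [Nonempty I] {P : I → K → Prop}
    (hP : Monotone P) (h : ∀ p, ∃ i, ∀ᶠ q in 𝓝 p, P i q) : ∃ i, ∀ p, P i p := by
  obtain ⟨i, hi⟩ := isCompact_univ.elim_directed_cover (fun i => {p | ∀ᶠ q in 𝓝 p, P i q})
    (fun _ => isOpen_setOfPred_eventually_nhds) (fun p _ => Set.mem_iUnion.2 (h p))
    (Monotone.directed_le fun _ _ hij _ hp => hp.mono fun q => hP hij q)
  exact ⟨i, fun p => (hi (Set.mem_univ p)).self_of_nhds⟩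

instance isDirected_subtype_le_left {I : Type*} [Preorder I] [IsDirected I (· ≤ ·)] (i : I) :
    IsDirected {j // i ≤ j} (· ≤ ·) where
  directed a b :=
    let ⟨c, hac, hbc⟩ := exists_ge_ge a.1 b.1
    ⟨⟨c, a.2.trans hac⟩, hac, hbc⟩

instance nonempty_subtype_le_left {I : Type*} [Preorder I] (i : I) : Nonempty {j // i ≤ j} :=
  ⟨⟨i, le_rfl⟩⟩

section DirectedSystem

variable {I : Type*} [Preorder I] {E : I → Type*} [∀ i, NormedAddCommGroup (E i)]
  [∀ i, NormedSpace ℝ (E i)] {F : Type*} [NormedAddCommGroup F] [NormedSpace ℝ F]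
  (ι : ∀ i j, i ≤ j → (E i →L[ℝ] E j)) (ιc : ∀ i, E i →L[ℝ] F)

theorem antitone_norm_transition (hι1 : ∀ i j (h : i ≤ j) (x : E i), ‖ι i j h x‖ ≤ ‖x‖)
    (htrans : ∀ i j k (hij : i ≤ j) (hjk : j ≤ k) (x : E i),
      ι j k hjk (ι i j hij x) = ι i k (hij.trans hjk) x)
    {i : I} (x : E i) : Antitone fun j : {j // i ≤ j} => ‖ι i j.1 j.2 x‖ := fun j k hjk => by
  show ‖ι i k k.2 x‖ ≤ ‖ι i j j.2 x‖
  rw [← htrans i j k j.2 hjk]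
  exact hι1 _ _ _ _

theorem iSup_norm_map_eq_iInf_iSup_norm_transition {K : Type*} [TopologicalSpace K]
    [CompactSpace K] [IsDirected I (· ≤ ·)]
    (hι1 : ∀ i j (h : i ≤ j) (x : E i), ‖ι i j h x‖ ≤ ‖x‖)
    (htrans : ∀ i j k (hij : i ≤ j) (hjk : j ≤ k) (x : E i),
      ι j k hjk (ι i j hij x) = ι i k (hij.trans hjk) x)
    (hnorm : ∀ i (x : E i), ‖ιc i x‖ = ⨅ j : {j // i ≤ j}, ‖ι i j.1 j.2 x‖)
    {i : I} {x : K → E i} (hx : Continuous x) :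
    ⨆ p, ‖ιc i (x p)‖ = ⨅ j : {j // i ≤ j}, ⨆ p, ‖ι i j.1 j.2 (x p)‖ := by
  refine iSup_eq_iInf_iSup_of_antitone_tendsto (fun j => ((ι i j.1 j.2).continuous.comp hx).norm)
    ((ιc i).continuous.comp hx).norm
    (fun j k hjk p => antitone_norm_transition ι hι1 htrans (x p) hjk) fun p => ?_
  rw [hnorm]
  exact tendsto_atTop_ciInf (antitone_norm_transition ι hι1 htrans (x p))
    ⟨0, Set.forall_mem_range.2 fun _ => norm_nonneg _⟩

theorem exists_continuousMap_norm_sub_map_lt {K : Type*} [TopologicalSpace K] [CompactSpace K]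
    [T2Space K] [IsDirected I (· ≤ ·)]
    (hcomp : ∀ i j (h : i ≤ j) (x : E i), ιc j (ι i j h x) = ιc i x)
    (hdense : Dense (⋃ i, Set.range (ιc i))) {φ : K → F} (hφ : Continuous φ) {ε : ℝ}
    (hε : 0 < ε) : ∃ (i : I) (ψ : C(K, E i)), ∀ p, ‖φ p - ιc i (ψ p)‖ < ε := by
  have : Nonempty I := by
    obtain ⟨_, hy⟩ := hdense.nonempty
    obtain ⟨i, -⟩ := Set.mem_iUnion.1 hy
    exact ⟨i⟩
  let P (i : I) (q : K) : Prop := ∃ c : E i, ∀ᶠ y in 𝓝 q, ιc i c ∈ Metric.ball (φ y) ε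
  have hP : Monotone P := fun i j hij q ⟨c, hc⟩ => ⟨ι i j hij c, by simpa only [hcomp] using hc⟩
  have hloc (p : K) : ∃ i, ∀ᶠ q in 𝓝 p, P i q := by
    obtain ⟨_, hy, hdist⟩ := hdense.exists_dist_lt (φ p) hε
    obtain ⟨i, c, rfl⟩ := Set.mem_iUnion.1 hy
    have hnear : ∀ᶠ y in 𝓝 p, ιc i c ∈ Metric.ball (φ y) ε :=
      (continuous_const.dist hφ).continuousAt.eventually_lt continuousAt_const
        (by rwa [dist_comm])
    exact ⟨i, hnear.eventually_nhds.mono fun q hq => ⟨c, hq⟩⟩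
  obtain ⟨i, hi⟩ := exists_forall_of_forall_eventually_nhds hP hloc
  obtain ⟨ψ, hψ⟩ := exists_continuous_forall_mem_convex_of_local_const
    (fun p => (convex_ball (φ p) ε).linear_preimage (ιc i).toLinearMap) hi
  exact ⟨i, ψ, fun p => by simpa [dist_eq_norm'] using hψ p⟩

end DirectedSystem

theorem stmt1_general
    {K : Type*} [TopologicalSpace K] [CompactSpace K] [T2Space K]
    {I : Type*} [Preorder I] [IsDirected I (· ≤ ·)]
    {E : I → Type*} [∀ i, NormedAddCommGroup (E i)] [∀ i, NormedSpace ℝ (E i)]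
    {F : Type*} [NormedAddCommGroup F] [NormedSpace ℝ F]
    (ι : ∀ i j, i ≤ j → (E i →L[ℝ] E j))
    (ιc : ∀ i, E i →L[ℝ] F)
    (hι1 : ∀ i j (h : i ≤ j) (x : E i), ‖ι i j h x‖ ≤ ‖x‖)
    (hcomp : ∀ i j (h : i ≤ j) (x : E i), ιc j (ι i j h x) = ιc i x)
    (htrans : ∀ i j k (hij : i ≤ j) (hjk : j ≤ k) (x : E i),
      ι j k hjk (ι i j hij x) = ι i k (hij.trans hjk) x)
    (hdense : Dense (⋃ i, Set.range (ιc i)))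
    (hnorm : ∀ i (x : E i), ‖ιc i x‖ = ⨅ j : {j // i ≤ j}, ‖ι i j.1 j.2 x‖) :
    (∀ i (f g : K → E i), Continuous f → Continuous g →
      (⨆ p : K, ‖ιc i (f p) - ιc i (g p)‖)
        = ⨅ j : {j // i ≤ j}, ⨆ p : K, ‖ι i j.1 j.2 (f p) - ι i j.1 j.2 (g p)‖)
    ∧
    (∀ (φ : K → F), Continuous φ → ∀ ε > 0,
      ∃ (i : I) (ψ : K → E i), Continuous ψ ∧ (⨆ p : K, ‖φ p - ιc i (ψ p)‖) ≤ ε) := by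
  refine ⟨fun i f g hf hg => ?_, fun φ hφ ε hε => ?_⟩
  · simp only [← map_sub]
    exact iSup_norm_map_eq_iInf_iSup_norm_transition ι ιc hι1 htrans hnorm (hf.sub hg)
  · obtain ⟨i, ψ, hψ⟩ := exists_continuousMap_norm_sub_map_lt ι ιc hcomp hdense hφ hε
    exact ⟨i, ψ, ψ.continuous, Real.iSup_le (fun p => (hψ p).le) hε.le⟩

/-- For a compact Hausdorff space `K`, the functor `Cont(K, -)` from
Banach spaces with linear contractions to complete metric spaces (supremum distance)
preserves filtered colimits: (i) the canonical comparison map is isometric, and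
(ii) every continuous `φ : K → E` is uniformly approximated by continuous maps into
the stages `E i`. -/
theorem stmt1
    {K : Type*} [TopologicalSpace K] [CompactSpace K] [T2Space K]
    {I : Type*} [Preorder I] [IsDirected I (· ≤ ·)] [Nonempty I]
    {E : I → Type*} [∀ i, NormedAddCommGroup (E i)] [∀ i, NormedSpace ℝ (E i)]
    [∀ i, CompleteSpace (E i)]
    {F : Type*} [NormedAddCommGroup F] [NormedSpace ℝ F] [CompleteSpace F]
    (ι : ∀ i j, i ≤ j → (E i →L[ℝ] E j))
    (ιc : ∀ i, E i →L[ℝ] F)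
    (hι1 : ∀ i j (h : i ≤ j) (x : E i), ‖ι i j h x‖ ≤ ‖x‖)
    (hιc1 : ∀ i (x : E i), ‖ιc i x‖ ≤ ‖x‖)
    (hcomp : ∀ i j (h : i ≤ j) (x : E i), ιc j (ι i j h x) = ιc i x)
    (htrans : ∀ i j k (hij : i ≤ j) (hjk : j ≤ k) (x : E i),
      ι j k hjk (ι i j hij x) = ι i k (hij.trans hjk) x)
    (hid : ∀ i (x : E i), ι i i le_rfl x = x)
    (hdense : Dense (⋃ i, Set.range (ιc i)))
    (hnorm : ∀ i (x : E i), ‖ιc i x‖ = ⨅ j : {j // i ≤ j}, ‖ι i j.1 j.2 x‖) :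
    (∀ i (f g : K → E i), Continuous f → Continuous g →
      (⨆ p : K, ‖ιc i (f p) - ιc i (g p)‖)
        = ⨅ j : {j // i ≤ j}, ⨆ p : K, ‖ι i j.1 j.2 (f p) - ι i j.1 j.2 (g p)‖)
    ∧
    (∀ (φ : K → F), Continuous φ → ∀ ε > 0,
      ∃ (i : I) (ψ : K → E i), Continuous ψ ∧ (⨆ p : K, ‖φ p - ιc i (ψ p)‖) ≤ ε) :=
  stmt1_general ι ιc hι1 hcomp htrans hdense hnorm
end

section
/- Let G be a compact Hausdorff topological group, and let (A_i)_{i ∈ I}, ι_{ji}, A, ι_i be a filtered colimit presentation of unital Banach algebras. Then: (i) for every i and all representations ψ, ψ' : G → A_i^×, sup_{g ∈ G} ‖ι_i(ψ(g)) − ι_i(ψ'(g))‖ = inf_{j ≥ i} sup_{g ∈ G} ‖ι_{ji}(ψ(g)) − ι_{ji}(ψ'(g))‖; and (ii) for every representation φ : G → A^× and every ε > 0 there exist i ∈ I and a representation ψ : G → A_i^× with sup_{g ∈ G} ‖φ(g) − ι_i(ψ(g))‖ ≤ ε. In other words, the functor Rep(G, −) from unital Banach algebras with unital contractive algebra homomorphisms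 to complete metric spaces (with supremum distance) preserves filtered colimits. -/
set_option linter.unusedSectionVars false
open MeasureTheory Filter Topology

section helpers
variable {A : Type*} [NormedRing A] [NormOneClass A] [CompleteSpace A]

lemma inv_norm_le' (u : Aˣ) {r : ℝ} (hr : r < 1) (h : ‖(1 : A) - ↑u‖ ≤ r) :
    ‖((↑u⁻¹ : A))‖ ≤ 1 / (1 - r) := by
  have h0 : 0 ≤ r := le_trans (norm_nonneg _) h
  have key : (↑u⁻¹ : A) = 1 + (1 - ↑u) * ↑u⁻¹ := by
    calc (↑u⁻¹ : A) = 1 * ↑u⁻¹ := (one_mul _).symm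
    _ = ((↑u : A) + (1 - ↑u)) * ↑u⁻¹ := by rw [add_sub_cancel]
    _ = (↑u : A) * ↑u⁻¹ + (1 - ↑u) * ↑u⁻¹ := add_mul _ _ _
    _ = 1 + (1 - ↑u) * ↑u⁻¹ := by rw [Units.mul_inv]
  have hb : ‖(↑u⁻¹ : A)‖ ≤ 1 + r * ‖(↑u⁻¹ : A)‖ := by
    calc ‖(↑u⁻¹ : A)‖ = ‖((1 : A) + ((1:A) - ↑u) * ↑u⁻¹)‖ := by rw [← key]
    _ ≤ ‖(1:A)‖ + ‖((1:A) - ↑u) * (↑u⁻¹:A)‖ := norm_add_le _ _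
    _ ≤ 1 + ‖(1:A) - ↑u‖ * ‖(↑u⁻¹ : A)‖ := by
        rw [norm_one]
        exact add_le_add le_rfl (norm_mul_le _ _)
    _ ≤ 1 + r * ‖(↑u⁻¹ : A)‖ := by
        have := norm_nonneg (↑u⁻¹ : A)
        nlinarith
  have h1r : 0 < 1 - r := by linarith
  rw [le_div_iff₀ h1r]
  nlinarith [norm_nonneg (↑u⁻¹ : A)]

lemma cont_ring_inverse {X : Type*} [TopologicalSpace X] {f : X → A}
    (hf : Continuous f) (h : ∀ x, IsUnit (f x)) :
    Continuous fun x => Ring.inverse (f x) := by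
  rw [continuous_iff_continuousAt]
  intro x
  have hx : ContinuousAt Ring.inverse (f x) := by
    have := NormedRing.inverse_continuousAt (h x).unit
    rwa [IsUnit.unit_spec] at this
  exact hx.comp hf.continuousAt
end helpers

section integr

lemma cont_integrable {X : Type*} [MeasurableSpace X] [TopologicalSpace X]
    [OpensMeasurableSpace X] [CompactSpace X]
    {E : Type*} [NormedAddCommGroup E] {μ : Measure X} [IsFiniteMeasure μ]
    {f : X → E} (hf : Continuous f) : Integrable f μ := by
  borelize E
  have hsm : StronglyMeasurable f := stronglyMeasurable_iff_measurable_separable.2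
    ⟨hf.measurable, (isCompact_range hf).isSeparable⟩
  obtain ⟨C, hC⟩ : ∃ C, ∀ x, ‖f x‖ ≤ C := by
    obtain ⟨C, hC⟩ := (isCompact_range hf.norm).bddAbove
    exact ⟨C, fun x => hC ⟨x, rfl⟩⟩
  exact (integrable_const C).mono' hsm.aestronglyMeasurable (Filter.Eventually.of_forall hC)

lemma norm_integral_le'' {X : Type*} [MeasurableSpace X] {μ : Measure X}
    [IsProbabilityMeasure μ] {E : Type*} [NormedAddCommGroup E] [NormedSpace ℝ E]
    {f : X → E} {C : ℝ} (h : ∀ x, ‖f x‖ ≤ C) : ‖∫ x, f x ∂μ‖ ≤ C := by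
  have := norm_integral_le_of_norm_le_const (μ := μ) (f := f) (C := C)
    (Filter.Eventually.of_forall h)
  simpa using this

lemma cont_param_integral {X Y E : Type*} [TopologicalSpace X] [TopologicalSpace Y]
    [CompactSpace Y] [MeasurableSpace Y] [OpensMeasurableSpace Y]
    [NormedAddCommGroup E] [NormedSpace ℝ E] [CompleteSpace E]
    {μ : Measure Y} [IsProbabilityMeasure μ]
    {F : X → Y → E} (hF : Continuous fun p : X × Y => F p.1 p.2) :
    Continuous fun x => ∫ y, F x y ∂μ := by
  have hlip : LipschitzWith 1 (fun f : C(Y, E) => ∫ y, f y ∂μ) := by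
    apply LipschitzWith.of_dist_le_mul
    intro f g
    rw [NNReal.coe_one, one_mul, dist_eq_norm,
      ← integral_sub (cont_integrable f.continuous) (cont_integrable g.continuous)]
    apply norm_integral_le''
    intro y
    rw [← dist_eq_norm]
    exact ContinuousMap.dist_apply_le_dist y
  have : (fun x => ∫ y, F x y ∂μ)
      = (fun f : C(Y, E) => ∫ y, f y ∂μ)
        ∘ (fun x => (ContinuousMap.mk (fun p : X × Y => F p.1 p.2) hF).curry x) := rfl
  rw [this]
  exact hlip.continuous.comp (ContinuousMap.mk (fun p : X × Y => F p.1 p.2) hF).curry.continuous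

end integr

/-- An approximate representation with two-sided approximate inverse data. -/
structure AR (G A : Type*) [Group G] [TopologicalSpace G] [NormedRing A] where
  ρ : G → A
  ρi : G → A
  C : ℝ
  ε : ℝ
  cont : Continuous ρ
  conti : Continuous ρi
  mul_inv : ∀ g, ρ g * ρi g = 1
  inv_mul : ∀ g, ρi g * ρ g = 1
  hC : 1 ≤ C
  hε : 0 ≤ ε
  bound : ∀ g, ‖ρ g‖ ≤ C
  boundi : ∀ g, ‖ρi g‖ ≤ C
  defect : ∀ g h, ‖ρ (g * h) * ρi h * ρi g - 1‖ ≤ ε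

namespace AR
variable {G A : Type*} [Group G] [TopologicalSpace G] [IsTopologicalGroup G]
  [CompactSpace G] [T2Space G] [MeasurableSpace G] [BorelSpace G]
  [NormedRing A] [NormOneClass A] [NormedAlgebra ℝ A] [CompleteSpace A]
  (μ : Measure G) [IsProbabilityMeasure μ] [μ.IsMulLeftInvariant]
  (r : AR G A)

/-- multiplicative defect -/
def D (g h : G) : A := r.ρ (g * h) * r.ρi h * r.ρi g - 1

lemma minv1 (g : G) (x : A) : r.ρ g * (r.ρi g * x) = x := by
  rw [← mul_assoc, r.mul_inv, one_mul]

lemma minv2 (g : G) (x : A) : r.ρi g * (r.ρ g * x) = x := by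
  rw [← mul_assoc, r.inv_mul, one_mul]

lemma one_add_D (g h : G) : 1 + r.D g h = r.ρ (g * h) * r.ρi h * r.ρi g := by
  rw [AR.D]; abel

lemma normD (g h : G) : ‖r.D g h‖ ≤ r.ε := r.defect g h

lemma D_eq (g h : G) : r.D g h = (r.ρ (g*h) - r.ρ g * r.ρ h) * (r.ρi h * r.ρi g) := by
  have h2 : (r.ρ g * r.ρ h) * (r.ρi h * r.ρi g) = 1 := by
    simp only [mul_assoc]
    rw [r.minv1 h, r.mul_inv]
  rw [AR.D, sub_mul, h2, mul_assoc]

lemma add_defect (g h : G) : ‖r.ρ (g * h) - r.ρ g * r.ρ h‖ ≤ r.ε * (r.C * r.C) := by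
  have h1 : (r.D g h) * (r.ρ g * r.ρ h) = r.ρ (g*h) - r.ρ g * r.ρ h := by
    rw [AR.D, sub_mul, one_mul]
    congr 1
    rw [mul_assoc (r.ρ (g*h) * r.ρi h), r.minv2 g, mul_assoc, r.inv_mul, mul_one]
  rw [← h1]
  calc ‖r.D g h * (r.ρ g * r.ρ h)‖ ≤ ‖r.D g h‖ * ‖r.ρ g * r.ρ h‖ := norm_mul_le _ _
  _ ≤ ‖r.D g h‖ * (‖r.ρ g‖ * ‖r.ρ h‖) := by
      apply mul_le_mul_of_nonneg_left (norm_mul_le _ _) (norm_nonneg _)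
  _ ≤ r.ε * (r.C * r.C) := by
      have hC0 : (0:ℝ) ≤ r.C := le_trans zero_le_one r.hC
      exact mul_le_mul (r.normD g h)
        (mul_le_mul (r.bound g) (r.bound h) (norm_nonneg _) hC0)
        (mul_nonneg (norm_nonneg _) (norm_nonneg _)) r.hε

lemma pentagon (g h k : G) :
    (1 + r.D g (h * k)) * (1 + r.ρ g * r.D h k * r.ρi g)
      = (1 + r.D (g * h) k) * (1 + r.D g h) := by
  have e1 : 1 + r.ρ g * r.D h k * r.ρi g = r.ρ g * ((1 + r.D h k) * r.ρi g) := by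
    rw [add_mul, one_mul, mul_add, r.mul_inv, mul_assoc]
  rw [e1, r.one_add_D, r.one_add_D, r.one_add_D, r.one_add_D]
  simp only [mul_assoc, r.minv1, r.minv2]

lemma pent_lin (g h k : G) :
    r.D g h - (r.D g (h * k) + r.ρ g * r.D h k * r.ρi g - r.D (g * h) k)
      = r.D g (h * k) * (r.ρ g * r.D h k * r.ρi g) - r.D (g * h) k * r.D g h := by
  have hexp : ∀ x y : A, (1 + x) * (1 + y) = 1 + (x + y + x * y) := by
    intro x y; noncomm_ring
  have hp := r.pentagon g h k
  rw [hexp, hexp] at hp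
  have hp' := add_left_cancel hp
  have h4 : r.D g (h * k) + r.ρ g * r.D h k * r.ρi g
      = r.D (g * h) k + r.D g h + r.D (g * h) k * r.D g h
        - r.D g (h * k) * (r.ρ g * r.D h k * r.ρi g) := by
    rw [eq_sub_iff_add_eq]; exact hp'
  rw [h4]; abel

lemma contD : Continuous (fun p : G × G => r.D p.1 p.2) := by
  apply Continuous.sub _ continuous_const
  exact ((r.cont.comp continuous_mul).mul (r.conti.comp continuous_snd)).mul
    (r.conti.comp continuous_fst)

lemma contDg (g : G) : Continuous (r.D g) :=
  r.contD.comp (continuous_const.prodMk continuous_id)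

/-- the averaged defect -/
noncomputable def b (g : G) : A := ∫ k, r.D g k ∂μ

lemma norm_b_le (g : G) : ‖r.b μ g‖ ≤ r.ε :=
  norm_integral_le'' (fun k => r.normD g k)

lemma cont_b : Continuous (r.b μ) := cont_param_integral r.contD

lemma b_key (g h : G) :
    ‖r.D g h - (r.b μ g + r.ρ g * r.b μ h * r.ρi g - r.b μ (g * h))‖
      ≤ 2 * r.C ^ 2 * r.ε ^ 2 := by
  set Q : G → A := fun k =>
    r.D g (h * k) * (r.ρ g * r.D h k * r.ρi g) - r.D (g * h) k * r.D g h with hQ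
  have contA : Continuous fun k => r.D g (h * k) :=
    (r.contDg g).comp (continuous_const.mul continuous_id)
  have contB : Continuous fun k => r.ρ g * r.D h k * r.ρi g :=
    ((continuous_const.mul (r.contDg h)).mul continuous_const)
  have contQ : Continuous Q := (contA.mul contB).sub ((r.contDg (g*h)).mul continuous_const)
  have intA : Integrable (fun k => r.D g (h * k)) μ := cont_integrable contA
  have intB : Integrable (fun k => r.ρ g * r.D h k * r.ρi g) μ := cont_integrable contB
  have intC : Integrable (r.D (g*h)) μ := cont_integrable (r.contDg (g*h))
  have intQ : Integrable Q μ := cont_integrable contQ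
  have key1 : ∀ k, r.D g h - (r.D g (h*k) + r.ρ g * r.D h k * r.ρi g - r.D (g*h) k)
      = Q k := fun k => r.pent_lin g h k
  have e1 : (∫ k, Q k ∂μ)
      = ∫ k, (r.D g h - (r.D g (h*k) + r.ρ g * r.D h k * r.ρi g - r.D (g*h) k)) ∂μ := by
    apply integral_congr_ae
    filter_upwards with k
    exact (key1 k).symm
  have e2 : (∫ k, (r.D g h - (r.D g (h*k) + r.ρ g * r.D h k * r.ρi g - r.D (g*h) k)) ∂μ)
      = (∫ _ : G, r.D g h ∂μ)
        - ∫ k, (r.D g (h*k) + r.ρ g * r.D h k * r.ρi g - r.D (g*h) k) ∂μ :=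
    integral_sub (integrable_const _) ((intA.add intB).sub intC)
  have e3 : (∫ k, (r.D g (h*k) + r.ρ g * r.D h k * r.ρi g - r.D (g*h) k) ∂μ)
      = (∫ k, (r.D g (h*k) + r.ρ g * r.D h k * r.ρi g) ∂μ) - ∫ k, r.D (g*h) k ∂μ :=
    integral_sub (intA.add intB) intC
  have e4 : (∫ k, (r.D g (h*k) + r.ρ g * r.D h k * r.ρi g) ∂μ)
      = (∫ k, r.D g (h*k) ∂μ) + ∫ k, r.ρ g * r.D h k * r.ρi g ∂μ :=
    integral_add intA intB
  have hconst : (∫ _ : G, r.D g h ∂μ) = r.D g h := by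
    rw [integral_const]; simp
  have hA : (∫ k, r.D g (h*k) ∂μ) = r.b μ g := integral_mul_left_eq_self (r.D g) h
  have hB : (∫ k, r.ρ g * r.D h k * r.ρi g ∂μ) = r.ρ g * r.b μ h * r.ρi g := by
    let L : A →L[ℝ] A :=
      ((ContinuousLinearMap.mul ℝ A).flip (r.ρi g)).comp (ContinuousLinearMap.mul ℝ A (r.ρ g))
    have hL : ∀ x : A, L x = r.ρ g * x * r.ρi g := fun x => rfl
    calc (∫ k, r.ρ g * r.D h k * r.ρi g ∂μ) = ∫ k, L (r.D h k) ∂μ := by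
          simp only [hL]
    _ = L (∫ k, r.D h k ∂μ) := L.integral_comp_comm (cont_integrable (r.contDg h))
    _ = r.ρ g * r.b μ h * r.ρi g := hL _
  have hCc : (∫ k, r.D (g*h) k ∂μ) = r.b μ (g*h) := rfl
  have hE : r.D g h - (r.b μ g + r.ρ g * r.b μ h * r.ρi g - r.b μ (g * h)) = ∫ k, Q k ∂μ := by
    rw [e1, e2, e3, e4, hconst, hA, hB, hCc]
  rw [hE]
  apply norm_integral_le''
  intro k
  have hC0 : (0:ℝ) ≤ r.C := le_trans zero_le_one r.hC
  have hv : ‖r.ρ g * r.D h k * r.ρi g‖ ≤ r.C * r.ε * r.C := by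
    calc ‖r.ρ g * r.D h k * r.ρi g‖ ≤ ‖r.ρ g * r.D h k‖ * ‖r.ρi g‖ := norm_mul_le _ _
    _ ≤ (‖r.ρ g‖ * ‖r.D h k‖) * ‖r.ρi g‖ :=
        mul_le_mul_of_nonneg_right (norm_mul_le _ _) (norm_nonneg _)
    _ ≤ (r.C * r.ε) * r.C := by
        apply mul_le_mul (mul_le_mul (r.bound g) (r.normD h k) (norm_nonneg _) hC0)
          (r.boundi g) (norm_nonneg _) (mul_nonneg hC0 r.hε)
  have h1 : ‖r.D g (h*k) * (r.ρ g * r.D h k * r.ρi g)‖ ≤ r.ε * (r.C * r.ε * r.C) := by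
    refine le_trans (norm_mul_le _ _) ?_
    exact mul_le_mul (r.normD _ _) hv (norm_nonneg _) r.hε
  have h2 : ‖r.D (g*h) k * r.D g h‖ ≤ r.ε * r.ε := by
    refine le_trans (norm_mul_le _ _) ?_
    exact mul_le_mul (r.normD _ _) (r.normD _ _) (norm_nonneg _) r.hε
  calc ‖Q k‖ ≤ ‖r.D g (h*k) * (r.ρ g * r.D h k * r.ρi g)‖ + ‖r.D (g*h) k * r.D g h‖ :=
        norm_sub_le _ _
  _ ≤ r.ε * (r.C * r.ε * r.C) + r.ε * r.ε := add_le_add h1 h2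
  _ ≤ 2 * r.C ^ 2 * r.ε ^ 2 := by
      have hC2 : 1 ≤ r.C * r.C := by nlinarith [r.hC]
      nlinarith [hC2, mul_nonneg r.hε r.hε, r.hε, hC0]

include μ in
theorem step (hε1 : r.ε ≤ 1/2) (hsmall : r.C ^ 2 * r.ε ≤ 1/2) :
    ∃ r' : AR G A, r'.C = r.C / (1 - r.ε) ∧ r'.ε = 16 * r.C ^ 2 * r.ε ^ 2
      ∧ ∀ g, ‖r'.ρ g - r.ρ g‖ ≤ r.C * r.ε := by
  have hC0 : (0:ℝ) ≤ r.C := le_trans zero_le_one r.hC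
  have hεlt : r.ε < 1 := lt_of_le_of_lt hε1 (by norm_num)
  have h1ε : (0:ℝ) < 1 - r.ε := by linarith
  have hbu : ∀ g, ‖-(r.b μ g)‖ < 1 := fun g => by
    rw [norm_neg]; exact lt_of_le_of_lt (r.norm_b_le μ g) hεlt
  set u : G → Aˣ := fun g => Units.oneSub (-(r.b μ g)) (hbu g) with hudef
  have hu : ∀ g, (↑(u g) : A) = 1 + r.b μ g := fun g => by
    simp [hudef, Units.oneSub, sub_neg_eq_add]
  have hUnit : ∀ g, IsUnit ((1 : A) + r.b μ g) := fun g => ⟨u g, hu g⟩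
  set binv : G → A := fun g => Ring.inverse ((1:A) + r.b μ g) with hbinvdef
  have hbinv_eq : ∀ g, binv g = ↑(u g)⁻¹ := fun g => by
    rw [hbinvdef]; simp only []; rw [← hu g, Ring.inverse_unit]
  have hmulinv : ∀ g, ((1:A) + r.b μ g) * binv g = 1 := fun g => by
    rw [hbinv_eq g, ← hu g, Units.mul_inv]
  have hinvmul : ∀ g, binv g * ((1:A) + r.b μ g) = 1 := fun g => by
    rw [hbinv_eq g, ← hu g, Units.inv_mul]
  have hbinv_norm : ∀ g, ‖binv g‖ ≤ 1 / (1 - r.ε) := by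
    intro g
    rw [hbinv_eq g]
    apply inv_norm_le' (u g) hεlt
    rw [hu g, sub_add_cancel_left, norm_neg]
    exact r.norm_b_le μ g
  have hbn : ∀ g, ‖r.b μ g‖ ≤ r.ε := r.norm_b_le μ
  have hcontb : Continuous (r.b μ) := r.cont_b μ
  have hcontbinv : Continuous binv := by
    rw [hbinvdef]
    exact cont_ring_inverse (continuous_const.add hcontb) hUnit
  have k1 : ∀ g h : G, r.ρ (g*h) * r.ρi h = (1 + r.D g h) * r.ρ g := by
    intro g h
    rw [r.one_add_D, mul_assoc, r.inv_mul, mul_one]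
  refine ⟨{ ρ := fun g => (1 + r.b μ g) * r.ρ g
            ρi := fun g => r.ρi g * binv g
            C := r.C / (1 - r.ε)
            ε := 16 * r.C ^ 2 * r.ε ^ 2
            cont := (continuous_const.add hcontb).mul r.cont
            conti := r.conti.mul hcontbinv
            mul_inv := ?_
            inv_mul := ?_
            hC := ?_
            hε := by positivity
            bound := ?_
            boundi := ?_
            defect := ?_ }, rfl, rfl, ?_⟩
  · intro g
    rw [mul_assoc, r.minv1, hmulinv]
  · intro g
    rw [mul_assoc, ← mul_assoc (binv g), hinvmul, one_mul, r.inv_mul]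
  · rw [le_div_iff₀ h1ε]; nlinarith [r.hC, r.hε]
  · intro g
    calc ‖(1 + r.b μ g) * r.ρ g‖ ≤ ‖(1:A) + r.b μ g‖ * ‖r.ρ g‖ := norm_mul_le _ _
    _ ≤ (1 + r.ε) * r.C := by
        apply mul_le_mul _ (r.bound g) (norm_nonneg _) (by linarith [r.hε])
        calc ‖(1:A) + r.b μ g‖ ≤ ‖(1:A)‖ + ‖r.b μ g‖ := norm_add_le _ _
        _ ≤ 1 + r.ε := by rw [norm_one]; linarith [hbn g]
    _ ≤ r.C / (1 - r.ε) := by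
        rw [le_div_iff₀ h1ε]
        nlinarith [mul_nonneg hC0 (mul_nonneg r.hε r.hε)]
  · intro g
    calc ‖r.ρi g * binv g‖ ≤ ‖r.ρi g‖ * ‖binv g‖ := norm_mul_le _ _
    _ ≤ r.C * (1 / (1 - r.ε)) :=
        mul_le_mul (r.boundi g) (hbinv_norm g) (norm_nonneg _) hC0
    _ = r.C / (1 - r.ε) := by rw [mul_one_div]
  · -- defect bound
    intro g h
    set d := r.D g h with hd
    set bg := r.b μ g with hbg
    set bh := r.b μ h with hbh
    set bgh := r.b μ (g*h) with hbgh
    set v : A := r.ρ g * bh * r.ρi g with hv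
    set winv : A := r.ρ g * binv h * r.ρi g with hwinv
    have e2 : (1:A) + v = r.ρ g * ((1 + bh) * r.ρi g) := by
      rw [hv, add_mul, one_mul, mul_add, r.mul_inv, mul_assoc]
    have hw1 : ((1:A) + v) * winv = 1 := by
      rw [e2, hwinv]
      simp only [mul_assoc]
      rw [r.minv2 g]
      have : ((1:A) + bh) * (binv h * r.ρi g) = r.ρi g := by
        rw [← mul_assoc, hmulinv, one_mul]
      rw [this, r.mul_inv]
    have hw2 : winv * ((1:A) + v) = 1 := by
      rw [e2, hwinv]
      simp only [mul_assoc]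
      rw [r.minv2 g]
      have : binv h * (((1:A) + bh) * r.ρi g) = r.ρi g := by
        rw [← mul_assoc, hinvmul, one_mul]
      rw [this, r.mul_inv]
    set X : A := (1 + bgh) * (1 + d) with hX
    set Y : A := (1 + bg) * (1 + v) with hY
    set Z : A := winv * binv g with hZ
    have hDID : ((1 + bgh) * r.ρ (g*h)) * (r.ρi h * binv h) * (r.ρi g * binv g)
        = X * Z := by
      rw [mul_assoc (1 + bgh), ← mul_assoc (r.ρ (g*h)), k1 g h, hX, hZ, hwinv, ← hd]
      simp only [mul_assoc]
    have hYZ : Y * Z = 1 := by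
      rw [hY, hZ]
      calc (1 + bg) * (1 + v) * (winv * binv g)
          = (1 + bg) * (((1 + v) * winv) * binv g) := by simp only [mul_assoc]
      _ = (1 + bg) * binv g := by rw [hw1, one_mul]
      _ = 1 := hmulinv g
    have hfin : ((1 + bgh) * r.ρ (g*h)) * (r.ρi h * binv h) * (r.ρi g * binv g) - 1
        = (X - Y) * Z := by
      rw [hDID, sub_mul, hYZ]
    rw [hfin]
    -- norm estimates
    have hXY : X - Y = (d - (bg + v - bgh)) + (bgh * d - bg * v) := by
      rw [hX, hY]; noncomm_ring
    have n1 : ‖d - (bg + v - bgh)‖ ≤ 2 * r.C ^ 2 * r.ε ^ 2 := r.b_key μ g h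
    have nv : ‖v‖ ≤ r.C * r.ε * r.C := by
      rw [hv]
      calc ‖r.ρ g * bh * r.ρi g‖ ≤ ‖r.ρ g * bh‖ * ‖r.ρi g‖ := norm_mul_le _ _
      _ ≤ (‖r.ρ g‖ * ‖bh‖) * ‖r.ρi g‖ :=
          mul_le_mul_of_nonneg_right (norm_mul_le _ _) (norm_nonneg _)
      _ ≤ (r.C * r.ε) * r.C :=
          mul_le_mul (mul_le_mul (r.bound g) (hbn h) (norm_nonneg _) hC0)
            (r.boundi g) (norm_nonneg _) (mul_nonneg hC0 r.hε)
    have n2 : ‖bgh * d‖ ≤ r.ε * r.ε := by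
      refine le_trans (norm_mul_le _ _) ?_
      exact mul_le_mul (hbn (g*h)) (r.normD g h) (norm_nonneg _) r.hε
    have n3 : ‖bg * v‖ ≤ r.ε * (r.C * r.ε * r.C) := by
      refine le_trans (norm_mul_le _ _) ?_
      exact mul_le_mul (hbn g) nv (norm_nonneg _) r.hε
    have nXY : ‖X - Y‖ ≤ 4 * r.C ^ 2 * r.ε ^ 2 := by
      rw [hXY]
      calc ‖(d - (bg + v - bgh)) + (bgh * d - bg * v)‖
          ≤ ‖d - (bg + v - bgh)‖ + ‖bgh * d - bg * v‖ := norm_add_le _ _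
      _ ≤ ‖d - (bg + v - bgh)‖ + (‖bgh * d‖ + ‖bg * v‖) := by
          exact add_le_add le_rfl (norm_sub_le _ _)
      _ ≤ 2 * r.C ^ 2 * r.ε ^ 2 + (r.ε * r.ε + r.ε * (r.C * r.ε * r.C)) := by
          exact add_le_add n1 (add_le_add n2 n3)
      _ ≤ 4 * r.C ^ 2 * r.ε ^ 2 := by
          have hC2 : 1 ≤ r.C * r.C := by nlinarith [r.hC]
          nlinarith [hC2, mul_nonneg r.hε r.hε, r.hε, hC0]
    have nwinv : ‖winv‖ ≤ 2 := by
      have hvlt : r.C * r.ε * r.C ≤ 1/2 := by nlinarith [r.hε, r.hC]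
      have hvlt1 : r.C * r.ε * r.C < 1 := lt_of_le_of_lt hvlt (by norm_num)
      have wu : Aˣ := ⟨1 + v, winv, hw1, hw2⟩
      have : ‖winv‖ ≤ 1 / (1 - r.C * r.ε * r.C) := by
        have := inv_norm_le' (⟨1 + v, winv, hw1, hw2⟩ : Aˣ) hvlt1 (by
          show ‖(1:A) - (1 + v)‖ ≤ r.C * r.ε * r.C
          rw [sub_add_cancel_left, norm_neg]; exact nv)
        exact this
      refine le_trans this ?_
      rw [div_le_iff₀ (by linarith)]
      linarith
    have nbinvg : ‖binv g‖ ≤ 2 := by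
      refine le_trans (hbinv_norm g) ?_
      rw [div_le_iff₀ h1ε]
      linarith
    have nZ : ‖Z‖ ≤ 4 := by
      rw [hZ]
      calc ‖winv * binv g‖ ≤ ‖winv‖ * ‖binv g‖ := norm_mul_le _ _
      _ ≤ 2 * 2 := mul_le_mul nwinv nbinvg (norm_nonneg _) (by norm_num)
      _ = 4 := by norm_num
    calc ‖(X - Y) * Z‖ ≤ ‖X - Y‖ * ‖Z‖ := norm_mul_le _ _
    _ ≤ (4 * r.C ^ 2 * r.ε ^ 2) * 4 := by
        apply mul_le_mul nXY nZ (norm_nonneg _) (by positivity)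
    _ = 16 * r.C ^ 2 * r.ε ^ 2 := by ring
  · intro g
    have : (1 + r.b μ g) * r.ρ g - r.ρ g = r.b μ g * r.ρ g := by noncomm_ring
    rw [this]
    calc ‖r.b μ g * r.ρ g‖ ≤ ‖r.b μ g‖ * ‖r.ρ g‖ := norm_mul_le _ _
    _ ≤ r.ε * r.C := mul_le_mul (hbn g) (r.bound g) (norm_nonneg _) r.hε
    _ = r.C * r.ε := mul_comm _ _

end AR

namespace AR
variable {G A : Type*} [Group G] [TopologicalSpace G] [IsTopologicalGroup G]
  [CompactSpace G] [T2Space G] [MeasurableSpace G] [BorelSpace G]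
  [NormedRing A] [NormOneClass A] [NormedAlgebra ℝ A] [CompleteSpace A]
  (μ : Measure G) [IsProbabilityMeasure μ] [μ.IsMulLeftInvariant]

/-- the invariant carried along the Newton iteration -/
def Inv (r0 : AR G A) (n : ℕ) (r : AR G A) : Prop :=
  r.C ≤ r0.C * (2 - (1/2 : ℝ)^n) ∧ r.ε ≤ r0.ε * (1/2 : ℝ)^n

lemma half_pow_pos (n : ℕ) : (0:ℝ) < (1/2)^n := by positivity

lemma eps_small {C e : ℝ} (hC : 1 ≤ C) (he : 0 ≤ e) (h : C ^ 2 * e ≤ 1/1024) :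
    e ≤ 1/1024 := by
  have h2 : 1 ≤ C ^ 2 := by nlinarith
  nlinarith [le_mul_of_one_le_left he h2]

lemma half_pow_le_one (n : ℕ) : ((1:ℝ)/2)^n ≤ 1 := by
  induction n with
  | zero => norm_num
  | succ n ih => rw [pow_succ]; nlinarith [half_pow_pos n]

lemma inv_cond {r0 r : AR G A} (hr0 : r0.C ^ 2 * r0.ε ≤ (2:ℝ)^(-10 : ℤ)) {n : ℕ}
    (h : Inv r0 n r) :
    r.ε ≤ 1/2 ∧ r.C ^ 2 * r.ε ≤ 1/2 ∧ r.C ≤ 2 * r0.C ∧ r.ε ≤ r0.ε := by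
  have hnum : ((2:ℝ)^(-10 : ℤ)) = 1/1024 := by norm_num
  rw [hnum] at hr0
  have hq0 := half_pow_pos n
  have hq1 := half_pow_le_one n
  have hC00 : (0:ℝ) ≤ r0.C := le_trans zero_le_one r0.hC
  have hε0small : r0.ε ≤ 1/1024 := eps_small r0.hC r0.hε hr0
  have hεr0 : r.ε ≤ r0.ε := le_trans h.2 (mul_le_of_le_one_right r0.hε hq1)
  have hC2 : r.C ≤ 2 * r0.C := by
    refine le_trans h.1 ?_
    nlinarith [mul_nonneg hC00 (le_of_lt hq0)]
  refine ⟨by linarith, ?_, hC2, hεr0⟩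
  have hrC0 : (0:ℝ) ≤ r.C := le_trans zero_le_one r.hC
  have h1 : r.C ^ 2 ≤ 4 * r0.C ^ 2 := by
    nlinarith [mul_nonneg (sub_nonneg.2 hC2) (by linarith : (0:ℝ) ≤ 2 * r0.C + r.C)]
  have h2 : r.C ^ 2 * r.ε ≤ 4 * r0.C ^ 2 * r0.ε := by
    have := mul_le_mul h1 hεr0 r.hε (by positivity)
    linarith
  linarith [hr0, h2]

include μ in
lemma inv_zero (r0 : AR G A) : Inv r0 0 r0 := by
  constructor
  · rw [pow_zero]; nlinarith [r0.hC]
  · rw [pow_zero, mul_one]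

set_option maxHeartbeats 1000000 in
/-- one step of the iteration, as data -/
noncomputable def stepD (r : AR G A) (h1 : r.ε ≤ 1/2) (h2 : r.C ^ 2 * r.ε ≤ 1/2) : AR G A :=
  (step μ r h1 h2).choose

set_option maxHeartbeats 1000000 in
lemma stepD_spec (r : AR G A) (h1 : r.ε ≤ 1/2) (h2 : r.C ^ 2 * r.ε ≤ 1/2) :
    (stepD μ r h1 h2).C = r.C / (1 - r.ε) ∧ (stepD μ r h1 h2).ε = 16 * r.C ^ 2 * r.ε ^ 2
      ∧ ∀ g, ‖(stepD μ r h1 h2).ρ g - r.ρ g‖ ≤ r.C * r.ε :=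
  (step μ r h1 h2).choose_spec

lemma inv_step {r0 r : AR G A} (hr0 : r0.C ^ 2 * r0.ε ≤ (2:ℝ)^(-10 : ℤ)) {n : ℕ}
    (h : Inv r0 n r) :
    Inv r0 (n+1) (stepD μ r (inv_cond hr0 h).1 (inv_cond hr0 h).2.1) := by
  obtain ⟨hC', hε', _⟩ := stepD_spec μ r (inv_cond hr0 h).1 (inv_cond hr0 h).2.1
  obtain ⟨he2, hs2, hC2, hεr0⟩ := inv_cond hr0 h
  have hnum : ((2:ℝ)^(-10 : ℤ)) = 1/1024 := by norm_num
  rw [hnum] at hr0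
  have hq0 := half_pow_pos n
  have hq1 := half_pow_le_one n
  have hC00 : (0:ℝ) ≤ r0.C := le_trans zero_le_one r0.hC
  have hε0small : r0.ε ≤ 1/1024 := eps_small r0.hC r0.hε hr0
  have h1ε : (0:ℝ) < 1 - r.ε := by linarith
  have hεn : r.ε ≤ r0.ε * (1/2)^n := h.2
  have hε0q : r.ε ≤ (1/1024) * ((1/2:ℝ))^n := by
    refine le_trans hεn ?_
    exact mul_le_mul_of_nonneg_right hε0small (le_of_lt hq0)
  have hεr0 : r.ε ≤ r0.ε := le_trans h.2 (mul_le_of_le_one_right r0.hε hq1)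
  constructor
  · rw [hC', div_le_iff₀ h1ε, pow_succ]
    have key2 : 2 - (1/2:ℝ)^n ≤ (2 - (1/2:ℝ)^n * (1/2)) * (1 - r.ε) := by
      nlinarith [hε0q, hq0, r.hε, mul_nonneg r.hε (le_of_lt hq0)]
    calc r.C ≤ r0.C * (2 - (1/2:ℝ)^n) := h.1
    _ ≤ r0.C * ((2 - (1/2:ℝ)^n * (1/2)) * (1 - r.ε)) :=
        mul_le_mul_of_nonneg_left key2 hC00
    _ = r0.C * (2 - (1/2:ℝ)^n * (1/2)) * (1 - r.ε) := by ring
  · rw [hε']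
    have hrC0 : (0:ℝ) ≤ r.C := le_trans zero_le_one r.hC
    have hpC2 : r.C ^ 2 ≤ 4 * r0.C ^ 2 := by
      nlinarith [mul_nonneg (sub_nonneg.2 hC2) (by linarith : (0:ℝ) ≤ 2 * r0.C + r.C)]
    have hε2 : r.ε ^ 2 ≤ (r0.ε * (1/2:ℝ)^n) * r.ε := by
      rw [pow_two]
      exact mul_le_mul_of_nonneg_right h.2 r.hε
    have e2 : r.C ^ 2 * r.ε ^ 2 ≤ (4 * r0.C ^ 2) * ((r0.ε * (1/2:ℝ)^n) * r.ε) :=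
      mul_le_mul hpC2 hε2 (sq_nonneg _) (by positivity)
    have hqε : (0:ℝ) ≤ (1/2:ℝ)^n * r.ε := mul_nonneg (le_of_lt hq0) r.hε
    have e3 : 64 * (r0.C ^ 2 * r0.ε) * ((1/2:ℝ)^n * r.ε) ≤ 64 * (1/1024) * ((1/2:ℝ)^n * r.ε) := by
      have := mul_le_mul_of_nonneg_right hr0 hqε
      nlinarith [this]
    have e4 : (0:ℝ) ≤ (1/2:ℝ)^n * r0.ε := mul_nonneg (le_of_lt hq0) r0.hε
    have e5 : (1/2:ℝ)^n * r.ε ≤ (1/2:ℝ)^n * r0.ε :=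
      mul_le_mul_of_nonneg_left hεr0 (le_of_lt hq0)
    have hps : ((1:ℝ)/2)^(n+1) = (1/2:ℝ)^n * (1/2) := pow_succ _ _
    nlinarith [e2, e3, e4, e5, hps]

set_option maxHeartbeats 1000000 in
/-- the Newton iteration -/
noncomputable def seqAux (r0 : AR G A) (hr0 : r0.C ^ 2 * r0.ε ≤ (2:ℝ)^(-10 : ℤ)) :
    (n : ℕ) → {r : AR G A // Inv r0 n r}
  | 0 => ⟨r0, inv_zero μ r0⟩
  | n+1 => ⟨stepD μ (seqAux r0 hr0 n).1
      (inv_cond hr0 (seqAux r0 hr0 n).2).1 (inv_cond hr0 (seqAux r0 hr0 n).2).2.1,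
      inv_step μ hr0 (seqAux r0 hr0 n).2⟩

lemma seqAux_dist (r0 : AR G A) (hr0 : r0.C ^ 2 * r0.ε ≤ (2:ℝ)^(-10 : ℤ)) (n : ℕ) (g : G) :
    ‖(seqAux μ r0 hr0 (n+1)).1.ρ g - (seqAux μ r0 hr0 n).1.ρ g‖
      ≤ (2 * r0.C * r0.ε) * (1/2)^n := by
  obtain ⟨_, _, hd⟩ := stepD_spec μ (seqAux μ r0 hr0 n).1
      (inv_cond hr0 (seqAux μ r0 hr0 n).2).1 (inv_cond hr0 (seqAux μ r0 hr0 n).2).2.1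
  refine le_trans (hd g) ?_
  obtain ⟨_, _, hC2, _⟩ := inv_cond hr0 (seqAux μ r0 hr0 n).2
  have hεn := (seqAux μ r0 hr0 n).2.2
  have hq0 := half_pow_pos n
  have hε' := (seqAux μ r0 hr0 n).1.hε
  have hC00 : (0:ℝ) ≤ r0.C := le_trans zero_le_one r0.hC
  have h1 : (seqAux μ r0 hr0 n).1.C * (seqAux μ r0 hr0 n).1.ε
      ≤ (2 * r0.C) * (r0.ε * (1/2)^n) :=
    mul_le_mul hC2 hεn hε' (by linarith)
  nlinarith [h1]

include μ in
theorem stability (r0 : AR G A) (hr0 : r0.C ^ 2 * r0.ε ≤ (2:ℝ)^(-10 : ℤ)) :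
    ∃ ψ : G →* Aˣ, Continuous (fun g => ((ψ g : Aˣ) : A))
      ∧ ∀ g, ‖((ψ g : Aˣ) : A) - r0.ρ g‖ ≤ 4 * r0.C * r0.ε := by
  classical
  have hnum : ((2:ℝ)^(-10 : ℤ)) = 1/1024 := by norm_num
  have hC00 : (0:ℝ) ≤ r0.C := le_trans zero_le_one r0.hC
  have hr0' : r0.C ^ 2 * r0.ε ≤ 1/1024 := by rw [← hnum]; exact hr0
  have hε0small : r0.ε ≤ 1/1024 := eps_small r0.hC r0.hε hr0'
  have hCε : r0.C * r0.ε ≤ 1/1024 := by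
    nlinarith [mul_nonneg (mul_nonneg hC00 r0.hε) (sub_nonneg.2 r0.hC), hr0']
  set s : ℕ → AR G A := fun n => (seqAux μ r0 hr0 n).1 with hs
  set F : ℕ → BoundedContinuousFunction G A := fun n =>
    BoundedContinuousFunction.mkOfCompact ⟨(s n).ρ, (s n).cont⟩ with hF
  have hFapp : ∀ n g, F n g = (s n).ρ g := fun n g => rfl
  have hdist : ∀ n, dist (F n) (F (n+1)) ≤ (2 * r0.C * r0.ε) * (1/2)^n := by
    intro n
    rw [BoundedContinuousFunction.dist_le
      (mul_nonneg (mul_nonneg (mul_nonneg (by norm_num : (0:ℝ) ≤ 2) hC00) r0.hε)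
        (le_of_lt (half_pow_pos n)))]
    intro g
    rw [dist_eq_norm, hFapp, hFapp, norm_sub_rev]
    exact seqAux_dist μ r0 hr0 n g
  have hcauchy := cauchySeq_of_le_geometric (1/2) (2 * r0.C * r0.ε) (by norm_num) hdist
  obtain ⟨Flim, hFlim⟩ := cauchySeq_tendsto_of_complete hcauchy
  have htend : ∀ g, Filter.Tendsto (fun n => (s n).ρ g) Filter.atTop (nhds (Flim g)) := by
    intro g
    have hev : Continuous fun f : BoundedContinuousFunction G A => f g :=
      continuous_eval_const g
    exact (hev.tendsto Flim).comp hFlim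
  have hcum : ∀ n g, ‖(s n).ρ g - r0.ρ g‖ ≤ 4 * r0.C * r0.ε * (1 - (1/2)^n) := by
    intro n
    induction n with
    | zero => intro g; simp [hs, seqAux]
    | succ n ih =>
      intro g
      have tri : ‖(s (n+1)).ρ g - r0.ρ g‖
          ≤ ‖(s (n+1)).ρ g - (s n).ρ g‖ + ‖(s n).ρ g - r0.ρ g‖ := by
        have := dist_triangle ((s (n+1)).ρ g) ((s n).ρ g) (r0.ρ g)
        simpa [dist_eq_norm] using this
      have h1 := seqAux_dist μ r0 hr0 n g
      have h2 := ih g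
      have : (2 * r0.C * r0.ε) * (1/2)^n + 4 * r0.C * r0.ε * (1 - (1/2)^n)
          = 4 * r0.C * r0.ε * (1 - (1/2)^(n+1)) := by rw [pow_succ]; ring
      linarith
  have hlim_dist : ∀ g, ‖Flim g - r0.ρ g‖ ≤ 4 * r0.C * r0.ε := by
    intro g
    have t : Filter.Tendsto (fun n => ‖(s n).ρ g - r0.ρ g‖) Filter.atTop
        (nhds ‖Flim g - r0.ρ g‖) := ((htend g).sub tendsto_const_nhds).norm
    apply le_of_tendsto t
    filter_upwards with n
    refine le_trans (hcum n g) ?_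
    nlinarith [half_pow_pos n, mul_nonneg (mul_nonneg hC00 r0.hε) (le_of_lt (half_pow_pos n)),
      mul_nonneg hC00 r0.hε]
  have hmul : ∀ g h, Flim (g * h) = Flim g * Flim h := by
    intro g h
    have t1 : Filter.Tendsto (fun n => (s n).ρ (g*h) - (s n).ρ g * (s n).ρ h) Filter.atTop
        (nhds (Flim (g*h) - Flim g * Flim h)) :=
      (htend (g*h)).sub ((htend g).mul (htend h))
    have t2 : Filter.Tendsto (fun n => (s n).ρ (g*h) - (s n).ρ g * (s n).ρ h) Filter.atTop
        (nhds 0) := by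
      apply squeeze_zero_norm (a := fun n => (4 * r0.C^2 * r0.ε) * (1/2)^n)
      · intro n
        refine le_trans ((s n).add_defect g h) ?_
        obtain ⟨_, _, hC2, _⟩ := inv_cond hr0 (seqAux μ r0 hr0 n).2
        have hεn := (seqAux μ r0 hr0 n).2.2
        have hq0 := half_pow_pos n
        have h1 : (s n).ε * ((s n).C * (s n).C) ≤ (r0.ε * (1/2)^n) * ((2*r0.C) * (2*r0.C)) := by
          apply mul_le_mul hεn
          · apply mul_le_mul hC2 hC2 (le_trans zero_le_one (s n).hC) (by linarith)
          · exact mul_nonneg (le_trans zero_le_one (s n).hC) (le_trans zero_le_one (s n).hC)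
          · exact mul_nonneg r0.hε (le_of_lt (half_pow_pos n))
        nlinarith [h1]
      · have : Filter.Tendsto (fun n : ℕ => ((1:ℝ)/2)^n) Filter.atTop (nhds 0) := by
          apply tendsto_pow_atTop_nhds_zero_of_lt_one <;> norm_num
        simpa using this.const_mul (4 * r0.C^2 * r0.ε)
    have := tendsto_nhds_unique t1 t2
    exact sub_eq_zero.1 this
  -- value at 1
  have hr01 : ‖r0.ρ 1 - 1‖ ≤ r0.C * r0.ε := by
    have hd11 : r0.ρi 1 - 1 = r0.D 1 1 := by
      rw [AR.D]
      rw [show ((1:G) * 1) = 1 from mul_one 1, r0.mul_inv, one_mul]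
    have h1 : ‖r0.ρi 1 - 1‖ ≤ r0.ε := by rw [hd11]; exact r0.normD 1 1
    have h2 : r0.ρ 1 - 1 = -(r0.ρ 1 * (r0.ρi 1 - 1)) := by
      rw [mul_sub, mul_one, r0.mul_inv, neg_sub]
    rw [h2, norm_neg]
    exact le_trans (norm_mul_le _ _) (mul_le_mul (r0.bound 1) h1 (norm_nonneg _) hC00)
  have hF1 : ‖Flim 1 - 1‖ < 1 := by
    have tri : ‖Flim 1 - 1‖ ≤ ‖Flim 1 - r0.ρ 1‖ + ‖r0.ρ 1 - 1‖ := by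
      have := dist_triangle (Flim 1) (r0.ρ 1) (1 : A)
      simpa [dist_eq_norm] using this
    have := hlim_dist 1
    nlinarith [hCε, hr01]
  have hidem : Flim 1 * Flim 1 = Flim 1 := by
    have := hmul 1 1
    rw [one_mul] at this
    exact this.symm
  have hone : Flim 1 = 1 := by
    have hult : ‖(1:A) - Flim 1‖ < 1 := by rw [norm_sub_rev]; exact hF1
    set w : Aˣ := Units.oneSub ((1:A) - Flim 1) hult with hw
    have hwv : (↑w : A) = Flim 1 := by simp [hw, Units.oneSub]
    have hww : w * w = w := by
      apply Units.ext
      rw [Units.val_mul, hwv]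
      exact hidem
    have hw1 : w = 1 := by
      have := mul_eq_right.mp hww
      exact this
    rw [← hwv, hw1, Units.val_one]
  have hinv2 : ∀ g, Flim g * Flim g⁻¹ = 1 := fun g => by
    rw [← hmul, mul_inv_cancel, hone]
  have hinv3 : ∀ g, Flim g⁻¹ * Flim g = 1 := fun g => by
    rw [← hmul, inv_mul_cancel, hone]
  refine ⟨{ toFun := fun g => ⟨Flim g, Flim g⁻¹, hinv2 g, hinv3 g⟩
            map_one' := Units.ext (by simpa using hone)
            map_mul' := fun g h => Units.ext (by simpa using hmul g h) },
          by simpa using Flim.continuous, fun g => hlim_dist g⟩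

end AR

/-- stability without a measure: construct the Haar measure -/
theorem stabilityHaar {G A : Type*} [Group G] [TopologicalSpace G] [IsTopologicalGroup G]
    [CompactSpace G] [T2Space G]
    [NormedRing A] [NormOneClass A] [NormedAlgebra ℝ A] [CompleteSpace A]
    (r0 : AR G A) (hr0 : r0.C ^ 2 * r0.ε ≤ (2:ℝ)^(-10 : ℤ)) :
    ∃ ψ : G →* Aˣ, Continuous (fun g => ((ψ g : Aˣ) : A))
      ∧ ∀ g, ‖((ψ g : Aˣ) : A) - r0.ρ g‖ ≤ 4 * r0.C * r0.ε := by
  borelize G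
  have hne : (interior (Set.univ : Set G)).Nonempty := by
    rw [interior_univ]; exact Set.univ_nonempty
  set K₀ : TopologicalSpace.PositiveCompacts G := ⟨⟨Set.univ, isCompact_univ⟩, hne⟩ with hK
  set μ := MeasureTheory.Measure.haarMeasure K₀ with hμ
  have hprob : MeasureTheory.IsProbabilityMeasure μ := by
    constructor
    have : μ (↑K₀) = 1 := MeasureTheory.Measure.haarMeasure_self
    simpa [hK] using this
  exact AR.stability μ r0 hr0

section push
variable {I : Type*} [Preorder I] [IsDirected I (· ≤ ·)] [Nonempty I]
    {A : I → Type*} [∀ i, NormedRing (A i)] [∀ i, NormedAlgebra ℝ (A i)]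
    {B : Type*} [NormedRing B] [NormedAlgebra ℝ B]
    (ι : ∀ i j, i ≤ j → (A i →ₐ[ℝ] A j))
    (ιc : ∀ i, A i →ₐ[ℝ] B)
    (hι1 : ∀ i j (h : i ≤ j) (x : A i), ‖ι i j h x‖ ≤ ‖x‖)
    (htrans : ∀ i j k (hij : i ≤ j) (hjk : j ≤ k) (x : A i),
      ι j k hjk (ι i j hij x) = ι i k (hij.trans hjk) x)
    (hnorm : ∀ i (x : A i), ‖ιc i x‖ = ⨅ j : {j // i ≤ j}, ‖ι i j.1 j.2 x‖)

include hι1 htrans in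
/-- monotone decrease of norms along the system -/
lemma norm_anti {i j k : I} (hij : i ≤ j) (hjk : j ≤ k) (x : A i) :
    ‖ι i k (hij.trans hjk) x‖ ≤ ‖ι i j hij x‖ := by
  rw [← htrans i j k hij hjk x]; exact hι1 _ _ _ _

include hι1 htrans hnorm in
/-- push a uniform strict bound on the colimit norms to a single stage -/
lemma push {X : Type*} [TopologicalSpace X] [CompactSpace X]
    (i : I) (f : X → A i) (hf : Continuous f) (c : ℝ)
    (h : ∀ x, ‖ιc i (f x)‖ < c) :
    ∃ j, ∃ hij : i ≤ j, ∀ (k) (hjk : j ≤ k) (x), ‖ι i k (hij.trans hjk) (f x)‖ < c := by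
  classical
  have key : ∀ x : X, ∃ jx : {j // i ≤ j}, ‖ι i jx.1 jx.2 (f x)‖ < c := by
    intro x
    have := h x
    rw [hnorm i (f x)] at this
    exact exists_lt_of_ciInf_lt this
  choose jx hjx using key
  have hcont : ∀ x : X, Continuous fun y => ‖ι i (jx x).1 (jx x).2 (f y)‖ := by
    intro x
    exact (((AddMonoidHomClass.continuous_of_bound (ι i (jx x).1 (jx x).2) 1
      (fun z => by simpa using hι1 _ _ _ z)).comp hf).norm)
  have hcover : Set.univ ⊆ ⋃ x : X, {y | ‖ι i (jx x).1 (jx x).2 (f y)‖ < c} := by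
    intro y _
    exact Set.mem_iUnion.2 ⟨y, hjx y⟩
  obtain ⟨t, ht⟩ := IsCompact.elim_finite_subcover isCompact_univ _
    (fun x => isOpen_lt (hcont x) continuous_const) hcover
  obtain ⟨j₀, hj₀⟩ := (t.image fun x => (jx x).1).exists_le
  obtain ⟨j, hj1, hj2⟩ := directed_of (· ≤ ·) i j₀
  refine ⟨j, hj1, fun k hjk y => ?_⟩
  rcases Set.mem_iUnion₂.1 (ht (Set.mem_univ y)) with ⟨x', hx', hy⟩
  have hxj : (jx x').1 ≤ k :=
    le_trans (le_trans (hj₀ _ (Finset.mem_image_of_mem _ hx')) hj2) hjk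
  calc ‖ι i k (hj1.trans hjk) (f y)‖
      = ‖ι i k ((jx x').2.trans hxj) (f y)‖ := rfl
    _ ≤ ‖ι i (jx x').1 (jx x').2 (f y)‖ := norm_anti ι hι1 htrans (jx x').2 hxj (f y)
    _ < c := hy
end push

section pu
variable {G : Type*} [TopologicalSpace G] [CompactSpace G] [T2Space G] [Nonempty G]
    {I : Type*} [Preorder I] [IsDirected I (· ≤ ·)] [Nonempty I]
    {A : I → Type*} [∀ i, NormedRing (A i)] [∀ i, NormedAlgebra ℝ (A i)]
    {B : Type*} [NormedRing B] [NormedAlgebra ℝ B]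
    (ι : ∀ i j, i ≤ j → (A i →ₐ[ℝ] A j)) (ιc : ∀ i, A i →ₐ[ℝ] B)
    (hcomp : ∀ i j (h : i ≤ j) (x : A i), ιc j (ι i j h x) = ιc i x)
    (hdense : Dense (⋃ i, Set.range (ιc i)))

include hcomp hdense in
lemma approx_by_pu (f : G → B) (hf : Continuous f) (η : ℝ) (hη : 0 < η) :
    ∃ i, ∃ u : G → A i, Continuous u ∧ ∀ g, ‖ιc i (u g) - f g‖ ≤ η := by
  classical
  -- pointwise approximation
  have key : ∀ x : G, ∃ (ix : I) (ax : A ix), ‖ιc ix ax - f x‖ < η / 2 := by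
    intro x
    have hx := hdense (f x)
    rw [Metric.mem_closure_iff] at hx
    obtain ⟨b, hb, hdist⟩ := hx (η / 2) (by linarith)
    obtain ⟨S, ⟨i, rfl⟩, hbS⟩ := hb
    obtain ⟨a, rfl⟩ := hbS
    exact ⟨i, a, by rwa [← dist_eq_norm, dist_comm]⟩
  choose ix ax hax using key
  -- open cover
  set U : G → Set G := fun x => {y | ‖ιc (ix x) (ax x) - f y‖ < η} with hU
  have hUopen : ∀ x, IsOpen (U x) :=
    fun x => isOpen_lt (Continuous.norm (by continuity)) continuous_const
  have hUmem : ∀ x, x ∈ U x := fun x => lt_trans (hax x) (by linarith)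
  have hcover : Set.univ ⊆ ⋃ x : G, U x := fun y _ => Set.mem_iUnion.2 ⟨y, hUmem y⟩
  obtain ⟨t, ht⟩ := IsCompact.elim_finite_subcover isCompact_univ U hUopen hcover
  -- common index
  obtain ⟨i, hi⟩ := (t.image ix).exists_le
  have hix : ∀ x ∈ t, ix x ≤ i := fun x hx => hi _ (Finset.mem_image_of_mem _ hx)
  -- partition of unity on the subtype index
  have hcover' : (Set.univ : Set G) ⊆ ⋃ k : ↥t, U ↑k := by
    intro y hy
    rcases Set.mem_iUnion₂.1 (ht hy) with ⟨x, hx, hyx⟩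
    exact Set.mem_iUnion.2 ⟨⟨x, hx⟩, hyx⟩
  obtain ⟨p, hp⟩ := PartitionOfUnity.exists_isSubordinate (ι := ↥t) (s := Set.univ)
    isClosed_univ (fun k => U ↑k) (fun k => hUopen ↑k) hcover'
  set c : ↥t → A i := fun k => ι (ix ↑k) i (hix ↑k k.2) (ax ↑k) with hc
  refine ⟨i, fun g => ∑ k : ↥t, p k g • c k, ?_, ?_⟩
  · exact continuous_finset_sum _ fun k _ => ((p k).continuous).smul continuous_const
  · intro g
    have hsum : ∑ k : ↥t, p k g = 1 := by
      have := p.sum_eq_one (Set.mem_univ g)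
      rwa [finsum_eq_sum_of_fintype] at this
    have hmap : ιc i (∑ k : ↥t, p k g • c k) = ∑ k : ↥t, p k g • ιc i (c k) := by
      rw [map_sum]
      congr 1
      ext k
      exact (ιc i).toLinearMap.map_smul _ _
    rw [hmap]
    calc ‖(∑ k : ↥t, p k g • ιc i (c k)) - f g‖
        = ‖∑ k : ↥t, p k g • (ιc i (c k) - f g)‖ := by
          congr 1
          simp only [smul_sub]
          rw [Finset.sum_sub_distrib, ← Finset.sum_smul, hsum, one_smul]
    _ ≤ ∑ k : ↥t, ‖p k g • (ιc i (c k) - f g)‖ := norm_sum_le _ _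
    _ ≤ ∑ k : ↥t, p k g * η := by
        apply Finset.sum_le_sum
        intro k _
        rw [norm_smul, Real.norm_eq_abs, abs_of_nonneg (p.nonneg k g)]
        rcases eq_or_ne (p k g) 0 with h0 | h0
        · simp [h0]
        · have hgU : g ∈ U ↑k := hp k (subset_tsupport _ (Function.mem_support.2 h0))
          have : ‖ιc i (c k) - f g‖ ≤ η := by
            have := hgU
            rw [hU] at this
            simp only [Set.mem_setOf_eq] at this
            rw [hc]
            simp only []
            rw [hcomp]
            exact le_of_lt this
          exact mul_le_mul_of_nonneg_left this (p.nonneg k g)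
    _ = η := by rw [← Finset.sum_mul, hsum, one_mul]
end pu

section mkunit
variable {A : Type*} [NormedRing A] [NormOneClass A] [CompleteSpace A]

lemma mk_unit {a b : A} {r : ℝ} (hr : r < 1)
    (h1 : ‖1 - a * b‖ ≤ r) (h2 : ‖1 - b * a‖ ≤ r) :
    ∃ u : Aˣ, (↑u : A) = a ∧ ‖(↑u⁻¹ : A)‖ ≤ ‖b‖ * (1 / (1 - r)) := by
  have h1' : ‖1 - a * b‖ < 1 := lt_of_le_of_lt h1 hr
  have h2' : ‖1 - b * a‖ < 1 := lt_of_le_of_lt h2 hr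
  let w1 : Aˣ := Units.oneSub (1 - a * b) (by simpa using h1')
  let w2 : Aˣ := Units.oneSub (1 - b * a) (by simpa using h2')
  have hw1 : (↑w1 : A) = a * b := by simp [w1, Units.oneSub]
  have hw2 : (↑w2 : A) = b * a := by simp [w2, Units.oneSub]
  have hac : a * (b * ↑w1⁻¹) = 1 := by
    rw [← mul_assoc, ← hw1, Units.mul_inv]
  have hca : (↑w2⁻¹ * b) * a = 1 := by
    rw [mul_assoc, ← hw2, Units.inv_mul]
  have hceq : b * ↑w1⁻¹ = ↑w2⁻¹ * b := by
    calc b * ↑w1⁻¹ = 1 * (b * ↑w1⁻¹) := (one_mul _).symm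
    _ = ((↑w2⁻¹ * b) * a) * (b * ↑w1⁻¹) := by rw [hca]
    _ = (↑w2⁻¹ * b) * (a * (b * ↑w1⁻¹)) := by rw [mul_assoc]
    _ = ↑w2⁻¹ * b := by rw [hac, mul_one]
  refine ⟨⟨a, b * ↑w1⁻¹, hac, by rw [hceq]; exact hca⟩, rfl, ?_⟩
  have : ‖b * (↑w1⁻¹ : A)‖ ≤ ‖b‖ * ‖(↑w1⁻¹ : A)‖ := norm_mul_le _ _
  have hinv : ‖(↑w1⁻¹ : A)‖ ≤ 1 / (1 - r) := by
    apply inv_norm_le' w1 hr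
    rw [hw1]; exact h1
  calc ‖(b * ↑w1⁻¹ : A)‖ ≤ ‖b‖ * ‖(↑w1⁻¹ : A)‖ := norm_mul_le _ _
  _ ≤ ‖b‖ * (1 / (1 - r)) := by
      exact mul_le_mul_of_nonneg_left hinv (norm_nonneg b)

end mkunit


set_option maxHeartbeats 4000000 in
/-- For a compact Hausdorff topological group `G`, the functor
`Rep(G, -)` from unital Banach algebras with unital contractive algebra homomorphisms
to complete metric spaces (supremum distance) preserves filtered colimits:
(i) the canonical comparison map is isometric on representations, and (ii) every
representation `φ : G → A^×` into the colimit is uniformly approximated by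
representations into the stages `A i`. -/
theorem stmt2
    {G : Type*} [Group G] [TopologicalSpace G] [IsTopologicalGroup G]
    [CompactSpace G] [T2Space G]
    {I : Type*} [Preorder I] [IsDirected I (· ≤ ·)] [Nonempty I]
    {A : I → Type*} [∀ i, NormedRing (A i)] [∀ i, NormOneClass (A i)]
    [∀ i, NormedAlgebra ℝ (A i)] [∀ i, CompleteSpace (A i)]
    {B : Type*} [NormedRing B] [NormOneClass B] [NormedAlgebra ℝ B] [CompleteSpace B]
    (ι : ∀ i j, i ≤ j → (A i →ₐ[ℝ] A j))
    (ιc : ∀ i, A i →ₐ[ℝ] B)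
    (hι1 : ∀ i j (h : i ≤ j) (x : A i), ‖ι i j h x‖ ≤ ‖x‖)
    (hιc1 : ∀ i (x : A i), ‖ιc i x‖ ≤ ‖x‖)
    (hcomp : ∀ i j (h : i ≤ j) (x : A i), ιc j (ι i j h x) = ιc i x)
    (htrans : ∀ i j k (hij : i ≤ j) (hjk : j ≤ k) (x : A i),
      ι j k hjk (ι i j hij x) = ι i k (hij.trans hjk) x)
    (hid : ∀ i (x : A i), ι i i le_rfl x = x)
    (hdense : Dense (⋃ i, Set.range (ιc i)))
    (hnorm : ∀ i (x : A i), ‖ιc i x‖ = ⨅ j : {j // i ≤ j}, ‖ι i j.1 j.2 x‖) :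
    (∀ i (ψ ψ' : G →* (A i)ˣ),
      Continuous (fun g => ((ψ g : (A i)ˣ) : A i)) →
      Continuous (fun g => ((ψ' g : (A i)ˣ) : A i)) →
      (⨆ g : G, ‖ιc i ((ψ g : (A i)ˣ) : A i) - ιc i ((ψ' g : (A i)ˣ) : A i)‖)
        = ⨅ j : {j // i ≤ j},
            ⨆ g : G, ‖ι i j.1 j.2 ((ψ g : (A i)ˣ) : A i)
              - ι i j.1 j.2 ((ψ' g : (A i)ˣ) : A i)‖)
    ∧
    (∀ (φ : G →* Bˣ), Continuous (fun g => ((φ g : Bˣ) : B)) → ∀ ε > 0,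
      ∃ (i : I) (ψ : G →* (A i)ˣ),
        Continuous (fun g => ((ψ g : (A i)ˣ) : A i)) ∧
        (⨆ g : G, ‖((φ g : Bˣ) : B) - ιc i ((ψ g : (A i)ˣ) : A i)‖) ≤ ε) := by
  haveI : Nonempty G := ⟨1⟩
  constructor
  · -- part (i)
    intro i ψ ψ' hψ hψ'
    set f : G → A i := fun g => ((ψ g : (A i)ˣ) : A i) - ((ψ' g : (A i)ˣ) : A i) with hfdef
    have hf : Continuous f := hψ.sub hψ'
    have hrw1 : ∀ g : G, ιc i ((ψ g : (A i)ˣ) : A i) - ιc i ((ψ' g : (A i)ˣ) : A i)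
        = ιc i (f g) := fun g => (map_sub (ιc i) _ _).symm
    have hrw2 : ∀ (j : {j // i ≤ j}) (g : G),
        ι i j.1 j.2 ((ψ g : (A i)ˣ) : A i) - ι i j.1 j.2 ((ψ' g : (A i)ˣ) : A i)
          = ι i j.1 j.2 (f g) := fun j g => (map_sub (ι i j.1 j.2) _ _).symm
    simp only [hrw1, hrw2]
    have hcontc : Continuous fun g => ‖ιc i (f g)‖ :=
      ((AddMonoidHomClass.continuous_of_bound (ιc i) 1
        (fun z => by simpa using hιc1 i z)).comp hf).norm
    have hbddc : BddAbove (Set.range fun g => ‖ιc i (f g)‖) :=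
      (isCompact_range hcontc).bddAbove
    have hbddj : ∀ j : {j // i ≤ j}, BddAbove (Set.range fun g => ‖ι i j.1 j.2 (f g)‖) :=
      fun j => (isCompact_range (((AddMonoidHomClass.continuous_of_bound (ι i j.1 j.2) 1
        (fun z => by simpa using hι1 i j.1 j.2 z)).comp hf).norm)).bddAbove
    apply le_antisymm
    · apply le_ciInf
      intro j
      apply ciSup_le
      intro g
      refine le_trans ?_ (le_ciSup (hbddj j) g)
      rw [hnorm i (f g)]
      exact ciInf_le ⟨0, by rintro x ⟨j', rfl⟩; exact norm_nonneg _⟩ j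
    · apply le_of_forall_gt_imp_ge_of_dense
      intro c hc
      have hlt : ∀ g, ‖ιc i (f g)‖ < c := fun g => lt_of_le_of_lt (le_ciSup hbddc g) hc
      obtain ⟨j, hij, hcj⟩ := push ι ιc hι1 htrans hnorm i f hf c hlt
      refine le_trans (ciInf_le ⟨0, ?_⟩ (⟨j, hij⟩ : {j // i ≤ j})) ?_
      · rintro x ⟨j', rfl⟩
        exact Real.iSup_nonneg (fun g => norm_nonneg _)
      · exact ciSup_le (fun g => le_of_lt (hcj j le_rfl g))
  · -- part (ii)
    intro φ hφ ε hε
    set f1 : G → B := fun g => ((φ g : Bˣ) : B) with hf1def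
    set f2 : G → B := fun g => ((φ g⁻¹ : Bˣ) : B) with hf2def
    have hcf1 : Continuous f1 := hφ
    have hcf2 : Continuous f2 := hφ.comp continuous_inv
    obtain ⟨M1, hM1⟩ : ∃ M, ∀ g, ‖f1 g‖ ≤ M := by
      obtain ⟨M, hM⟩ := (isCompact_range hcf1.norm).bddAbove
      exact ⟨M, fun g => hM ⟨g, rfl⟩⟩
    obtain ⟨M2, hM2⟩ : ∃ M, ∀ g, ‖f2 g‖ ≤ M := by
      obtain ⟨M, hM⟩ := (isCompact_range hcf2.norm).bddAbove
      exact ⟨M, fun g => hM ⟨g, rfl⟩⟩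
    set M : ℝ := max 1 (max M1 M2) with hMdef
    have hM1' : ∀ g, ‖f1 g‖ ≤ M := fun g =>
      le_trans (hM1 g) (le_trans (le_max_left _ _) (le_max_right _ _))
    have hM2' : ∀ g, ‖f2 g‖ ≤ M := fun g =>
      le_trans (hM2 g) (le_trans (le_max_right _ _) (le_max_right _ _))
    have hM : (1:ℝ) ≤ M := le_max_left _ _
    have hff1 : ∀ g, f1 g * f2 g = 1 := fun g => by
      simp only [hf1def, hf2def]
      rw [← Units.val_mul, ← map_mul, mul_inv_cancel, map_one, Units.val_one]
    have hff2 : ∀ g, f2 g * f1 g = 1 := fun g => by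
      simp only [hf1def, hf2def]
      rw [← Units.val_mul, ← map_mul, inv_mul_cancel, map_one, Units.val_one]
    have hmulf1 : ∀ g h, f1 (g * h) = f1 g * f1 h := fun g h => by
      simp only [hf1def]
      rw [← Units.val_mul, ← map_mul]
    set C : ℝ := 2 * (M + 1) with hCdef
    have hC1 : (1:ℝ) ≤ C := by rw [hCdef]; linarith
    have hC0 : (0:ℝ) < C := by linarith
    have hC41 : (1:ℝ) ≤ C ^ 4 := one_le_pow₀ hC1
    set δ : ℝ := min ((2:ℝ)^(-10 : ℤ) / C ^ 4) (ε / (8 * C ^ 3)) with hδdef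
    have hδ0 : 0 < δ := by
      apply lt_min
      · positivity
      · positivity
    have hδa : δ ≤ (2:ℝ)^(-10 : ℤ) / C ^ 4 := min_le_left _ _
    have hδb : δ ≤ ε / (8 * C ^ 3) := min_le_right _ _
    have hδsmall : δ ≤ 1 / 1024 := by
      refine le_trans hδa ?_
      rw [show ((2:ℝ)^(-10 : ℤ)) = 1/1024 by norm_num]
      exact div_le_self (by norm_num) hC41
    set η : ℝ := min (ε / 2) (min (1/2) (δ / (4 * M + 4))) with hηdef
    have hη0 : 0 < η := by
      apply lt_min (by linarith)
      apply lt_min (by norm_num)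
      positivity
    have hηε : η ≤ ε / 2 := min_le_left _ _
    have hηle : η ≤ min (1/2) (δ / (4 * M + 4)) := min_le_right _ _
    have hη12 : η ≤ 1/2 := le_trans hηle (min_le_left _ _)
    have hη4 : η * (4 * M + 4) ≤ δ := by
      have h : η ≤ δ / (4 * M + 4) := le_trans hηle (min_le_right _ _)
      rw [le_div_iff₀ (by linarith : (0:ℝ) < 4 * M + 4)] at h
      exact h
    -- approximate f1 and f2 at a single stage
    obtain ⟨i₁, u₁, hu₁c, hu₁⟩ := approx_by_pu ι ιc hcomp hdense f1 hcf1 η hη0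
    obtain ⟨i₂, v₂, hv₂c, hv₂⟩ := approx_by_pu ι ιc hcomp hdense f2 hcf2 η hη0
    obtain ⟨i₃, h13, h23⟩ := directed_of (· ≤ ·) i₁ i₂
    set u : G → A i₃ := fun g => ι i₁ i₃ h13 (u₁ g) with hudef
    set v : G → A i₃ := fun g => ι i₂ i₃ h23 (v₂ g) with hvdef
    have hcontι : ∀ (a b : I) (hab : a ≤ b), Continuous (ι a b hab) := fun a b hab =>
      AddMonoidHomClass.continuous_of_bound (ι a b hab) 1 (fun z => by simpa using hι1 a b hab z)
    have hcu : Continuous u := (hcontι _ _ _).comp hu₁c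
    have hcv : Continuous v := (hcontι _ _ _).comp hv₂c
    have hu : ∀ g, ‖ιc i₃ (u g) - f1 g‖ ≤ η := fun g => by
      simp only [hudef]
      rw [hcomp]; exact hu₁ g
    have hv : ∀ g, ‖ιc i₃ (v g) - f2 g‖ ≤ η := fun g => by
      simp only [hvdef]
      rw [hcomp]; exact hv₂ g
    have hnu : ∀ g, ‖ιc i₃ (u g)‖ ≤ M + η := fun g => by
      have h2 := hu g
      have h3 := hM1' g
      have triv : ιc i₃ (u g) = (ιc i₃ (u g) - f1 g) + f1 g := by abel
      calc ‖ιc i₃ (u g)‖ = ‖(ιc i₃ (u g) - f1 g) + f1 g‖ := by rw [← triv]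
      _ ≤ ‖ιc i₃ (u g) - f1 g‖ + ‖f1 g‖ := norm_add_le _ _
      _ ≤ M + η := by linarith
    have hnv : ∀ g, ‖ιc i₃ (v g)‖ ≤ M + η := fun g => by
      have h2 := hv g
      have h3 := hM2' g
      have triv : ιc i₃ (v g) = (ιc i₃ (v g) - f2 g) + f2 g := by abel
      calc ‖ιc i₃ (v g)‖ = ‖(ιc i₃ (v g) - f2 g) + f2 g‖ := by rw [← triv]
      _ ≤ ‖ιc i₃ (v g) - f2 g‖ + ‖f2 g‖ := norm_add_le _ _
      _ ≤ M + η := by linarith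
    -- pointwise estimates to be pushed
    have p1 : ∀ g, ‖ιc i₃ (u g)‖ < M + 1 := fun g =>
      lt_of_le_of_lt (hnu g) (by linarith)
    have p2 : ∀ g, ‖ιc i₃ (v g)‖ < M + 1 := fun g =>
      lt_of_le_of_lt (hnv g) (by linarith)
    have hprod : ∀ g, ‖ιc i₃ (u g) * ιc i₃ (v g) - 1‖ ≤ 2*M*η + η^2 := by
      intro g
      have hdecomp : ιc i₃ (u g) * ιc i₃ (v g) - 1
          = (ιc i₃ (u g) - f1 g) * ιc i₃ (v g) + f1 g * (ιc i₃ (v g) - f2 g) := by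
        rw [sub_mul, mul_sub, hff1 g]
        abel
      rw [hdecomp]
      have e1 : ‖(ιc i₃ (u g) - f1 g) * ιc i₃ (v g)‖ ≤ η * (M + η) :=
        le_trans (norm_mul_le _ _)
          (mul_le_mul (hu g) (hnv g) (norm_nonneg _) (le_of_lt hη0))
      have e2 : ‖f1 g * (ιc i₃ (v g) - f2 g)‖ ≤ M * η :=
        le_trans (norm_mul_le _ _)
          (mul_le_mul (hM1' g) (hv g) (norm_nonneg _) (by linarith))
      calc ‖_ + _‖ ≤ η * (M + η) + M * η := le_trans (norm_add_le _ _) (add_le_add e1 e2)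
      _ ≤ 2*M*η + η^2 := by nlinarith
    have hprod2 : ∀ g, ‖ιc i₃ (v g) * ιc i₃ (u g) - 1‖ ≤ 2*M*η + η^2 := by
      intro g
      have hdecomp : ιc i₃ (v g) * ιc i₃ (u g) - 1
          = (ιc i₃ (v g) - f2 g) * ιc i₃ (u g) + f2 g * (ιc i₃ (u g) - f1 g) := by
        rw [sub_mul, mul_sub, hff2 g]
        abel
      rw [hdecomp]
      have e1 : ‖(ιc i₃ (v g) - f2 g) * ιc i₃ (u g)‖ ≤ η * (M + η) :=
        le_trans (norm_mul_le _ _)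
          (mul_le_mul (hv g) (hnu g) (norm_nonneg _) (le_of_lt hη0))
      have e2 : ‖f2 g * (ιc i₃ (u g) - f1 g)‖ ≤ M * η :=
        le_trans (norm_mul_le _ _)
          (mul_le_mul (hM2' g) (hu g) (norm_nonneg _) (by linarith))
      calc ‖_ + _‖ ≤ η * (M + η) + M * η := le_trans (norm_add_le _ _) (add_le_add e1 e2)
      _ ≤ 2*M*η + η^2 := by nlinarith
    have hsmall2 : 2*M*η + η^2 < 1/2 := by nlinarith
    have p3 : ∀ g, ‖ιc i₃ (u g * v g - 1)‖ < 1/2 := by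
      intro g
      rw [map_sub, map_mul, map_one]
      exact lt_of_le_of_lt (hprod g) hsmall2
    have p4 : ∀ g, ‖ιc i₃ (v g * u g - 1)‖ < 1/2 := by
      intro g
      rw [map_sub, map_mul, map_one]
      exact lt_of_le_of_lt (hprod2 g) hsmall2
    have p5 : ∀ p : G × G, ‖ιc i₃ (u (p.1 * p.2) - u p.1 * u p.2)‖ < δ := by
      rintro ⟨g, h⟩
      simp only [map_sub, map_mul]
      have hdecomp : ιc i₃ (u (g * h)) - ιc i₃ (u g) * ιc i₃ (u h)
          = (ιc i₃ (u (g * h)) - f1 (g * h))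
            + ((f1 g - ιc i₃ (u g)) * f1 h + ιc i₃ (u g) * (f1 h - ιc i₃ (u h))) := by
        rw [hmulf1 g h, sub_mul, mul_sub]
        abel
      rw [hdecomp]
      have e1 : ‖ιc i₃ (u (g * h)) - f1 (g * h)‖ ≤ η := hu (g * h)
      have e2 : ‖(f1 g - ιc i₃ (u g)) * f1 h‖ ≤ η * M :=
        le_trans (norm_mul_le _ _)
          (mul_le_mul (by rw [norm_sub_rev]; exact hu g) (hM1' h) (norm_nonneg _)
            (le_of_lt hη0))
      have e3 : ‖ιc i₃ (u g) * (f1 h - ιc i₃ (u h))‖ ≤ (M + η) * η :=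
        le_trans (norm_mul_le _ _)
          (mul_le_mul (hnu g) (by rw [norm_sub_rev]; exact hu h) (norm_nonneg _)
            (by linarith))
      calc ‖_ + _‖ ≤ η + (η * M + (M + η) * η) := by
            refine le_trans (norm_add_le _ _) (add_le_add e1 ?_)
            exact le_trans (norm_add_le _ _) (add_le_add e2 e3)
      _ < δ := by nlinarith
    -- push to a common stage
    obtain ⟨j₁, hj₁, hc₁⟩ := push ι ιc hι1 htrans hnorm i₃ u hcu (M + 1) p1
    obtain ⟨j₂, hj₂, hc₂⟩ := push ι ιc hι1 htrans hnorm i₃ v hcv (M + 1) p2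
    obtain ⟨j₃, hj₃, hc₃⟩ := push ι ιc hι1 htrans hnorm i₃
      (fun g => u g * v g - 1) ((hcu.mul hcv).sub continuous_const) (1/2) p3
    obtain ⟨j₄, hj₄, hc₄⟩ := push ι ιc hι1 htrans hnorm i₃
      (fun g => v g * u g - 1) ((hcv.mul hcu).sub continuous_const) (1/2) p4
    obtain ⟨j₅, hj₅, hc₅⟩ := push ι ιc hι1 htrans hnorm i₃
      (fun p : G × G => u (p.1 * p.2) - u p.1 * u p.2)
      (((hcu.comp continuous_mul)).sub ((hcu.comp continuous_fst).mul
        (hcu.comp continuous_snd))) δ p5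
    obtain ⟨j₁₂, hj₁₂a, hj₁₂b⟩ := directed_of (· ≤ ·) j₁ j₂
    obtain ⟨j₃₄, hj₃₄a, hj₃₄b⟩ := directed_of (· ≤ ·) j₃ j₄
    obtain ⟨j', hj'a, hj'b⟩ := directed_of (· ≤ ·) j₁₂ j₃₄
    obtain ⟨j, hja, hjb⟩ := directed_of (· ≤ ·) j' j₅
    have hij : i₃ ≤ j := hj₁.trans ((hj₁₂a.trans hj'a).trans hja)
    set ρ : G → A j := fun g => ι i₃ j hij (u g) with hρdef
    set vj : G → A j := fun g => ι i₃ j hij (v g) with hvjdef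
    have q1 : ∀ g, ‖ρ g‖ < M + 1 := fun g => hc₁ j ((hj₁₂a.trans hj'a).trans hja) g
    have q2 : ∀ g, ‖vj g‖ < M + 1 := fun g => hc₂ j ((hj₁₂b.trans hj'a).trans hja) g
    have q3 : ∀ g, ‖ρ g * vj g - 1‖ < 1/2 := by
      intro g
      have := hc₃ j ((hj₃₄a.trans hj'b).trans hja) g
      rw [map_sub, map_mul, map_one] at this
      exact this
    have q4 : ∀ g, ‖vj g * ρ g - 1‖ < 1/2 := by
      intro g
      have := hc₄ j ((hj₃₄b.trans hj'b).trans hja) g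
      rw [map_sub, map_mul, map_one] at this
      exact this
    have q5 : ∀ g h : G, ‖ρ (g * h) - ρ g * ρ h‖ < δ := by
      intro g h
      have := hc₅ j hjb (g, h)
      rw [map_sub, map_mul] at this
      exact this
    -- invertibility
    have hunit : ∀ g, ∃ w : (A j)ˣ, (↑w : A j) = ρ g
        ∧ ‖(↑w⁻¹ : A j)‖ ≤ ‖vj g‖ * (1 / (1 - 1/2)) := by
      intro g
      apply mk_unit (by norm_num : (1:ℝ)/2 < 1)
      · rw [norm_sub_rev]; exact le_of_lt (q3 g)
      · rw [norm_sub_rev]; exact le_of_lt (q4 g)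
    choose w hw1 hw2 using hunit
    set ρi : G → A j := fun g => (↑(w g)⁻¹ : A j) with hρidef
    have hmi : ∀ g, ρ g * ρi g = 1 := fun g => by
      simp only [hρidef]
      rw [← hw1 g, Units.mul_inv]
    have him : ∀ g, ρi g * ρ g = 1 := fun g => by
      simp only [hρidef]
      rw [← hw1 g, Units.inv_mul]
    have hcρ : Continuous ρ := (hcontι _ _ _).comp hcu
    have hcρi : Continuous ρi := by
      have heq : ρi = fun g => Ring.inverse (ρ g) := by
        funext g
        simp only [hρidef]
        rw [← hw1 g, Ring.inverse_unit]
      rw [heq]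
      exact cont_ring_inverse hcρ (fun g => ⟨w g, hw1 g⟩)
    have hbρi : ∀ g, ‖ρi g‖ ≤ C := by
      intro g
      refine le_trans (hw2 g) ?_
      rw [show (1:ℝ) / (1 - 1/2) = 2 by norm_num, hCdef]
      nlinarith [q2 g, norm_nonneg (vj g)]
    have hbρ : ∀ g, ‖ρ g‖ ≤ C := fun g => by
      rw [hCdef]; nlinarith [q1 g, norm_nonneg (ρ g), hM]
    have hdefect : ∀ g h, ‖ρ (g * h) * ρi h * ρi g - 1‖ ≤ δ * C ^ 2 := by
      intro g h
      have hid2 : ρ (g * h) * ρi h * ρi g - 1 = (ρ (g * h) - ρ g * ρ h) * (ρi h * ρi g) := by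
        have h2 : (ρ g * ρ h) * (ρi h * ρi g) = 1 := by
          have : ρ h * (ρi h * ρi g) = ρi g := by rw [← mul_assoc, hmi h, one_mul]
          rw [mul_assoc, this, hmi g]
        rw [sub_mul, h2, mul_assoc]
      rw [hid2]
      calc ‖(ρ (g * h) - ρ g * ρ h) * (ρi h * ρi g)‖
          ≤ ‖ρ (g * h) - ρ g * ρ h‖ * ‖ρi h * ρi g‖ := norm_mul_le _ _
      _ ≤ δ * (C * C) := by
          apply mul_le_mul (le_of_lt (q5 g h))
            (le_trans (norm_mul_le _ _)
              (mul_le_mul (hbρi h) (hbρi g) (norm_nonneg _) (by linarith)))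
            (norm_nonneg _) (le_of_lt hδ0)
      _ = δ * C ^ 2 := by ring
    set r0 : AR G (A j) :=
      { ρ := ρ, ρi := ρi, C := C, ε := δ * C ^ 2
        cont := hcρ, conti := hcρi
        mul_inv := hmi, inv_mul := him
        hC := hC1, hε := by positivity
        bound := hbρ, boundi := hbρi
        defect := hdefect } with hr0def
    have hr0 : r0.C ^ 2 * r0.ε ≤ (2:ℝ)^(-10 : ℤ) := by
      show C ^ 2 * (δ * C ^ 2) ≤ (2:ℝ)^(-10 : ℤ)
      have heq4 : C ^ 2 * (δ * C ^ 2) = δ * C ^ 4 := by ring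
      rw [heq4]
      rw [le_div_iff₀ (by positivity : (0:ℝ) < C ^ 4)] at hδa

      linarith [hδa]
    obtain ⟨ψ, hψc, hψd⟩ := stabilityHaar r0 hr0
    refine ⟨j, ψ, hψc, ?_⟩
    apply ciSup_le
    intro g
    have d1 : ‖f1 g - ιc j (ρ g)‖ ≤ η := by
      have : ιc j (ρ g) = ιc i₃ (u g) := hcomp i₃ j hij (u g)
      rw [this, norm_sub_rev]
      exact hu g
    have d2 : ‖ιc j (ρ g) - ιc j ((ψ g : (A j)ˣ) : A j)‖ ≤ 4 * C * (δ * C ^ 2) := by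
      rw [← map_sub]
      refine le_trans (hιc1 j _) ?_
      rw [norm_sub_rev]
      exact hψd g
    have tri : ‖f1 g - ιc j ((ψ g : (A j)ˣ) : A j)‖
        ≤ ‖f1 g - ιc j (ρ g)‖ + ‖ιc j (ρ g) - ιc j ((ψ g : (A j)ˣ) : A j)‖ := by
      have := dist_triangle (f1 g) (ιc j (ρ g)) (ιc j ((ψ g : (A j)ˣ) : A j))
      simpa [dist_eq_norm] using this
    have hb2 : 4 * C * (δ * C ^ 2) ≤ ε / 2 := by
      rw [le_div_iff₀ (by positivity : (0:ℝ) < 8 * C ^ 3)] at hδb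
      nlinarith [hδb]
    calc ‖f1 g - ιc j ((ψ g : (A j)ˣ) : A j)‖
        ≤ η + 4 * C * (δ * C ^ 2) := by linarith
    _ ≤ ε := by linarith
end

section
/- Let B be a finite-dimensional semisimple unital Banach algebra, and let (A_i)_{i ∈ I}, ι_{ji}, A, ι_i be a filtered colimit presentation of unital Banach algebras in which all connecting maps ι_{ji} : A_i → A_j and all structure maps ι_i : A_i → A are surjective. Then every bounded unital algebra homomorphism φ : B → A factors exactly: there exist i ∈ I and a bounded unital algebra homomorphism ψ : B → A_i with ι_i ∘ ψ = φ. -/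
open LinearMap Finset

section TraceForm

variable (B : Type*) [Ring B] [Algebra ℝ B]

noncomputable def tF : LinearMap.BilinForm ℝ B :=
  LinearMap.compr₂ (LinearMap.mul ℝ B)
    ((LinearMap.trace ℝ B) ∘ₗ (LinearMap.mul ℝ B))

variable {B}

lemma tF_apply (a b : B) :
    tF B a b = LinearMap.trace ℝ B (LinearMap.mul ℝ B (a * b)) := rfl

lemma mul_map_mul (a b : B) :
    LinearMap.mul ℝ B (a * b) = LinearMap.mul ℝ B a * LinearMap.mul ℝ B b := by
  rw [← Algebra.coe_lmul_eq_mul, map_mul]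

lemma tF_symm (a b : B) : tF B a b = tF B b a := by
  rw [tF_apply, tF_apply, mul_map_mul, mul_map_mul, LinearMap.trace_mul_comm]

lemma tF_assoc (a b c : B) : tF B (a * b) c = tF B a (b * c) := by
  rw [tF_apply, tF_apply, mul_assoc]

lemma tF_isSymm : (tF B).IsSymm := by
  refine ⟨fun a b => ?_⟩
  simpa using tF_symm a b

variable [FiniteDimensional ℝ B] [IsSemisimpleRing B]

lemma tF_nondeg : (tF B).Nondegenerate := by
  suffices hL : ∀ a : B, (∀ b, tF B a b = 0) → a = 0 from
    ⟨hL, fun a ha => hL a fun b => by rw [tF_symm]; exact ha b⟩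
  intro a ha
  obtain ⟨e, he, hspan⟩ := IsSemisimpleRing.ideal_eq_span_idempotent (Ideal.span {a})
  have hea : e ∈ Ideal.span ({a} : Set B) := by
    rw [hspan]; exact Ideal.subset_span rfl
  obtain ⟨r, hr⟩ := Ideal.mem_span_singleton'.mp hea
  have hTe : ∀ b, tF B e b = 0 := by
    intro b
    have : tF B (r * a) b = tF B a (b * r) := by
      rw [tF_apply, tF_apply, mul_assoc, mul_map_mul, LinearMap.trace_mul_comm,
        ← mul_map_mul, ← mul_assoc]
    rw [← hr, this, ha]
  -- trace of left multiplication by e is 0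
  have h0 : LinearMap.trace ℝ B (LinearMap.mul ℝ B e) = 0 := by
    simpa [tF_apply] using hTe 1
  -- left multiplication by e is a projection
  have hproj : LinearMap.IsProj (LinearMap.range (LinearMap.mul ℝ B e))
      (LinearMap.mul ℝ B e) := by
    constructor
    · intro x; exact LinearMap.mem_range_self _ x
    · rintro x ⟨y, rfl⟩
      simp only [LinearMap.mul_apply', ← mul_assoc, he.eq]
  have htr := hproj.trace
  rw [h0] at htr
  have hrk : Module.finrank ℝ (LinearMap.range (LinearMap.mul ℝ B e)) = 0 := by
    exact_mod_cast htr.symm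
  have hbot : LinearMap.range (LinearMap.mul ℝ B e) = ⊥ :=
    Submodule.finrank_eq_zero.mp hrk
  have he0 : e = 0 := by
    have : LinearMap.mul ℝ B e 1 ∈ LinearMap.range (LinearMap.mul ℝ B e) :=
      LinearMap.mem_range_self _ 1
    rw [hbot] at this
    simpa using this
  have haa : a ∈ Ideal.span ({e} : Set B) := by
    rw [← hspan]; exact Ideal.subset_span rfl
  obtain ⟨s, hs⟩ := Ideal.mem_span_singleton'.mp haa
  rw [← hs, he0, mul_zero]

end TraceForm

section Sep

open TensorProduct

variable (B : Type*) [Ring B] [Algebra ℝ B] [FiniteDimensional ℝ B] [IsSemisimpleRing B]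

lemma exists_sep :
    ∃ (n : ℕ) (x y : Fin n → B), (∑ s, x s * y s = 1) ∧
      ∀ b : B, (∑ s, (b * x s) ⊗ₜ[ℝ] (y s) : TensorProduct ℝ B B)
        = ∑ s, (x s) ⊗ₜ[ℝ] (y s * b) := by
  classical
  set u : Module.Basis (Fin (Module.finrank ℝ B)) ℝ B := Module.finBasis ℝ B with hu
  set v : Module.Basis (Fin (Module.finrank ℝ B)) ℝ B := (tF B).dualBasis tF_nondeg u with hv
  have huv : ∀ i j, tF B (u i) (v j) = if i = j then 1 else 0 := fun i j =>
    (tF B).apply_dualBasis_right tF_nondeg tF_isSymm u i j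
  -- expansion in the basis u
  have expand_u : ∀ w : B, ∑ i, tF B w (v i) • u i = w := by
    have : (∑ i, LinearMap.smulRight ((tF B).flip (v i)) (u i)) = LinearMap.id := by
      refine Module.Basis.ext u fun j => ?_
      simp only [LinearMap.sum_apply, LinearMap.smulRight_apply, LinearMap.flip_apply,
        LinearMap.id_apply]
      simp [huv, ite_smul]
    intro w
    have h := LinearMap.congr_fun this w
    simpa only [LinearMap.sum_apply, LinearMap.smulRight_apply, LinearMap.flip_apply,
      LinearMap.BilinForm.flip_apply, LinearMap.id_apply] using h
  -- expansion in the basis v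
  have expand_v : ∀ w : B, ∑ i, tF B (u i) w • v i = w := by
    intro w
    have h := Module.Basis.sum_repr v w
    have hr : ∀ i, v.repr w i = tF B (u i) w := by
      intro i
      rw [LinearMap.BilinForm.dualBasis_repr_apply, tF_symm]
    simpa only [hr] using h
  -- coordinates in the basis u
  have repr_u : ∀ (w : B) i, u.repr w i = tF B w (v i) := by
    intro w i
    conv_lhs => rw [← expand_u w]
    rw [map_sum, Finsupp.finset_sum_apply]
    simp only [map_smul, Module.Basis.repr_self, Finsupp.smul_apply, Finsupp.single_apply,
      smul_eq_mul, mul_ite, mul_one, mul_zero]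
    simp
  refine ⟨_, u, v, ?_, ?_⟩
  · -- the Casimir equals 1
    have htr : ∀ z : B, tF B z 1 = tF B z (∑ s, u s * v s) := by
      intro z
      rw [map_sum]
      have h1 : tF B z 1 = LinearMap.trace ℝ B (LinearMap.mul ℝ B z) := by
        rw [tF_apply, mul_one]
      rw [h1, LinearMap.trace_eq_matrix_trace ℝ u, Matrix.trace]
      simp only [Matrix.diag_apply, LinearMap.toMatrix_apply, LinearMap.mul_apply']
      refine Finset.sum_congr rfl fun i _ => ?_
      rw [repr_u (z * u i) i, tF_assoc]
    have hz : ∀ z, tF B ((∑ s, u s * v s) - 1) z = 0 := by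
      intro z
      rw [map_sub, LinearMap.sub_apply, tF_symm, ← htr z, tF_symm]
      ring
    have := tF_nondeg.1 _ hz
    rw [sub_eq_zero] at this
    exact this
  · -- the bimodule identity
    intro b
    have hco : ∀ s r, tF B (b * u s) (v r) = tF B (u s) (v r * b) := by
      intro s r
      rw [show tF B (b * u s) (v r) = tF B b (u s * v r) from tF_assoc b (u s) (v r),
        tF_symm, tF_assoc]
    have hL : (∑ s, (b * u s) ⊗ₜ[ℝ] (v s) : TensorProduct ℝ B B)
        = ∑ s, ∑ r, tF B (u s) (v r * b) • ((u r) ⊗ₜ[ℝ] (v s)) := by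
      refine Finset.sum_congr rfl fun s _ => ?_
      conv_lhs => rw [← expand_u (b * u s)]
      rw [TensorProduct.sum_tmul]
      refine Finset.sum_congr rfl fun r _ => ?_
      rw [TensorProduct.smul_tmul', hco]
    have hR : (∑ s, (u s) ⊗ₜ[ℝ] (v s * b) : TensorProduct ℝ B B)
        = ∑ s, ∑ r, tF B (u r) (v s * b) • ((u s) ⊗ₜ[ℝ] (v r)) := by
      refine Finset.sum_congr rfl fun s _ => ?_
      conv_lhs => rw [← expand_v (v s * b)]
      rw [TensorProduct.tmul_sum]
      refine Finset.sum_congr rfl fun r _ => ?_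
      rw [TensorProduct.tmul_smul]
    rw [hL, hR]
    exact Finset.sum_comm

end Sep

section Newton

variable {B : Type*} [NormedRing B] [NormedAlgebra ℝ B]
variable {D : Type*} [NormedRing D] [NormedAlgebra ℝ D]
variable {n : ℕ}

/-- The multiplicative defect of a linear map, as a bilinear map. -/
noncomputable def dmap (L : B →ₗ[ℝ] D) : B →ₗ[ℝ] B →ₗ[ℝ] D :=
  LinearMap.compr₂ (LinearMap.mul ℝ B) L - (LinearMap.mul ℝ D).compl₁₂ L L

@[simp] lemma dmap_apply (L : B →ₗ[ℝ] D) (a b : B) :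
    dmap L a b = L (a * b) - L a * L b := rfl

/-- The Newton correction term. -/
noncomputable def hmap (x y : Fin n → B) (L : B →ₗ[ℝ] D) : B →ₗ[ℝ] D :=
  ∑ s, (LinearMap.mulLeft ℝ (L (x s))) ∘ₗ (dmap L (y s))

lemma hmap_apply (x y : Fin n → B) (L : B →ₗ[ℝ] D) (b : B) :
    hmap x y L b = ∑ s, L (x s) * (dmap L (y s) b) := by
  simp [hmap]

/-- One Newton step. -/
noncomputable def nstep (x y : Fin n → B) (L : B →ₗ[ℝ] D) : B →ₗ[ℝ] D :=
  L + hmap x y L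

lemma nstep_apply (x y : Fin n → B) (L : B →ₗ[ℝ] D) (b : B) :
    nstep x y L b = L b + hmap x y L b := rfl

lemma nstep_dmap (x y : Fin n → B) (hxy : ∑ s, x s * y s = 1)
    (hsep : ∀ (β : B →ₗ[ℝ] B →ₗ[ℝ] D) (b : B),
      ∑ s, β (b * x s) (y s) = ∑ s, β (x s) (y s * b))
    (L : B →ₗ[ℝ] D) (hL1 : L 1 = 1) (a b : B) :
    dmap (nstep x y L) a b
      = (∑ s, dmap L a (x s) * dmap L (y s) b)
        + (∑ s, dmap L (x s) (y s)) * dmap L a b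
        - hmap x y L a * hmap x y L b := by
  have h1 : ∀ s, dmap L (y s) (a * b)
      = dmap L (y s * a) b - L (y s) * dmap L a b + dmap L (y s) a * L b := by
    intro s
    simp only [dmap_apply]
    rw [← mul_assoc]
    noncomm_ring
  have h3 : (∑ s, L (x s) * L (y s)) = 1 - ∑ s, dmap L (x s) (y s) := by
    simp only [dmap_apply]
    rw [Finset.sum_sub_distrib, ← map_sum, hxy, hL1]
    abel
  have h4 : ∑ s, L (x s) * dmap L (y s * a) b
      = L a * hmap x y L b + ∑ s, dmap L a (x s) * dmap L (y s) b := by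
    have hs := hsep ((LinearMap.mul ℝ D).compl₁₂ L ((dmap L).flip b)) a
    simp only [LinearMap.compl₁₂_apply, LinearMap.mul_apply', LinearMap.flip_apply] at hs
    rw [← hs]
    have e : ∀ s, L (a * x s) * dmap L (y s) b
        = L a * (L (x s) * dmap L (y s) b) + dmap L a (x s) * dmap L (y s) b := by
      intro s
      have hd : L (a * x s) = L a * L (x s) + dmap L a (x s) := by
        rw [dmap_apply]; abel
      rw [hd, add_mul, mul_assoc]
    rw [Finset.sum_congr rfl fun s _ => e s, Finset.sum_add_distrib, ← Finset.mul_sum,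
      ← hmap_apply]
  have ea : ∑ s, L (x s) * (L (y s) * dmap L a b)
      = (∑ s, L (x s) * L (y s)) * dmap L a b := by
    rw [Finset.sum_mul]
    exact Finset.sum_congr rfl fun s _ => (mul_assoc _ _ _).symm
  have eb : ∑ s, L (x s) * (dmap L (y s) a * L b) = hmap x y L a * L b := by
    conv_rhs => rw [hmap_apply]
    rw [Finset.sum_mul]
    exact Finset.sum_congr rfl fun s _ => (mul_assoc _ _ _).symm
  have h2 : hmap x y L (a * b) = (∑ s, L (x s) * dmap L (y s * a) b)
      - (∑ s, L (x s) * L (y s)) * dmap L a b + hmap x y L a * L b := by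
    have e0 : ∀ s, L (x s) * dmap L (y s) (a * b)
        = L (x s) * dmap L (y s * a) b - L (x s) * (L (y s) * dmap L a b)
          + L (x s) * (dmap L (y s) a * L b) := by
      intro s
      rw [h1 s, mul_add, mul_sub]
    rw [hmap_apply, Finset.sum_congr rfl fun s _ => e0 s, Finset.sum_add_distrib,
      Finset.sum_sub_distrib, ea, eb]
  have E0 : dmap (nstep x y L) a b
      = dmap L a b + hmap x y L (a * b) - L a * hmap x y L b - hmap x y L a * L b
        - hmap x y L a * hmap x y L b := by
    simp only [dmap_apply, nstep_apply]
    noncomm_ring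
  rw [E0, h2, h4, h3]
  noncomm_ring

end Newton

section NewtonNorm

variable {B : Type*} [NormedRing B] [NormedAlgebra ℝ B]
variable {D : Type*} [NormedRing D] [NormedAlgebra ℝ D]
variable {n : ℕ}

lemma hmap_norm (x y : Fin n → B) (L : B →ₗ[ℝ] D) {M ε : ℝ} (hM : 0 ≤ M) (hε : 0 ≤ ε)
    (hLM : ∀ c, ‖L c‖ ≤ M * ‖c‖) (hLδ : ∀ a b, ‖dmap L a b‖ ≤ ε * ‖a‖ * ‖b‖) (b : B) :
    ‖hmap x y L b‖ ≤ M * (∑ s, ‖x s‖ * ‖y s‖) * ε * ‖b‖ := by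
  rw [hmap_apply]
  refine (norm_sum_le _ _).trans ?_
  have h : ∀ s : Fin n, ‖L (x s) * dmap L (y s) b‖ ≤ (M * ‖x s‖) * (ε * ‖y s‖ * ‖b‖) := by
    intro s
    refine (norm_mul_le _ _).trans ?_
    exact mul_le_mul (hLM _) (hLδ _ _) (norm_nonneg _) (by positivity)
  refine (Finset.sum_le_sum fun s _ => h s).trans (le_of_eq ?_)
  rw [Finset.sum_congr rfl (fun s _ => show (M * ‖x s‖) * (ε * ‖y s‖ * ‖b‖)
    = (M * ε * ‖b‖) * (‖x s‖ * ‖y s‖) by ring), ← Finset.mul_sum]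
  ring

lemma nstep_dmap_norm (x y : Fin n → B) (hxy : ∑ s, x s * y s = 1)
    (hsep : ∀ (β : B →ₗ[ℝ] B →ₗ[ℝ] D) (b : B),
      ∑ s, β (b * x s) (y s) = ∑ s, β (x s) (y s * b))
    (L : B →ₗ[ℝ] D) (hL1 : L 1 = 1) {M ε : ℝ} (hM : 0 ≤ M) (hε : 0 ≤ ε)
    (hLM : ∀ c, ‖L c‖ ≤ M * ‖c‖) (hLδ : ∀ a b, ‖dmap L a b‖ ≤ ε * ‖a‖ * ‖b‖) (a b : B) :
    ‖dmap (nstep x y L) a b‖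
      ≤ ε ^ 2 * (2 * (∑ s, ‖x s‖ * ‖y s‖) + M ^ 2 * (∑ s, ‖x s‖ * ‖y s‖) ^ 2) * ‖a‖ * ‖b‖ := by
  set X : ℝ := ∑ s, ‖x s‖ * ‖y s‖ with hX
  have hX0 : 0 ≤ X := Finset.sum_nonneg fun s _ => by positivity
  rw [nstep_dmap x y hxy hsep L hL1 a b]
  have t1 : ‖∑ s, dmap L a (x s) * dmap L (y s) b‖ ≤ ε ^ 2 * X * ‖a‖ * ‖b‖ := by
    refine (norm_sum_le _ _).trans ?_
    have h : ∀ s : Fin n, ‖dmap L a (x s) * dmap L (y s) b‖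
        ≤ (ε * ‖a‖ * ‖x s‖) * (ε * ‖y s‖ * ‖b‖) := by
      intro s
      refine (norm_mul_le _ _).trans (mul_le_mul (hLδ _ _) (hLδ _ _) (norm_nonneg _)
        (by positivity))
    refine (Finset.sum_le_sum fun s _ => h s).trans (le_of_eq ?_)
    rw [Finset.sum_congr rfl (fun s _ => show (ε * ‖a‖ * ‖x s‖) * (ε * ‖y s‖ * ‖b‖)
      = (ε ^ 2 * ‖a‖ * ‖b‖) * (‖x s‖ * ‖y s‖) by ring), ← Finset.mul_sum]
    ring
  have t2 : ‖(∑ s, dmap L (x s) (y s)) * dmap L a b‖ ≤ ε ^ 2 * X * ‖a‖ * ‖b‖ := by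
    refine (norm_mul_le _ _).trans ?_
    have hD : ‖∑ s, dmap L (x s) (y s)‖ ≤ ε * X := by
      refine (norm_sum_le _ _).trans ?_
      refine (Finset.sum_le_sum fun s _ => hLδ (x s) (y s)).trans (le_of_eq ?_)
      rw [Finset.sum_congr rfl (fun s _ => show ε * ‖x s‖ * ‖y s‖
        = ε * (‖x s‖ * ‖y s‖) by ring), ← Finset.mul_sum]
    refine (mul_le_mul hD (hLδ a b) (norm_nonneg _) (by positivity)).trans (le_of_eq (by ring))
  have t3 : ‖hmap x y L a * hmap x y L b‖ ≤ ε ^ 2 * (M ^ 2 * X ^ 2) * ‖a‖ * ‖b‖ := by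
    refine (norm_mul_le _ _).trans ?_
    refine (mul_le_mul (hmap_norm x y L hM hε hLM hLδ a) (hmap_norm x y L hM hε hLM hLδ b)
      (norm_nonneg _) (by positivity)).trans (le_of_eq (by ring))
  calc ‖(∑ s, dmap L a (x s) * dmap L (y s) b) + (∑ s, dmap L (x s) (y s)) * dmap L a b
        - hmap x y L a * hmap x y L b‖
      ≤ ‖(∑ s, dmap L a (x s) * dmap L (y s) b) + (∑ s, dmap L (x s) (y s)) * dmap L a b‖
        + ‖hmap x y L a * hmap x y L b‖ := norm_sub_le _ _
    _ ≤ ‖∑ s, dmap L a (x s) * dmap L (y s) b‖ + ‖(∑ s, dmap L (x s) (y s)) * dmap L a b‖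
        + ‖hmap x y L a * hmap x y L b‖ := by
        have := norm_add_le (∑ s, dmap L a (x s) * dmap L (y s) b)
          ((∑ s, dmap L (x s) (y s)) * dmap L a b)
        linarith
    _ ≤ ε ^ 2 * X * ‖a‖ * ‖b‖ + ε ^ 2 * X * ‖a‖ * ‖b‖
        + ε ^ 2 * (M ^ 2 * X ^ 2) * ‖a‖ * ‖b‖ := by linarith
    _ = ε ^ 2 * (2 * X + M ^ 2 * X ^ 2) * ‖a‖ * ‖b‖ := by ring

end NewtonNorm

section NewtonIter

open Filter Topology

variable {B : Type*} [NormedRing B] [NormedAlgebra ℝ B]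
variable {D : Type*} [NormedRing D] [NormedAlgebra ℝ D] [CompleteSpace D]
variable {C' : Type*} [NormedRing C'] [NormedAlgebra ℝ C']

lemma newton {n : ℕ} (x y : Fin n → B) (hxy : ∑ s, x s * y s = 1)
    (hsep : ∀ (β : B →ₗ[ℝ] B →ₗ[ℝ] D) (b : B),
      ∑ s, β (b * x s) (y s) = ∑ s, β (x s) (y s * b))
    (π : D →ₐ[ℝ] C') (hπ : ∀ d, ‖π d‖ ≤ ‖d‖) (φ : B →ₐ[ℝ] C')
    {M ε : ℝ} (hM : 0 ≤ M) (hε : 0 ≤ ε)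
    (hεK : ε * (2 * (∑ s, ‖x s‖ * ‖y s‖) + (M + 1) ^ 2 * (∑ s, ‖x s‖ * ‖y s‖) ^ 2) ≤ 1 / 2)
    (hεM : ε * ((M + 1) * (∑ s, ‖x s‖ * ‖y s‖)) ≤ 1 / 2)
    (L0 : B →ₗ[ℝ] D) (hL1 : L0 1 = 1) (hLπ : ∀ b, π (L0 b) = φ b)
    (hLM : ∀ b, ‖L0 b‖ ≤ M * ‖b‖)
    (hLδ : ∀ a b, ‖dmap L0 a b‖ ≤ ε * ‖a‖ * ‖b‖) :
    ∃ ψ : B →ₐ[ℝ] D, π.comp ψ = φ := by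
  set X : ℝ := ∑ s, ‖x s‖ * ‖y s‖ with hXdef
  have hX0 : 0 ≤ X := Finset.sum_nonneg fun s _ => by positivity
  have hM1 : (0:ℝ) ≤ M + 1 := by linarith
  set seq : ℕ → (B →ₗ[ℝ] D) := fun k => (nstep x y)^[k] L0 with hseq
  have hseqS : ∀ k, seq (k + 1) = nstep x y (seq k) := fun k =>
    Function.iterate_succ_apply' _ _ _
  have Inv : ∀ k, (seq k 1 = 1) ∧ (∀ b, π (seq k b) = φ b)
      ∧ (∀ b, ‖seq k b‖ ≤ (M + 1 - (1/2) ^ k) * ‖b‖)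
      ∧ (∀ a b, ‖dmap (seq k) a b‖ ≤ (ε * (1/2) ^ k) * ‖a‖ * ‖b‖) := by
    intro k
    induction k with
    | zero =>
      refine ⟨hL1, hLπ, ?_, ?_⟩
      · intro b
        simpa [hseq] using (hLM b).trans (by nlinarith [norm_nonneg b])
      · intro a b
        simpa [hseq] using hLδ a b
    | succ k ih =>
      obtain ⟨i1, i2, i3, i4⟩ := ih
      have h2k0 : (0:ℝ) ≤ (1/2) ^ k := by positivity
      have h2kle : ((1/2:ℝ)) ^ k ≤ 1 := pow_le_one₀ (by norm_num) (by norm_num)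
      have hb : ∀ c, ‖seq k c‖ ≤ (M + 1) * ‖c‖ := by
        intro c
        refine (i3 c).trans ?_
        have := norm_nonneg c
        nlinarith
      have hεk0 : (0:ℝ) ≤ ε * (1/2) ^ k := by positivity
      have hπh : ∀ b, π (hmap x y (seq k) b) = 0 := by
        intro b
        rw [hmap_apply, map_sum]
        refine Finset.sum_eq_zero fun s _ => ?_
        rw [map_mul]
        have hz : π (dmap (seq k) (y s) b) = 0 := by
          rw [dmap_apply, map_sub, i2, map_mul π, i2, i2, ← map_mul φ, sub_self]
        rw [hz, mul_zero]
      refine ⟨?_, ?_, ?_, ?_⟩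
      · rw [hseqS, nstep_apply, i1, hmap_apply]
        have hz : ∀ s : Fin n, seq k (x s) * dmap (seq k) (y s) 1 = 0 := by
          intro s
          rw [dmap_apply, mul_one, i1, mul_one, sub_self, mul_zero]
        rw [Finset.sum_congr rfl fun s _ => hz s, Finset.sum_const_zero, add_zero]
      · intro b
        rw [hseqS, nstep_apply, map_add, i2, hπh, add_zero]
      · intro b
        rw [hseqS, nstep_apply]
        refine (norm_add_le _ _).trans ?_
        have h2 := hmap_norm x y (seq k) hM1 hεk0 hb i4 b
        have key : (M + 1) * X * (ε * (1/2) ^ k) ≤ (1/2) ^ (k + 1) :=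
          calc (M + 1) * X * (ε * (1/2) ^ k) = (ε * ((M + 1) * X)) * (1/2) ^ k := by ring
            _ ≤ (1/2) * (1/2) ^ k := mul_le_mul_of_nonneg_right hεM h2k0
            _ = (1/2) ^ (k + 1) := by ring
        have hbn := norm_nonneg b
        have hpow : ((1/2:ℝ)) ^ (k+1) = (1/2) ^ k * (1/2) := pow_succ _ _
        nlinarith [mul_le_mul_of_nonneg_right key hbn, i3 b]
      · intro a b
        rw [hseqS]
        have h5 := nstep_dmap_norm x y hxy hsep (seq k) i1 hM1 hεk0 hb i4 a b
        refine h5.trans ?_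
        have key2 : (ε * (1/2) ^ k) ^ 2 * (2 * X + (M + 1) ^ 2 * X ^ 2)
            ≤ ε * (1/2) ^ (k + 1) := by
          calc (ε * (1/2) ^ k) ^ 2 * (2 * X + (M + 1) ^ 2 * X ^ 2)
              = (ε * (2 * X + (M + 1) ^ 2 * X ^ 2)) * (ε * (1/2) ^ k) * (1/2) ^ k := by ring
            _ ≤ (1/2) * (ε * (1/2) ^ k) * (1/2) ^ k := by
                refine mul_le_mul_of_nonneg_right (mul_le_mul_of_nonneg_right hεK hεk0) h2k0
            _ = (ε * (1/2) ^ (k + 1)) * (1/2) ^ k := by ring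
            _ ≤ ε * (1/2) ^ (k + 1) := by
                refine mul_le_of_le_one_right (by positivity) h2kle
        exact mul_le_mul_of_nonneg_right
          (mul_le_mul_of_nonneg_right key2 (norm_nonneg a)) (norm_nonneg b)
  -- the sequence is Cauchy at every point
  have hdist : ∀ b k, dist (seq k b) (seq (k + 1) b) ≤ ((M + 1) * X * ε * ‖b‖) * (1/2) ^ k := by
    intro b k
    obtain ⟨i1, i2, i3, i4⟩ := Inv k
    have h2k0 : (0:ℝ) ≤ (1/2) ^ k := by positivity
    have hb : ∀ c, ‖seq k c‖ ≤ (M + 1) * ‖c‖ := by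
      intro c
      refine (i3 c).trans ?_
      have := norm_nonneg c
      nlinarith
    have h2 := hmap_norm x y (seq k) hM1 (by positivity) hb i4 b
    rw [dist_eq_norm, hseqS, nstep_apply]
    have : seq k b - (seq k b + hmap x y (seq k) b) = -(hmap x y (seq k) b) := by abel
    rw [this, norm_neg]
    refine h2.trans (le_of_eq (by ring))
  have hconv : ∀ b, ∃ d, Tendsto (fun k => seq k b) atTop (𝓝 d) := fun b =>
    cauchySeq_tendsto_of_complete
      (cauchySeq_of_le_geometric (1/2) ((M + 1) * X * ε * ‖b‖) (by norm_num) (hdist b))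
  choose F hF using hconv
  have hFadd : ∀ a b, F (a + b) = F a + F b := by
    intro a b
    refine tendsto_nhds_unique (hF (a + b)) ?_
    have := (hF a).add (hF b)
    simpa only [← map_add] using this
  have hFsmul : ∀ (c : ℝ) (b : B), F (c • b) = c • F b := by
    intro c b
    refine tendsto_nhds_unique (hF (c • b)) ?_
    have := (hF b).const_smul c
    simpa only [← map_smul] using this
  have hF1 : F 1 = 1 := by
    refine tendsto_nhds_unique (hF 1) ?_
    have : (fun k => seq k 1) = fun _ => (1 : D) := funext fun k => (Inv k).1
    rw [this]
    exact tendsto_const_nhds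
  have hFmul : ∀ a b, F (a * b) = F a * F b := by
    intro a b
    have hmul : Tendsto (fun k => seq k a * seq k b) atTop (𝓝 (F a * F b)) :=
      (hF a).mul (hF b)
    have hdz : Tendsto (fun k => dmap (seq k) a b) atTop (𝓝 0) := by
      apply squeeze_zero_norm (a := fun k => (ε * ‖a‖ * ‖b‖) * (1/2) ^ k)
      · intro k
        refine ((Inv k).2.2.2 a b).trans (le_of_eq (by ring))
      · have h0 : Tendsto (fun k : ℕ => ((1:ℝ)/2) ^ k) atTop (𝓝 0) :=
          tendsto_pow_atTop_nhds_zero_of_lt_one (by norm_num) (by norm_num)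
        simpa using h0.const_mul (ε * ‖a‖ * ‖b‖)
    have ht : Tendsto (fun k => seq k (a * b)) atTop (𝓝 (F a * F b)) := by
      have he : (fun k => seq k (a * b))
          = fun k => dmap (seq k) a b + seq k a * seq k b := by
        funext k
        rw [dmap_apply]
        abel
      rw [he]
      simpa using hdz.add hmul
    exact tendsto_nhds_unique (hF (a * b)) ht
  have hπcont : Continuous π :=
    AddMonoidHomClass.continuous_of_bound π 1 (fun d => by simpa using hπ d)
  have hFπ : ∀ b, π (F b) = φ b := by
    intro b
    have h1 : Tendsto (fun k => π (seq k b)) atTop (𝓝 (π (F b))) :=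
      (hπcont.tendsto _).comp (hF b)
    have h2 : (fun k => π (seq k b)) = fun _ => φ b := funext fun k => (Inv k).2.1 b
    rw [h2] at h1
    exact tendsto_nhds_unique h1 tendsto_const_nhds
  refine ⟨AlgHom.ofLinearMap
    { toFun := F, map_add' := hFadd, map_smul' := hFsmul } hF1 hFmul, ?_⟩
  ext b
  exact hFπ b

end NewtonIter

section Expand

variable {B : Type*} [NormedRing B] [NormedAlgebra ℝ B]
variable {D : Type*} [NormedRing D] [NormedAlgebra ℝ D]

lemma dmap_expand {m : ℕ} (u : Module.Basis (Fin m) ℝ B) (L : B →ₗ[ℝ] D) (a b : B) :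
    dmap L a b = ∑ p, ∑ q, (u.repr a p * u.repr b q) • dmap L (u p) (u q) := by
  conv_lhs => rw [← u.sum_repr a, ← u.sum_repr b]
  simp only [map_sum, map_smul, LinearMap.sum_apply, LinearMap.smul_apply,
    Finset.smul_sum, mul_smul]
  rw [Finset.sum_comm]
  exact Finset.sum_congr rfl fun p _ => Finset.sum_congr rfl fun q _ => smul_comm _ _ _

end Expand

set_option maxHeartbeats 1000000 in
/-- For a finite-dimensional semisimple unital Banach algebra `B` and a
filtered colimit presentation of unital Banach algebras in which all connecting maps
and structure maps are surjective, every (automatically bounded, since `B` is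
finite-dimensional) unital algebra homomorphism `φ : B → A` into the colimit factors
exactly through some stage: `ι_i ∘ ψ = φ`. -/
theorem stmt7
    {B : Type*} [NormedRing B] [NormOneClass B] [NormedAlgebra ℝ B]
    [FiniteDimensional ℝ B] [IsSemisimpleRing B]
    {I : Type*} [Preorder I] [IsDirected I (· ≤ ·)] [Nonempty I]
    {A : I → Type*} [∀ i, NormedRing (A i)] [∀ i, NormOneClass (A i)]
    [∀ i, NormedAlgebra ℝ (A i)] [∀ i, CompleteSpace (A i)]
    {C : Type*} [NormedRing C] [NormOneClass C] [NormedAlgebra ℝ C] [CompleteSpace C]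
    (ι : ∀ i j, i ≤ j → (A i →ₐ[ℝ] A j))
    (ιc : ∀ i, A i →ₐ[ℝ] C)
    (hι1 : ∀ i j (h : i ≤ j) (x : A i), ‖ι i j h x‖ ≤ ‖x‖)
    (hιc1 : ∀ i (x : A i), ‖ιc i x‖ ≤ ‖x‖)
    (hcomp : ∀ i j (h : i ≤ j) (x : A i), ιc j (ι i j h x) = ιc i x)
    (htrans : ∀ i j k (hij : i ≤ j) (hjk : j ≤ k) (x : A i),
      ι j k hjk (ι i j hij x) = ι i k (hij.trans hjk) x)
    (hid : ∀ i (x : A i), ι i i le_rfl x = x)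
    (hdense : Dense (⋃ i, Set.range (ιc i)))
    (hnorm : ∀ i (x : A i), ‖ιc i x‖ = ⨅ j : {j // i ≤ j}, ‖ι i j.1 j.2 x‖)
    (hsurj : ∀ i j (h : i ≤ j), Function.Surjective (ι i j h))
    (hsurjc : ∀ i, Function.Surjective (ιc i))
    (φ : B →ₐ[ℝ] C) :
    ∃ (i : I) (ψ : B →ₐ[ℝ] A i), (ιc i).comp ψ = φ := by
  classical
  haveI hBnt : Nontrivial B := by
    refine ⟨1, 0, fun h => ?_⟩
    have h1 := norm_one (α := B)
    rw [h, norm_zero] at h1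
    norm_num at h1
  obtain ⟨n, xx, yy, hxy, hten⟩ := exists_sep B
  obtain ⟨X, hXdef, hX0⟩ : ∃ X : ℝ, X = ∑ s, ‖xx s‖ * ‖yy s‖ ∧ 0 ≤ X :=
    ⟨_, rfl, Finset.sum_nonneg fun s _ => mul_nonneg (norm_nonneg _) (norm_nonneg _)⟩
  set m := Module.finrank ℝ B with hm
  set u : Module.Basis (Fin m) ℝ B := Module.finBasis ℝ B with hu
  -- stage i₀ and an initial linear lift of φ
  obtain ⟨i0⟩ : Nonempty I := inferInstance
  choose lift hlift using hsurjc i0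
  set L0 : B →ₗ[ℝ] A i0 := u.constr ℝ (fun p => lift (φ (u p))) with hL0
  have hL0π : ∀ b, ιc i0 (L0 b) = φ b := by
    have h : (ιc i0).toLinearMap ∘ₗ L0 = φ.toLinearMap := by
      refine u.ext fun p => ?_
      simp only [LinearMap.comp_apply, hL0, Module.Basis.constr_basis, AlgHom.toLinearMap_apply]
      exact hlift _
    intro b
    exact LinearMap.congr_fun h b
  -- correct the value at 1
  have hfr : (0:ℝ) < (Module.finrank ℝ B : ℝ) := by
    exact_mod_cast Module.finrank_pos
  set lam : B →ₗ[ℝ] ℝ :=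
    ((Module.finrank ℝ B : ℝ))⁻¹ • ((LinearMap.trace ℝ B) ∘ₗ (LinearMap.mul ℝ B)) with hlam
  have hlam1 : lam 1 = 1 := by
    have h1 : LinearMap.mul ℝ B 1 = LinearMap.id := by
      ext c
      simp [LinearMap.mul_apply']
    simp only [hlam, LinearMap.smul_apply, LinearMap.comp_apply, h1, LinearMap.trace_id,
      smul_eq_mul]
    field_simp
  set L1 : B →ₗ[ℝ] A i0 := L0 + LinearMap.smulRight lam (1 - L0 1) with hL1
  have hL11 : L1 1 = 1 := by
    simp only [hL1, LinearMap.add_apply, LinearMap.smulRight_apply, hlam1, one_smul]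
    abel
  have hL1π : ∀ b, ιc i0 (L1 b) = φ b := by
    intro b
    simp only [hL1, LinearMap.add_apply, LinearMap.smulRight_apply, map_add, map_smul,
      map_sub, map_one, hL0π]
    rw [sub_self, smul_zero, add_zero]
  -- operator bound for L1
  obtain ⟨M, hM0, hL1M⟩ : ∃ M : ℝ, 0 ≤ M ∧ ∀ b, ‖L1 b‖ ≤ M * ‖b‖ := by
    refine ⟨max ‖LinearMap.toContinuousLinearMap L1‖ 0, le_max_right _ _, fun b => ?_⟩
    have h1 : ‖LinearMap.toContinuousLinearMap L1 b‖
        ≤ ‖LinearMap.toContinuousLinearMap L1‖ * ‖b‖ :=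
      (LinearMap.toContinuousLinearMap L1).le_opNorm b
    have h2 : LinearMap.toContinuousLinearMap L1 b = L1 b := rfl
    rw [h2] at h1
    exact h1.trans (mul_le_mul_of_nonneg_right (le_max_left _ _) (norm_nonneg b))
  -- coordinate bounds
  obtain ⟨Cp, hCp0, hcoord⟩ : ∃ Cp : Fin m → ℝ, (∀ p, 0 ≤ Cp p)
      ∧ ∀ (b : B) p, |u.repr b p| ≤ Cp p * ‖b‖ := by
    refine ⟨fun p => ‖LinearMap.toContinuousLinearMap (u.coord p)‖,
      fun p => norm_nonneg _, fun b p => ?_⟩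
    have h1 := (LinearMap.toContinuousLinearMap (u.coord p)).le_opNorm b
    have h2 : (LinearMap.toContinuousLinearMap (u.coord p)) b = u.repr b p := by
      simp [Module.Basis.coord_apply]
    rw [h2] at h1
    simpa [Real.norm_eq_abs] using h1
  obtain ⟨S, hSdef, hS0⟩ : ∃ S : ℝ, S = ∑ p, Cp p ∧ 0 ≤ S :=
    ⟨_, rfl, Finset.sum_nonneg fun p _ => hCp0 p⟩
  -- constants
  obtain ⟨ε, hε, hεK, hεM⟩ : ∃ ε : ℝ, 0 < ε
      ∧ ε * (2 * X + (M + 1) ^ 2 * X ^ 2) ≤ 1 / 2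
      ∧ ε * ((M + 1) * X) ≤ 1 / 2 := by
    have hM1 : (0:ℝ) ≤ M + 1 := by linarith
    have hMX0 : 0 ≤ (M + 1) * X := mul_nonneg hM1 hX0
    have hsq : (0:ℝ) ≤ (M + 1) ^ 2 * X ^ 2 := mul_nonneg (sq_nonneg _) (sq_nonneg _)
    have hK0 : (0:ℝ) ≤ 2 * X + (M + 1) ^ 2 * X ^ 2 + (M + 1) * X := by linarith
    set K : ℝ := 2 * X + (M + 1) ^ 2 * X ^ 2 + (M + 1) * X with hK
    have hKpos : (0:ℝ) < 2 * (K + 1) := by linarith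
    have hhalf : (1 / (2 * (K + 1))) * (K + 1) = 1 / 2 := by
      field_simp
    refine ⟨1 / (2 * (K + 1)), by positivity, ?_, ?_⟩
    · rw [← hhalf]
      refine mul_le_mul_of_nonneg_left (by linarith) (by positivity)
    · rw [← hhalf]
      refine mul_le_mul_of_nonneg_left (by linarith) (by positivity)
  obtain ⟨η, hη, hηS⟩ : ∃ η : ℝ, 0 < η ∧ η * S ^ 2 ≤ ε := by
    have hpos : (0:ℝ) < S ^ 2 + 1 := by positivity
    refine ⟨ε / (S ^ 2 + 1), div_pos hε hpos, ?_⟩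
    rw [div_mul_eq_mul_div, div_le_iff₀ hpos]
    nlinarith [hε.le, sq_nonneg S]
  -- defect elements at stage i0 lie in the kernel of ιc i0
  set d : Fin m → Fin m → A i0 := fun p q => dmap L1 (u p) (u q) with hd
  have hdker : ∀ p q, ιc i0 (d p q) = 0 := by
    intro p q
    rw [hd]
    simp only [dmap_apply, map_sub, map_mul, hL1π]
    rw [← map_mul φ, sub_self]
  haveI : Nonempty {j // i0 ≤ j} := ⟨⟨i0, le_rfl⟩⟩
  have hsmall : ∀ p q, ∃ j : {j // i0 ≤ j}, ‖ι i0 j.1 j.2 (d p q)‖ < η := by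
    intro p q
    have h0 : ⨅ j : {j // i0 ≤ j}, ‖ι i0 j.1 j.2 (d p q)‖ < η := by
      rw [← hnorm i0 (d p q), hdker, norm_zero]
      exact hη
    exact exists_lt_of_ciInf_lt h0
  choose jp hjp using hsmall
  obtain ⟨j0, hj0⟩ := Finset.exists_le
    (insert i0 ((Finset.univ : Finset (Fin m × Fin m)).image (fun pq => (jp pq.1 pq.2).1)))
  have hij : i0 ≤ j0 := hj0 i0 (Finset.mem_insert_self _ _)
  have hjple : ∀ p q, (jp p q).1 ≤ j0 := fun p q =>
    hj0 _ (Finset.mem_insert_of_mem (Finset.mem_image_of_mem _ (Finset.mem_univ (p, q))))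
  -- push the lift to stage j0
  set L2 : B →ₗ[ℝ] A j0 := (ι i0 j0 hij).toLinearMap ∘ₗ L1 with hL2
  have hL21 : L2 1 = 1 := by
    simp [hL2, hL11]
  have hL2π : ∀ b, ιc j0 (L2 b) = φ b := by
    intro b
    simp only [hL2, LinearMap.comp_apply, AlgHom.toLinearMap_apply]
    rw [hcomp]
    exact hL1π b
  have hL2M : ∀ b, ‖L2 b‖ ≤ M * ‖b‖ := fun b => (hι1 _ _ _ _).trans (hL1M b)
  have hd2 : ∀ p q, ‖dmap L2 (u p) (u q)‖ ≤ η := by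
    intro p q
    have he : dmap L2 (u p) (u q) = ι i0 j0 hij (d p q) := by
      simp only [hL2, hd, dmap_apply, LinearMap.comp_apply, AlgHom.toLinearMap_apply,
        map_sub, map_mul]
    rw [he, ← htrans i0 (jp p q).1 j0 (jp p q).2 (hjple p q) (d p q)]
    exact (hι1 _ _ _ _).trans (hjp p q).le
  -- defect bound at stage j0
  have hL2δ : ∀ a b, ‖dmap L2 a b‖ ≤ ε * ‖a‖ * ‖b‖ := by
    intro a b
    rw [dmap_expand u L2 a b]
    have hterm : ∀ p q : Fin m, ‖(u.repr a p * u.repr b q) • dmap L2 (u p) (u q)‖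
        ≤ (Cp p * ‖a‖ * η) * (Cp q * ‖b‖) := by
      intro p q
      rw [norm_smul, Real.norm_eq_abs, abs_mul]
      have h1 : |u.repr a p| * |u.repr b q| ≤ (Cp p * ‖a‖) * (Cp q * ‖b‖) :=
        mul_le_mul (hcoord a p) (hcoord b q) (abs_nonneg _)
          (mul_nonneg (hCp0 p) (norm_nonneg a))
      have h2 : |u.repr a p| * |u.repr b q| * ‖dmap L2 (u p) (u q)‖
          ≤ ((Cp p * ‖a‖) * (Cp q * ‖b‖)) * η :=
        mul_le_mul h1 (hd2 p q) (norm_nonneg _)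
          (mul_nonneg (mul_nonneg (hCp0 p) (norm_nonneg a))
            (mul_nonneg (hCp0 q) (norm_nonneg b)))
      refine h2.trans (le_of_eq (by ring))
    have hsum : ∑ p, ∑ q, (Cp p * ‖a‖ * η) * (Cp q * ‖b‖)
        = S * ‖a‖ * η * (S * ‖b‖) := by
      have e1 : ∑ p, Cp p * ‖a‖ * η = S * ‖a‖ * η := by
        rw [hSdef, Finset.sum_mul, Finset.sum_mul]
      have e2 : ∑ q, Cp q * ‖b‖ = S * ‖b‖ := by
        rw [hSdef, Finset.sum_mul]
      rw [← Finset.sum_mul_sum, e1, e2]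
    calc ‖∑ p, ∑ q, (u.repr a p * u.repr b q) • dmap L2 (u p) (u q)‖
        ≤ ∑ p, ∑ q, ‖(u.repr a p * u.repr b q) • dmap L2 (u p) (u q)‖ := by
          refine (norm_sum_le _ _).trans (Finset.sum_le_sum fun p _ => norm_sum_le _ _)
      _ ≤ ∑ p, ∑ q, (Cp p * ‖a‖ * η) * (Cp q * ‖b‖) :=
          Finset.sum_le_sum fun p _ => Finset.sum_le_sum fun q _ => hterm p q
      _ = η * S ^ 2 * ‖a‖ * ‖b‖ := by rw [hsum]; ring
      _ ≤ ε * ‖a‖ * ‖b‖ := by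
          refine mul_le_mul_of_nonneg_right
            (mul_le_mul_of_nonneg_right hηS (norm_nonneg a)) (norm_nonneg b)
  -- the separability identity, transported to bilinear maps into A j0
  have hsep : ∀ (β : B →ₗ[ℝ] B →ₗ[ℝ] A j0) (b : B),
      ∑ s, β (b * xx s) (yy s) = ∑ s, β (xx s) (yy s * b) := by
    intro β b
    have h := congrArg (TensorProduct.lift β) (hten b)
    simpa only [map_sum, TensorProduct.lift.tmul] using h
  rw [hXdef] at hεK hεM
  obtain ⟨ψ, hψ⟩ := newton xx yy hxy hsep (ιc j0) (hιc1 j0) φ hM0 hε.le hεK hεM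
    L2 hL21 hL2π hL2M hL2δ
  exact ⟨j0, ψ, hψ⟩
end

section
/- Let F be a finite-dimensional Banach space, and let (E_i)_{i ∈ I}, ι_{ji}, E, ι_i be a filtered colimit presentation of Banach spaces. Then: (i) for every i and all linear contractions ψ, ψ' : F → E_i, ‖ι_i ∘ ψ − ι_i ∘ ψ'‖ = inf_{j ≥ i} ‖ι_{ji} ∘ ψ − ι_{ji} ∘ ψ'‖ (operator norms of the differences); and (ii) for every linear contraction φ : F → E and every ε > 0 there exist i ∈ I and a linear contraction ψ : F → E_i with ‖φ − ι_i ∘ ψ‖ ≤ ε. In other words, the hom-functor Ban_{≤1}(F, −) from Banach spaces with linear contractions to complete metric spaces (hom-spaces of contractions metrized by operator norm distance) preserves filtered colimits; i.e. F is finitely presentable in the metric-enriched sense. -/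
open ContinuousLinearMap Metric Finset

lemma stmt10_key
    {F : Type*} [NormedAddCommGroup F] [NormedSpace ℝ F] [FiniteDimensional ℝ F]
    {I : Type*} [Preorder I] [IsDirected I (· ≤ ·)] [Nonempty I]
    {E : I → Type*} [∀ i, NormedAddCommGroup (E i)] [∀ i, NormedSpace ℝ (E i)]
    {W : Type*} [NormedAddCommGroup W] [NormedSpace ℝ W]
    (ι : ∀ i j, i ≤ j → (E i →L[ℝ] E j))
    (ιc : ∀ i, E i →L[ℝ] W)
    (hι1 : ∀ i j (h : i ≤ j) (x : E i), ‖ι i j h x‖ ≤ ‖x‖)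
    (hιc1 : ∀ i (x : E i), ‖ιc i x‖ ≤ ‖x‖)
    (hcomp : ∀ i j (h : i ≤ j) (x : E i), ιc j (ι i j h x) = ιc i x)
    (htrans : ∀ i j k (hij : i ≤ j) (hjk : j ≤ k) (x : E i),
      ι j k hjk (ι i j hij x) = ι i k (hij.trans hjk) x)
    (hnorm : ∀ i (x : E i), ‖ιc i x‖ = ⨅ j : {j // i ≤ j}, ‖ι i j.1 j.2 x‖)
    (i : I) (T : F →L[ℝ] E i) :
    ‖(ιc i).comp T‖ = ⨅ j : {j // i ≤ j}, ‖(ι i j.1 j.2).comp T‖ := by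
  classical
  haveI : Nonempty {j // i ≤ j} := ⟨⟨i, le_rfl⟩⟩
  have hbdd : BddBelow (Set.range fun j : {j // i ≤ j} => ‖(ι i j.1 j.2).comp T‖) :=
    ⟨0, by rintro a ⟨j, rfl⟩; exact norm_nonneg _⟩
  apply le_antisymm
  · apply le_ciInf
    rintro ⟨j, hj⟩
    have heq : (ιc i).comp T = (ιc j).comp ((ι i j hj).comp T) := by
      ext x; simp [hcomp]
    rw [heq]
    calc ‖(ιc j).comp ((ι i j hj).comp T)‖ ≤ ‖ιc j‖ * ‖(ι i j hj).comp T‖ :=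
          opNorm_comp_le _ _
      _ ≤ 1 * ‖(ι i j hj).comp T‖ := by
          gcongr; exact opNorm_le_bound _ zero_le_one (by simpa using hιc1 j)
      _ = ‖(ι i j hj).comp T‖ := one_mul _
  · apply le_of_forall_pos_le_add
    intro δ hδ
    set K : ℝ := ‖T‖ + ‖(ιc i).comp T‖ + 1 with hK
    have hK1 : 1 ≤ K := by
      have := norm_nonneg T; have := norm_nonneg ((ιc i).comp T); linarith
    have hKpos : 0 < K := lt_of_lt_of_le one_pos hK1
    set ε : ℝ := δ / K with hε
    have hεpos : 0 < ε := div_pos hδ hKpos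
    -- finite ε-net of the closed unit ball
    obtain ⟨t, htfin, htcov⟩ := totallyBounded_iff.mp
      ((isCompact_closedBall (0 : F) 1).totallyBounded) ε hεpos
    -- select stages for points of the net
    have hsel : ∀ y : F, ∃ j : I, ∃ h : i ≤ j,
        ‖ι i j h (T y)‖ < ‖ιc i (T y)‖ + ε := by
      intro y
      have h1 : (⨅ j : {j // i ≤ j}, ‖ι i j.1 j.2 (T y)‖) < ‖ιc i (T y)‖ + ε := by
        rw [← hnorm]; linarith
      obtain ⟨⟨j, hj⟩, hlt⟩ := exists_lt_of_ciInf_lt h1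
      exact ⟨j, hj, hlt⟩
    choose g hg hgy using hsel
    obtain ⟨M, hM⟩ := (insert i (htfin.toFinset.image g)).exists_le
    have hiM : i ≤ M := hM i (Finset.mem_insert_self _ _)
    have hbound : ‖(ι i M hiM).comp T‖ ≤
        ‖T‖ * ε + ‖(ιc i).comp T‖ * (1 + ε) + ε := by
      apply opNorm_le_of_unit_norm
      · positivity
      · intro x hx
        have hxball : x ∈ closedBall (0 : F) 1 := by
          simp [mem_closedBall, dist_eq_norm, hx]
        obtain ⟨y, hyt, hxy⟩ := Set.mem_iUnion₂.mp (htcov hxball)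
        have hxy' : ‖x - y‖ < ε := by rwa [mem_ball, dist_eq_norm] at hxy
        have hgyM : g y ≤ M :=
          hM (g y) (Finset.mem_insert_of_mem
            (Finset.mem_image_of_mem g (htfin.mem_toFinset.mpr hyt)))
        have hy1 : ‖y‖ ≤ 1 + ε := by
          have := norm_sub_norm_le y x
          rw [norm_sub_rev x y] at hxy'
          linarith [hx ▸ le_refl ‖x‖]
        have step1 : ι i M hiM (T y) = ι (g y) M hgyM (ι i (g y) (hg y) (T y)) :=
          (htrans i (g y) M (hg y) hgyM (T y)).symm
        have step2 : ‖ι i M hiM (T y)‖ ≤ ‖ιc i (T y)‖ + ε := by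
          rw [step1]
          calc ‖ι (g y) M hgyM (ι i (g y) (hg y) (T y))‖
              ≤ ‖ι i (g y) (hg y) (T y)‖ := hι1 _ _ _ _
            _ ≤ ‖ιc i (T y)‖ + ε := (hgy y).le
        have step3 : ‖ιc i (T y)‖ ≤ ‖(ιc i).comp T‖ * (1 + ε) := by
          calc ‖ιc i (T y)‖ = ‖((ιc i).comp T) y‖ := rfl
            _ ≤ ‖(ιc i).comp T‖ * ‖y‖ := le_opNorm _ _
            _ ≤ ‖(ιc i).comp T‖ * (1 + ε) := by gcongr
        have hdecomp : (ι i M hiM) (T x)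
            = ι i M hiM (T (x - y)) + ι i M hiM (T y) := by
          rw [← map_add, ← map_add, sub_add_cancel]
        calc ‖((ι i M hiM).comp T) x‖
            = ‖ι i M hiM (T (x - y)) + ι i M hiM (T y)‖ := by
              rw [show ((ι i M hiM).comp T) x = (ι i M hiM) (T x) from rfl, hdecomp]
          _ ≤ ‖ι i M hiM (T (x - y))‖ + ‖ι i M hiM (T y)‖ := norm_add_le _ _
          _ ≤ ‖T (x - y)‖ + (‖(ιc i).comp T‖ * (1 + ε) + ε) := by
              gcongr
              · exact hι1 _ _ _ _
              · exact step2.trans (by linarith)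
          _ ≤ ‖T‖ * ε + (‖(ιc i).comp T‖ * (1 + ε) + ε) := by
              gcongr
              exact (le_opNorm _ _).trans (by gcongr)
          _ = ‖T‖ * ε + ‖(ιc i).comp T‖ * (1 + ε) + ε := by ring
    have hfinal : (⨅ j : {j // i ≤ j}, ‖(ι i j.1 j.2).comp T‖)
        ≤ ‖T‖ * ε + ‖(ιc i).comp T‖ * (1 + ε) + ε :=
      le_trans (ciInf_le hbdd ⟨M, hiM⟩) hbound
    have : ‖T‖ * ε + ‖(ιc i).comp T‖ * (1 + ε) + ε = ‖(ιc i).comp T‖ + ε * K := by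
      rw [hK]; ring
    rw [this] at hfinal
    have : ε * K = δ := by
      rw [hε]; field_simp
    linarith [hfinal, this ▸ hfinal]

set_option maxHeartbeats 1000000 in
/-- For a finite-dimensional Banach space `F`, the hom-functor
`Ban_{≤1}(F, -)` from Banach spaces with linear contractions to complete metric
spaces (hom-spaces metrized by operator-norm distance) preserves filtered colimits:
(i) the canonical comparison map is isometric, and (ii) every linear contraction
`φ : F → E` into the colimit is approximated in operator norm by linear contractions
into the stages `E i`; i.e. `F` is finitely presentable in the metric-enriched
sense. -/
theorem stmt10
    {F : Type*} [NormedAddCommGroup F] [NormedSpace ℝ F] [FiniteDimensional ℝ F]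
    {I : Type*} [Preorder I] [IsDirected I (· ≤ ·)] [Nonempty I]
    {E : I → Type*} [∀ i, NormedAddCommGroup (E i)] [∀ i, NormedSpace ℝ (E i)]
    [∀ i, CompleteSpace (E i)]
    {W : Type*} [NormedAddCommGroup W] [NormedSpace ℝ W] [CompleteSpace W]
    (ι : ∀ i j, i ≤ j → (E i →L[ℝ] E j))
    (ιc : ∀ i, E i →L[ℝ] W)
    (hι1 : ∀ i j (h : i ≤ j) (x : E i), ‖ι i j h x‖ ≤ ‖x‖)
    (hιc1 : ∀ i (x : E i), ‖ιc i x‖ ≤ ‖x‖)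
    (hcomp : ∀ i j (h : i ≤ j) (x : E i), ιc j (ι i j h x) = ιc i x)
    (htrans : ∀ i j k (hij : i ≤ j) (hjk : j ≤ k) (x : E i),
      ι j k hjk (ι i j hij x) = ι i k (hij.trans hjk) x)
    (hid : ∀ i (x : E i), ι i i le_rfl x = x)
    (hdense : Dense (⋃ i, Set.range (ιc i)))
    (hnorm : ∀ i (x : E i), ‖ιc i x‖ = ⨅ j : {j // i ≤ j}, ‖ι i j.1 j.2 x‖) :
    (∀ i (ψ ψ' : F →L[ℝ] E i), ‖ψ‖ ≤ 1 → ‖ψ'‖ ≤ 1 →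
      ‖(ιc i).comp ψ - (ιc i).comp ψ'‖
        = ⨅ j : {j // i ≤ j}, ‖(ι i j.1 j.2).comp ψ - (ι i j.1 j.2).comp ψ'‖)
    ∧
    (∀ (φ : F →L[ℝ] W), ‖φ‖ ≤ 1 → ∀ ε > 0,
      ∃ (i : I) (ψ : F →L[ℝ] E i), ‖ψ‖ ≤ 1 ∧ ‖φ - (ιc i).comp ψ‖ ≤ ε) := by
  constructor
  · intro i ψ ψ' _ _
    have h1 : (ιc i).comp ψ - (ιc i).comp ψ' = (ιc i).comp (ψ - ψ') := by
      ext x; simp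
    have h2 : ∀ j : {j // i ≤ j},
        (ι i j.1 j.2).comp ψ - (ι i j.1 j.2).comp ψ' = (ι i j.1 j.2).comp (ψ - ψ') := by
      intro j; ext x; simp
    rw [h1]
    rw [show (fun j : {j // i ≤ j} => ‖(ι i j.1 j.2).comp ψ - (ι i j.1 j.2).comp ψ'‖)
        = fun j : {j // i ≤ j} => ‖(ι i j.1 j.2).comp (ψ - ψ')‖ from funext fun j => by
          rw [h2 j]] at *
    exact stmt10_key ι ιc hι1 hιc1 hcomp htrans hnorm i (ψ - ψ')
  · intro φ hφ ε hε
    classical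
    set e : ℝ := ε / 3 with he
    have hepos : 0 < e := by positivity
    let b : Module.Basis (Fin (Module.finrank ℝ F)) ℝ F := Module.finBasis ℝ F
    let c : Fin (Module.finrank ℝ F) → (F →L[ℝ] ℝ) :=
      fun m => LinearMap.toContinuousLinearMap (b.coord m)
    set D : ℝ := ∑ m, ‖c m‖ with hD
    have hD0 : 0 ≤ D := Finset.sum_nonneg fun m _ => norm_nonneg _
    set δ : ℝ := e / (D + 1) with hδdef
    have hδpos : 0 < δ := by positivity
    have happrox : ∀ m : Fin (Module.finrank ℝ F),
        ∃ (k : I) (z : E k), ‖φ (b m) - ιc k z‖ < δ := by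
      intro m
      obtain ⟨w, hw1, hw2⟩ := hdense.exists_dist_lt (φ (b m)) hδpos
      obtain ⟨k, hk⟩ := Set.mem_iUnion.mp hw1
      obtain ⟨z, rfl⟩ := hk
      exact ⟨k, z, by rwa [dist_eq_norm] at hw2⟩
    choose k z hz using happrox
    obtain ⟨i, hi⟩ := (Finset.univ.image k).exists_le
    have hk : ∀ m, k m ≤ i := fun m =>
      hi _ (Finset.mem_image_of_mem k (Finset.mem_univ m))
    set w : Fin (Module.finrank ℝ F) → E i := fun m => ι (k m) i (hk m) (z m) with hw
    set ψ0 : F →L[ℝ] E i := LinearMap.toContinuousLinearMap (b.constr ℝ w) with hψ0def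
    have hψ0 : ∀ x, ψ0 x = ∑ m, b.repr x m • w m := by
      intro x
      show (b.constr ℝ w) x = _
      rw [Module.Basis.constr_apply_fintype]
      simp [Module.Basis.equivFun_apply]
    have hφx : ∀ x : F, φ x = ∑ m, b.repr x m • φ (b m) := by
      intro x
      conv_lhs => rw [← b.sum_repr x]
      rw [map_sum]
      simp
    have hcoord : ∀ (x : F) m, |b.repr x m| ≤ ‖c m‖ * ‖x‖ := by
      intro x m
      have : b.repr x m = c m x := by
        simp [c, LinearMap.coe_toContinuousLinearMap', Module.Basis.coord_apply]
      rw [this, ← Real.norm_eq_abs]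
      exact (c m).le_opNorm x
    have hwc : ∀ m, ιc i (w m) = ιc (k m) (z m) := fun m =>
      hcomp (k m) i (hk m) (z m)
    clear_value e D δ b c w ψ0
    set g : F →L[ℝ] W := (ιc i).comp ψ0 with hg
    have hbound : ∀ x : F, ‖(φ - g) x‖ ≤ δ * D * ‖x‖ := by
      intro x
      have h1 : (φ - g) x = ∑ m, b.repr x m • (φ (b m) - ιc (k m) (z m)) := by
        have h2 : g x = ∑ m, b.repr x m • ιc (k m) (z m) := by
          show ιc i (ψ0 x) = _
          rw [hψ0, map_sum]
          refine Finset.sum_congr rfl fun m _ => ?_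
          rw [map_smul]
          congr 1
          exact hwc m
        rw [ContinuousLinearMap.sub_apply, h2, hφx, ← Finset.sum_sub_distrib]
        refine Finset.sum_congr rfl fun m _ => ?_
        rw [smul_sub]
      rw [h1]
      calc ‖∑ m, b.repr x m • (φ (b m) - ιc (k m) (z m))‖
          ≤ ∑ m, ‖b.repr x m • (φ (b m) - ιc (k m) (z m))‖ := norm_sum_le _ _
        _ = ∑ m, |b.repr x m| * ‖φ (b m) - ιc (k m) (z m)‖ := by
            simp [norm_smul]
        _ ≤ ∑ m, (‖c m‖ * ‖x‖) * δ := by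
            refine Finset.sum_le_sum fun m _ => ?_
            exact mul_le_mul (hcoord x m) (hz m).le (norm_nonneg _)
              (by positivity)
        _ = δ * D * ‖x‖ := by
            rw [← Finset.sum_mul, ← Finset.sum_mul, ← hD]; ring
    have hop : ‖φ - g‖ ≤ δ * D :=
      opNorm_le_bound _ (mul_nonneg hδpos.le hD0) hbound
    have hδD : δ * D ≤ e := by
      have hD1 : (0:ℝ) < D + 1 := by linarith
      have h1 : δ * (D + 1) = e := by
        rw [hδdef, div_mul_cancel₀ e hD1.ne']
      have h2 : δ * D ≤ δ * (D + 1) :=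
        mul_le_mul_of_nonneg_left (by linarith) hδpos.le
      linarith
    have hg1 : ‖g‖ ≤ 1 + e := by
      have h1 : ‖g‖ - ‖φ‖ ≤ ‖g - φ‖ := norm_sub_norm_le g φ
      rw [norm_sub_rev] at h1
      linarith
    have hkey := stmt10_key ι ιc hι1 hιc1 hcomp htrans hnorm i ψ0
    rw [← hg] at hkey
    clear_value g
    haveI : Nonempty {j // i ≤ j} := ⟨⟨i, le_rfl⟩⟩
    have hlt : (⨅ j : {j // i ≤ j}, ‖(ι i j.1 j.2).comp ψ0‖) < 1 + 2 * e := by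
      rw [← hkey]
      linarith
    obtain ⟨⟨j, hj⟩, hjlt⟩ := exists_lt_of_ciInf_lt hlt
    set a : ℝ := (1 + 2 * e)⁻¹ with ha
    have h2e : (0 : ℝ) < 1 + 2 * e := by linarith
    have hainv : a * (1 + 2 * e) = 1 := inv_mul_cancel₀ (ne_of_gt h2e)
    have hapos : 0 < a := inv_pos.mpr h2e
    clear_value a
    have ha1 : a ≤ 1 := by
      have h3 : a * (1 + 2 * e) = a + 2 * e * a := by ring
      have h4 : 0 ≤ 2 * e * a := by positivity
      linarith
    refine ⟨j, a • ((ι i j hj).comp ψ0), ?_, ?_⟩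
    · rw [norm_smul a ((ι i j hj).comp ψ0), Real.norm_eq_abs, abs_of_pos hapos]
      calc a * ‖(ι i j hj).comp ψ0‖ ≤ a * (1 + 2 * e) := by
            exact mul_le_mul_of_nonneg_left hjlt.le hapos.le
        _ = 1 := hainv
    · have hcψ : (ιc j).comp (a • ((ι i j hj).comp ψ0)) = a • g := by
        rw [hg]
        ext x
        simp only [ContinuousLinearMap.comp_apply, ContinuousLinearMap.smul_apply,
          map_smul, hcomp]
      rw [hcψ]
      have hsplit : φ - a • g = (φ - g) + (1 - a) • g := by
        rw [sub_smul, one_smul]; abel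
      rw [hsplit]
      have h1a : 1 - a = 2 * e * a := by
        have h3 : a * (1 + 2 * e) = a + 2 * e * a := by ring
        linarith
      calc ‖(φ - g) + (1 - a) • g‖ ≤ ‖φ - g‖ + ‖(1 - a) • g‖ := norm_add_le _ _
        _ ≤ ‖φ - g‖ + (1 - a) * ‖g‖ := by
            have h6 : ‖(1 - a) • g‖ ≤ (1 - a) * ‖g‖ := by
              have h7 := norm_smul_le (1 - a) g
              rwa [Real.norm_eq_abs, abs_of_nonneg (by linarith : (0:ℝ) ≤ 1 - a)] at h7
            linarith
        _ ≤ e + 2 * e := by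
            have h2 : (1 - a) * ‖g‖ ≤ 2 * e := by
              have h4 : a * ‖g‖ ≤ a * (1 + 2 * e) :=
                mul_le_mul_of_nonneg_left (by linarith) hapos.le
              have h5 : 2 * e * (a * ‖g‖) ≤ 2 * e * 1 :=
                mul_le_mul_of_nonneg_left (h4.trans_eq hainv) (by linarith)
              calc (1 - a) * ‖g‖ = 2 * e * (a * ‖g‖) := by rw [h1a]; ring
                _ ≤ 2 * e := by linarith
            have h3 : ‖φ - g‖ ≤ e := le_trans hop hδD
            linarith
        _ = ε := by rw [he]; ring
end

section
/- Let F be a finite-dimensional Banach space, and let (E_i)_{i ∈ I}, ι_{ji}, E, ι_i be a filtered colimit presentation of Banach spaces in which all connecting maps ι_{ji} : E_i → E_j are surjective. Then for every linear contraction φ : F → E and every ε > 0 there exist i ∈ I and a linear contraction ψ : F → E_i with ‖φ − ι_i ∘ ψ‖ ≤ ε. -/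
set_option maxHeartbeats 2000000


/-- For a finite-dimensional Banach space `F` and a filtered colimit
presentation of Banach spaces in which all connecting maps are surjective, every
linear contraction `φ : F → E` into the colimit is approximated in operator norm by
linear contractions into the stages `E i`. -/
theorem stmt11
    {F : Type*} [NormedAddCommGroup F] [NormedSpace ℝ F] [FiniteDimensional ℝ F]
    {I : Type*} [Preorder I] [IsDirected I (· ≤ ·)] [Nonempty I]
    {E : I → Type*} [∀ i, NormedAddCommGroup (E i)] [∀ i, NormedSpace ℝ (E i)]
    [∀ i, CompleteSpace (E i)]
    {W : Type*} [NormedAddCommGroup W] [NormedSpace ℝ W] [CompleteSpace W]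
    (ι : ∀ i j, i ≤ j → (E i →L[ℝ] E j))
    (ιc : ∀ i, E i →L[ℝ] W)
    (hι1 : ∀ i j (h : i ≤ j) (x : E i), ‖ι i j h x‖ ≤ ‖x‖)
    (hιc1 : ∀ i (x : E i), ‖ιc i x‖ ≤ ‖x‖)
    (hcomp : ∀ i j (h : i ≤ j) (x : E i), ιc j (ι i j h x) = ιc i x)
    (htrans : ∀ i j k (hij : i ≤ j) (hjk : j ≤ k) (x : E i),
      ι j k hjk (ι i j hij x) = ι i k (hij.trans hjk) x)
    (hid : ∀ i (x : E i), ι i i le_rfl x = x)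
    (hdense : Dense (⋃ i, Set.range (ιc i)))
    (hnorm : ∀ i (x : E i), ‖ιc i x‖ = ⨅ j : {j // i ≤ j}, ‖ι i j.1 j.2 x‖)
    (hsurj : ∀ i j (h : i ≤ j), Function.Surjective (ι i j h))
    (φ : F →L[ℝ] W) (hφ : ‖φ‖ ≤ 1) (ε : ℝ) (hε : 0 < ε) :
    ∃ (i : I) (ψ : F →L[ℝ] E i), ‖ψ‖ ≤ 1 ∧ ‖φ - (ιc i).comp ψ‖ ≤ ε := by
  classical
  obtain ⟨δ, hδ0, hδε, hδ1⟩ : ∃ δ : ℝ, 0 < δ ∧ δ ≤ ε / 5 ∧ δ ≤ 1 :=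
    ⟨min (ε / 5) 1, lt_min (by linarith) one_pos, min_le_left _ _, min_le_right _ _⟩
  -- basis of F and the operator-norm constant
  let b : Module.Basis (Fin (Module.finrank ℝ F)) ℝ F := Module.finBasis ℝ F
  obtain ⟨C, hC0, hCle⟩ := b.exists_opNorm_le (F := W)
  -- approximate each basis vector by an element of some stage
  have hchoice : ∀ k, ∃ (i : I) (x : E i), ‖φ (b k) - ιc i x‖ ≤ δ / C := by
    intro k
    have hmem := hdense (φ (b k))
    rw [Metric.mem_closure_iff] at hmem
    obtain ⟨y, hy, hdist⟩ := hmem (δ / C) (div_pos hδ0 hC0)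
    obtain ⟨_, ⟨i, rfl⟩, x, rfl⟩ := hy
    exact ⟨i, x, by rw [← dist_eq_norm]; exact hdist.le⟩
  choose ik xk hxk using hchoice
  -- a common upper bound for the stages
  obtain ⟨i₀, hi₀⟩ := (Finset.univ.image ik).exists_le
  have hik : ∀ k, ik k ≤ i₀ := fun k =>
    hi₀ _ (Finset.mem_image_of_mem ik (Finset.mem_univ k))
  -- the approximating map into stage i₀
  obtain ⟨ψ₀, hψ₀b⟩ :
      ∃ ψ₀ : F →L[ℝ] E i₀, ∀ k, ψ₀ (b k) = ι (ik k) i₀ (hik k) (xk k) :=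
    ⟨LinearMap.toContinuousLinearMap (b.constr ℝ fun k => ι (ik k) i₀ (hik k) (xk k)),
      fun k => b.constr_basis ℝ _ k⟩
  -- error bound for ψ₀
  have herr : ‖φ - (ιc i₀).comp ψ₀‖ ≤ δ := by
    have : ∀ k, ‖(φ - (ιc i₀).comp ψ₀) (b k)‖ ≤ δ / C := by
      intro k
      have : (φ - (ιc i₀).comp ψ₀) (b k) = φ (b k) - ιc (ik k) (xk k) := by
        rw [ContinuousLinearMap.sub_apply, ContinuousLinearMap.comp_apply, hψ₀b k, hcomp]
      rw [this]
      exact hxk k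
    have h := hCle (le_of_lt (div_pos hδ0 hC0)) this
    calc ‖φ - (ιc i₀).comp ψ₀‖ ≤ C * (δ / C) := h
      _ = δ := by field_simp
  obtain ⟨g, hg⟩ : ∃ g : F →L[ℝ] W, g = (ιc i₀).comp ψ₀ := ⟨_, rfl⟩
  rw [← hg] at herr
  have hgnorm : ‖g‖ ≤ 1 + δ := by
    calc ‖g‖ = ‖φ - (φ - g)‖ := by rw [sub_sub_cancel]
      _ ≤ ‖φ‖ + ‖φ - g‖ := norm_sub_le _ _
      _ ≤ 1 + δ := add_le_add hφ herr
  -- push forward to reduce the norm, using compactness of the sphere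
  have hNE : Nonempty {j // i₀ ≤ j} := ⟨⟨i₀, le_rfl⟩⟩
  set U : {j // i₀ ≤ j} → Set F := fun j => {x | ‖ι i₀ j.1 j.2 (ψ₀ x)‖ < 1 + 2 * δ} with hU
  have hUmem : ∀ j x, x ∈ U j ↔ ‖ι i₀ j.1 j.2 (ψ₀ x)‖ < 1 + 2 * δ := fun _ _ => Iff.rfl
  have hUopen : ∀ j, IsOpen (U j) := by
    intro j
    exact isOpen_lt (((ι i₀ j.1 j.2).comp ψ₀).continuous.norm) continuous_const
  have hcover : Metric.sphere (0 : F) 1 ⊆ ⋃ j, U j := by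
    intro x hx
    have hx1 : ‖x‖ = 1 := by simpa using hx
    have hgx : ‖g x‖ < 1 + 2 * δ := by
      calc ‖g x‖ ≤ ‖g‖ * ‖x‖ := g.le_opNorm x
        _ ≤ 1 + δ := by rw [hx1, mul_one]; exact hgnorm
        _ < 1 + 2 * δ := by linarith
    have hiInf : (⨅ j : {j // i₀ ≤ j}, ‖ι i₀ j.1 j.2 (ψ₀ x)‖) < 1 + 2 * δ := by
      rw [← hnorm]; simpa [hg] using hgx
    obtain ⟨j, hj⟩ := exists_lt_of_ciInf_lt hiInf
    exact Set.mem_iUnion.mpr ⟨j, (hUmem j x).mpr hj⟩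
  obtain ⟨t, ht⟩ := (isCompact_sphere (0 : F) 1).elim_finite_subcover U hUopen hcover
  obtain ⟨M, hM⟩ := (t.image Subtype.val).exists_le
  obtain ⟨j₁, hMj₁, hi₀j₁⟩ := exists_ge_ge M i₀
  have hbound : ∀ x, ‖x‖ = 1 → ‖ι i₀ j₁ hi₀j₁ (ψ₀ x)‖ ≤ 1 + 2 * δ := by
    intro x hx1
    have hxs : x ∈ Metric.sphere (0 : F) 1 := by simpa using hx1
    obtain ⟨j, hjt, hjx'⟩ := Set.mem_iUnion₂.mp (ht hxs)
    have hjx := (hUmem j x).mp hjx'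
    have hjM : j.1 ≤ j₁ := le_trans (hM j.1 (Finset.mem_image_of_mem _ hjt)) hMj₁
    calc ‖ι i₀ j₁ hi₀j₁ (ψ₀ x)‖ = ‖ι j.1 j₁ hjM (ι i₀ j.1 j.2 (ψ₀ x))‖ := by
          rw [htrans]
      _ ≤ ‖ι i₀ j.1 j.2 (ψ₀ x)‖ := hι1 _ _ _ _
      _ ≤ 1 + 2 * δ := le_of_lt hjx
  have hopnorm : ‖(ι i₀ j₁ hi₀j₁).comp ψ₀‖ ≤ 1 + 2 * δ :=
    ContinuousLinearMap.opNorm_le_of_unit_norm (by linarith) hbound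
  -- the final contraction
  have hc : (0:ℝ) < 1 + 2 * δ := by linarith
  obtain ⟨c, hcdef⟩ : ∃ c : ℝ, c = (1 + 2 * δ)⁻¹ := ⟨_, rfl⟩
  have hc0 : 0 < c := hcdef ▸ inv_pos.mpr hc
  refine ⟨j₁, c • (ι i₀ j₁ hi₀j₁).comp ψ₀, ?_, ?_⟩
  · calc ‖c • (ι i₀ j₁ hi₀j₁).comp ψ₀‖ ≤ ‖c‖ * ‖(ι i₀ j₁ hi₀j₁).comp ψ₀‖ :=
          (ι i₀ j₁ hi₀j₁).comp ψ₀ |>.opNorm_smul_le c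
      _ ≤ c * (1 + 2 * δ) := by
          rw [Real.norm_eq_abs, abs_of_pos hc0]
          exact mul_le_mul_of_nonneg_left hopnorm hc0.le
      _ = 1 := by rw [hcdef]; exact inv_mul_cancel₀ (by linarith)
  · have hkey : (ιc j₁).comp (c • (ι i₀ j₁ hi₀j₁).comp ψ₀) = c • g := by
      ext x
      simp [hg, hcomp]
    rw [hkey]
    have hsplit : φ - c • g = (φ - g) + (1 - c) • g := by
      rw [sub_smul, one_smul]
      abel
    rw [hsplit]
    have h1c : 1 - c = 2 * δ / (1 + 2 * δ) := by
      rw [hcdef]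
      field_simp
      ring
    have h1c0 : 0 ≤ 1 - c := by
      rw [h1c]
      positivity
    have h1cle : 1 - c ≤ 2 * δ := by
      rw [h1c, div_le_iff₀ (by linarith : (0:ℝ) < 1 + 2 * δ)]
      nlinarith
    calc ‖(φ - g) + (1 - c) • g‖ ≤ ‖φ - g‖ + ‖(1 - c) • g‖ := norm_add_le _ _
      _ ≤ ‖φ - g‖ + (1 - c) * ‖g‖ := by
          refine add_le_add_right ((g.opNorm_smul_le (1-c)).trans_eq ?_) _
          rw [Real.norm_eq_abs, abs_of_nonneg h1c0]
      _ ≤ δ + 2 * δ * (1 + δ) := by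
          refine add_le_add herr ?_
          exact mul_le_mul h1cle hgnorm (norm_nonneg _) (by linarith)
      _ ≤ ε := by
          have h2 : δ * δ ≤ δ := by nlinarith [hδ1, hδ0]
          linarith only [hδε, h2]
end

section
/- Let E be a Banach space and (E_i)_{i ∈ I} a family of closed linear subspaces of E indexed by a directed set I, directed under inclusion (E_i ⊆ E_j for i ≤ j) and with ⋃_i E_i dense in E. Let F ⊆ E be a finite-dimensional linear subspace, with inclusion map incl : F → E. Then for every ε > 0 there exist i ∈ I and a linear contraction T : F → E (that is, ‖T(x)‖ ≤ ‖x‖ for all x ∈ F, where F carries the norm induced from E) whose image is contained in E_i and which satisfies ‖T(x) − x‖ ≤ ε‖x‖ for all x ∈ F. -/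
set_option maxHeartbeats 1000000
set_option synthInstance.maxHeartbeats 400000


/-- Let `E` be a Banach space and `(V i)` a directed family of closed
subspaces with dense union, and `F ⊆ E` a finite-dimensional subspace (with the
induced norm). Then for every `ε > 0` there are `i` and a linear contraction
`T : F → E` with image contained in `V i` satisfying `‖T x − x‖ ≤ ε ‖x‖` for all
`x ∈ F` (metric-enriched finite generation of finite-dimensional Banach spaces with
respect to filtered colimits of isometric embeddings). -/
theorem stmt12
    {E : Type*} [NormedAddCommGroup E] [NormedSpace ℝ E] [CompleteSpace E]
    {I : Type*} [Preorder I] [IsDirected I (· ≤ ·)] [Nonempty I]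
    (V : I → Submodule ℝ E)
    (hclosed : ∀ i, IsClosed (V i : Set E))
    (hmono : ∀ i j, i ≤ j → V i ≤ V j)
    (hdense : Dense (⋃ i, (V i : Set E)))
    (F : Submodule ℝ E) [FiniteDimensional ℝ F]
    (ε : ℝ) (hε : 0 < ε) :
    ∃ (i : I) (T : F →L[ℝ] E),
      (∀ x : F, ‖T x‖ ≤ ‖x‖) ∧
      (∀ x : F, T x ∈ V i) ∧
      (∀ x : F, ‖T x - (x : E)‖ ≤ ε * ‖x‖) := by
  classical
  set δ := ε / 2 with hδdef
  have hδ : 0 < δ := by positivity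
  set n := Module.finrank ℝ F with hn
  set b := Module.finBasis ℝ F with hb
  let c : Fin n → (F →L[ℝ] ℝ) := fun j => LinearMap.toContinuousLinearMap (b.coord j)
  set C := ∑ j : Fin n, ‖c j‖ with hC
  have hC0 : 0 ≤ C := Finset.sum_nonneg fun j _ => ContinuousLinearMap.opNorm_nonneg _
  set η := δ / (C + 1) with hη
  have hη0 : 0 < η := by positivity
  -- approximate each basis vector
  have happrox : ∀ j : Fin n, ∃ i : I, ∃ v ∈ V i, ‖v - (b j : E)‖ < η := by
    intro j
    obtain ⟨v, hvb, hvs⟩ := Metric.dense_iff.mp hdense (b j : E) η hη0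
    obtain ⟨s, ⟨i, rfl⟩, hvmem⟩ := hvs
    refine ⟨i, v, hvmem, ?_⟩
    have := Metric.mem_ball.mp hvb
    rwa [dist_eq_norm] at this
  choose idx v hvV hvclose using happrox
  obtain ⟨i, hi⟩ := (Finset.univ.image idx).exists_le
  have hvVi : ∀ j, v j ∈ V i := fun j =>
    hmono _ _ (hi _ (Finset.mem_image_of_mem idx (Finset.mem_univ j))) (hvV j)
  -- the approximating map
  set S : F →L[ℝ] E := ∑ j : Fin n, (c j).smulRight (v j) with hS
  have hSx : ∀ x : F, S x = ∑ j : Fin n, b.coord j x • v j := by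
    intro x
    simp [hS, ContinuousLinearMap.sum_apply, c]
  have hSmem : ∀ x : F, S x ∈ V i := by
    intro x
    rw [hSx]
    exact Submodule.sum_mem _ fun j _ => Submodule.smul_mem _ _ (hvVi j)
  have hxrepr : ∀ x : F, (x : E) = ∑ j : Fin n, b.coord j x • (b j : E) := by
    intro x
    conv_lhs => rw [← b.sum_repr x]
    push_cast
    rfl
  have hCη : C * η ≤ δ := by
    rw [hη, mul_comm, div_mul_eq_mul_div, div_le_iff₀ (by positivity)]
    nlinarith
  have hkey : ∀ x : F, ‖S x - (x : E)‖ ≤ δ * ‖x‖ := by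
    intro x
    have hrepr : S x - (x : E) = ∑ j : Fin n, b.coord j x • (v j - (b j : E)) := by
      rw [hSx, hxrepr x, ← Finset.sum_sub_distrib]
      exact Finset.sum_congr rfl fun j _ => (smul_sub _ _ _).symm
    rw [hrepr]
    calc ‖∑ j : Fin n, b.coord j x • (v j - (b j : E))‖
        ≤ ∑ j : Fin n, ‖b.coord j x • (v j - (b j : E))‖ := norm_sum_le _ _
      _ ≤ ∑ j : Fin n, ‖c j‖ * ‖x‖ * η := by
          refine Finset.sum_le_sum fun j _ => ?_
          rw [norm_smul]
          have h1 : ‖b.coord j x‖ ≤ ‖c j‖ * ‖x‖ := (c j).le_opNorm x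
          exact mul_le_mul h1 (hvclose j).le (norm_nonneg _) (by positivity)
      _ = C * ‖x‖ * η := by rw [← Finset.sum_mul, ← Finset.sum_mul]
      _ = (C * η) * ‖x‖ := by ring
      _ ≤ δ * ‖x‖ := mul_le_mul_of_nonneg_right hCη (norm_nonneg _)
  have h1δ : (0:ℝ) < 1 + δ := by linarith
  have hSnorm : ∀ x : F, ‖S x‖ ≤ (1 + δ) * ‖x‖ := by
    intro x
    have hxn : ‖(x:E)‖ = ‖x‖ := rfl
    calc ‖S x‖ = ‖(S x - (x:E)) + (x:E)‖ := by congr 1; abel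
      _ ≤ ‖S x - (x:E)‖ + ‖(x:E)‖ := norm_add_le _ _
      _ ≤ δ * ‖x‖ + ‖x‖ := by rw [hxn]; exact add_le_add (hkey x) le_rfl
      _ = (1 + δ) * ‖x‖ := by ring
  set T : F →L[ℝ] E := (1 + δ)⁻¹ • S with hT
  have hTx : ∀ x : F, T x = (1 + δ)⁻¹ • S x := fun x => rfl
  refine ⟨i, T, ?_, ?_, ?_⟩
  · intro x
    rw [hTx, norm_smul, Real.norm_eq_abs, abs_of_pos (inv_pos.mpr h1δ),
      inv_mul_le_iff₀ h1δ]
    exact hSnorm x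
  · intro x
    rw [hTx]
    exact Submodule.smul_mem _ _ (hSmem x)
  · intro x
    have e1 : T x - (x:E) = (T x - S x) + (S x - (x:E)) := by abel
    have e2 : T x - S x = ((1 + δ)⁻¹ - 1) • S x := by
      rw [hTx, sub_smul, one_smul]
    have h2 : ‖((1 + δ)⁻¹ - 1 : ℝ)‖ = δ / (1 + δ) := by
      rw [Real.norm_eq_abs, abs_of_nonpos (by
        rw [sub_nonpos]
        exact inv_le_one_of_one_le₀ (by linarith))]
      field_simp
      ring
    have h3 : ‖T x - S x‖ ≤ δ * ‖x‖ := by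
      rw [e2, norm_smul, h2]
      calc δ / (1 + δ) * ‖S x‖ ≤ δ / (1 + δ) * ((1 + δ) * ‖x‖) :=
            mul_le_mul_of_nonneg_left (hSnorm x) (by positivity)
        _ = δ * ‖x‖ := by field_simp
    calc ‖T x - (x:E)‖ ≤ ‖T x - S x‖ + ‖S x - (x:E)‖ := by
          rw [e1]; exact norm_add_le _ _
      _ ≤ δ * ‖x‖ + δ * ‖x‖ := add_le_add h3 (hkey x)
      _ = ε * ‖x‖ := by rw [hδdef]; ring
end

section
/- For each integer i ≥ 2, let ‖·‖_i denote the norm on ℝ² whose closed unit ball is the convex hull of the 2i-th roots of unity (viewing ℝ² as ℂ, the points (cos(πk/i), sin(πk/i)) for k = 0, …, 2i−1), and let ‖·‖ denote the Euclidean norm on ℝ². Then: (i) since the convex hull of the 2i-th roots of unity is contained in the closed Euclidean unit disk, the identity map (ℝ², ‖·‖_i) → (ℝ², ‖·‖) is a linear contraction for every i, and ‖x‖ = inf_{j ≥ i} ‖x‖_j = lim_j ‖x‖_j for every x ∈ ℝ², so these data present (ℝ², ‖·‖) as a filtered colimit of the (ℝ², ‖·‖_i) in the category of Banach spaces and linear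 contractions; but (ii) for every i there is no linear contraction ψ : (ℝ², ‖·‖) → (ℝ², ‖·‖_i) whose composition with the identity map (ℝ², ‖·‖_i) → (ℝ², ‖·‖) equals the identity of ℝ²; equivalently, for every i ≥ 2 there exists x ∈ ℝ² with ‖x‖ = 1 and ‖x‖_i > 1. -/
open Real Filter Pointwise

/-- The Euclidean norm on `ℝ²`. -/
noncomputable def euclNorm (x : ℝ × ℝ) : ℝ := Real.sqrt (x.1 ^ 2 + x.2 ^ 2)

/-- The convex hull of the `2i`-th roots of unity in `ℝ² ≅ ℂ`, i.e. of the points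
`(cos (πk/i), sin (πk/i))` for `k = 0, …, 2i − 1`. -/
noncomputable def polyBall (i : ℕ) : Set (ℝ × ℝ) :=
  convexHull ℝ {p : ℝ × ℝ | ∃ k : Fin (2 * i),
    p = (Real.cos ((k : ℝ) * Real.pi / (i : ℝ)), Real.sin ((k : ℝ) * Real.pi / (i : ℝ)))}

/-- The norm on `ℝ²` whose closed unit ball is `polyBall i`: its Minkowski gauge
functional. -/
noncomputable def polyNorm (i : ℕ) (x : ℝ × ℝ) : ℝ := gauge (polyBall i) x

lemma euclNorm_zero : euclNorm 0 = 0 := by simp [euclNorm]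


lemma euclNorm_nonneg (x : ℝ × ℝ) : 0 ≤ euclNorm x := Real.sqrt_nonneg _

lemma euclNorm_cos_sin (r θ : ℝ) (hr : 0 ≤ r) :
    euclNorm (r * Real.cos θ, r * Real.sin θ) = r := by
  unfold euclNorm
  have h : (r * Real.cos θ) ^ 2 + (r * Real.sin θ) ^ 2 = r ^ 2 := by
    have := Real.sin_sq_add_cos_sq θ; nlinarith
  simp only [h]
  exact Real.sqrt_sq hr

lemma euclNorm_smul (t : ℝ) (x : ℝ × ℝ) : euclNorm (t • x) = |t| * euclNorm x := by
  unfold euclNorm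
  have : (t • x).1 ^ 2 + (t • x).2 ^ 2 = t ^ 2 * (x.1 ^ 2 + x.2 ^ 2) := by
    simp [Prod.smul_fst, Prod.smul_snd, smul_eq_mul]; ring
  rw [this, Real.sqrt_mul (sq_nonneg t), Real.sqrt_sq_eq_abs]

lemma euclNorm_pos {x : ℝ × ℝ} (hx : x ≠ 0) : 0 < euclNorm x := by
  have h : x.1 ≠ 0 ∨ x.2 ≠ 0 := by
    by_contra h; push_neg at h
    exact hx (Prod.ext h.1 h.2)
  apply Real.sqrt_pos.2
  rcases h with h | h
  · have : 0 < x.1 ^ 2 := by positivity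
    nlinarith [sq_nonneg x.2]
  · have : 0 < x.2 ^ 2 := by positivity
    nlinarith [sq_nonneg x.1]

lemma euclNorm_add_le (u v : ℝ × ℝ) : euclNorm (u + v) ≤ euclNorm u + euclNorm v := by
  have key : ∀ p : ℝ × ℝ, euclNorm p = ‖(⟨p.1, p.2⟩ : ℂ)‖ := by
    intro p
    rw [Complex.norm_def, Complex.normSq_mk]
    unfold euclNorm; ring_nf
  rw [key, key, key]
  have : (⟨(u + v).1, (u + v).2⟩ : ℂ) = ⟨u.1, u.2⟩ + ⟨v.1, v.2⟩ := by
    apply Complex.ext <;> simp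
  rw [this]
  exact norm_add_le _ _


/-- any integer angle multiple gives a vertex -/
lemma mem_vertexSet {i : ℕ} (hi : 1 ≤ i) (m : ℤ) :
    (Real.cos ((m : ℝ) * Real.pi / (i : ℝ)), Real.sin ((m : ℝ) * Real.pi / (i : ℝ))) ∈
      {p : ℝ × ℝ | ∃ k : Fin (2 * i),
        p = (Real.cos ((k : ℝ) * Real.pi / (i : ℝ)), Real.sin ((k : ℝ) * Real.pi / (i : ℝ)))} := by
  have h2i : 0 < (2 * i : ℤ) := by positivity
  set k : ℤ := m % (2 * i) with hk
  have hk0 : 0 ≤ k := Int.emod_nonneg m (by positivity)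
  have hklt : k < 2 * i := Int.emod_lt_of_pos m h2i
  set t : ℤ := m / (2 * i) with ht
  have hmt : (k : ℤ) + 2 * i * t = m := Int.emod_add_mul_ediv m (2 * i)
  have hi0 : (i : ℝ) ≠ 0 := by positivity
  have hang : (m : ℝ) * Real.pi / (i : ℝ) = (k : ℝ) * Real.pi / (i : ℝ) + t * (2 * Real.pi) := by
    have : (m : ℝ) = (k : ℝ) + 2 * i * t := by exact_mod_cast hmt.symm
    rw [this]; field_simp
  refine ⟨⟨k.toNat, ?_⟩, ?_⟩
  · omega
  · have hcast : ((⟨k.toNat, by omega⟩ : Fin (2 * i)) : ℝ) = (k : ℝ) := by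
      simp only [Fin.val_mk]
      exact_mod_cast Int.toNat_of_nonneg hk0
    rw [hcast, hang, Real.cos_add_int_mul_two_pi, Real.sin_add_int_mul_two_pi]
lemma convex_combo3 {s : Set (ℝ × ℝ)} (hs : Convex ℝ s) {u v w : ℝ × ℝ}
    (hu : u ∈ s) (hv : v ∈ s) (hw : w ∈ s) {a b c : ℝ}
    (ha : 0 ≤ a) (hb : 0 ≤ b) (hc : 0 ≤ c) (habc : a + b + c = 1) :
    a • u + b • v + c • w ∈ s := by
  rcases eq_or_lt_of_le hc with rfl | hc'
  · simpa using hs hu hv ha hb (by linarith)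
  · have hab : a + b = 1 - c := by linarith
    rcases eq_or_lt_of_le (by linarith : (0:ℝ) ≤ a + b) with h0 | hpos
    · have ha0 : a = 0 := by linarith
      have hb0 : b = 0 := by linarith
      have hc1 : c = 1 := by linarith
      simpa [ha0, hb0, hc1] using hw
    · set t := a + b with htdef
      have hq : (a / t) • u + (b / t) • v ∈ s :=
        hs hu hv (div_nonneg ha hpos.le) (div_nonneg hb hpos.le)
          (by field_simp; exact htdef.symm)
      have := hs hq hw hpos.le hc (by linarith)
      have heq : t • ((a / t) • u + (b / t) • v) + c • w = a • u + b • v + c • w := by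
        rw [smul_add, smul_smul, smul_smul, mul_div_cancel₀ _ (ne_of_gt hpos),
          mul_div_cancel₀ _ (ne_of_gt hpos)]
      rwa [heq] at this

lemma convex_disk : Convex ℝ {x : ℝ × ℝ | euclNorm x ≤ 1} := by
  intro x hx y hy a b ha hb hab
  simp only [Set.mem_setOf_eq] at *
  calc euclNorm (a • x + b • y) ≤ euclNorm (a • x) + euclNorm (b • y) := euclNorm_add_le _ _
    _ = |a| * euclNorm x + |b| * euclNorm y := by rw [euclNorm_smul, euclNorm_smul]
    _ ≤ a * 1 + b * 1 := by
        rw [abs_of_nonneg ha, abs_of_nonneg hb]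
        have h1 : a * euclNorm x ≤ a * 1 := mul_le_mul_of_nonneg_left hx ha
        have h2 : b * euclNorm y ≤ b * 1 := mul_le_mul_of_nonneg_left hy hb
        linarith
    _ = 1 := by linarith

lemma polyBall_subset (i : ℕ) : polyBall i ⊆ {x : ℝ × ℝ | euclNorm x ≤ 1} := by
  apply convexHull_min _ convex_disk
  rintro p ⟨k, rfl⟩
  have : euclNorm (Real.cos ((k : ℝ) * Real.pi / (i : ℝ)), Real.sin ((k : ℝ) * Real.pi / (i : ℝ))) = 1 := by
    have := euclNorm_cos_sin 1 ((k : ℝ) * Real.pi / (i : ℝ)) zero_le_one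
    simpa using this
  simp [Set.mem_setOf_eq, this]

lemma zero_mem_polyBall {i : ℕ} (hi : 1 ≤ i) : (0 : ℝ × ℝ) ∈ polyBall i := by
  have h0 := mem_vertexSet hi 0
  have h1 := mem_vertexSet hi (i : ℤ)
  have hv0 := subset_convexHull ℝ _ h0
  have hv1 := subset_convexHull ℝ _ h1
  have hmem := (convex_convexHull ℝ _) hv0 hv1 (by norm_num : (0:ℝ) ≤ 1/2)
    (by norm_num : (0:ℝ) ≤ 1/2) (by norm_num)
  have hi0 : (i : ℝ) ≠ 0 := by positivity
  have e0 : ((0 : ℤ) : ℝ) * Real.pi / (i : ℝ) = 0 := by simp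
  have e1 : ((i : ℤ) : ℝ) * Real.pi / (i : ℝ) = Real.pi := by field_simp; simp
  rw [e0, e1] at hmem
  simp only [Real.cos_zero, Real.sin_zero, Real.cos_pi, Real.sin_pi] at hmem
  unfold polyBall
  convert hmem using 1
  simp [Prod.ext_iff]

lemma polyBall_convex (i : ℕ) : Convex ℝ (polyBall i) := convex_convexHull ℝ _

lemma vertex_mem_polyBall {i : ℕ} (hi : 1 ≤ i) (m : ℤ) :
    (Real.cos ((m : ℝ) * Real.pi / (i : ℝ)), Real.sin ((m : ℝ) * Real.pi / (i : ℝ))) ∈ polyBall i :=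
  subset_convexHull ℝ _ (mem_vertexSet hi m)

lemma mem_polyBall_of_le {i : ℕ} (hi : 2 ≤ i) {x : ℝ × ℝ}
    (hx : euclNorm x ≤ Real.cos (Real.pi / (2 * i))) : x ∈ polyBall i := by
  have hi1 : 1 ≤ i := le_trans one_le_two hi
  have hiR : (2:ℝ) ≤ (i:ℝ) := by exact_mod_cast hi
  have hi0 : (0:ℝ) < (i:ℝ) := by linarith
  have hpi := Real.pi_pos
  set α : ℝ := Real.pi / i with hαdef
  have hα0 : 0 < α := by positivity
  have hαle : α ≤ Real.pi / 2 := by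
    rw [hαdef, div_le_div_iff₀ hi0 two_pos]
    nlinarith
  have hhalf : α / 2 = Real.pi / (2 * i) := by rw [hαdef]; ring
  rcases eq_or_ne x 0 with rfl | hx0
  · exact zero_mem_polyBall hi1
  set r := euclNorm x with hrdef
  have hr : 0 < r := euclNorm_pos hx0
  set z : ℂ := ⟨x.1, x.2⟩ with hzdef
  have hz : z ≠ 0 := by
    intro h
    apply hx0
    have h1 : x.1 = 0 := by rw [show x.1 = z.re from rfl, h, Complex.zero_re]
    have h2 : x.2 = 0 := by rw [show x.2 = z.im from rfl, h, Complex.zero_im]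
    exact Prod.ext h1 h2
  have habs : ‖z‖ = r := by
    rw [hrdef]; unfold euclNorm
    rw [Complex.norm_def, Complex.normSq_mk]; ring_nf
  set θ := Complex.arg z with hθdef
  have h1 : x.1 = r * Real.cos θ := by
    rw [hθdef, Complex.cos_arg hz, habs, show z.re = x.1 from rfl,
      mul_div_cancel₀ _ (ne_of_gt hr)]
  have h2 : x.2 = r * Real.sin θ := by
    rw [hθdef, Complex.sin_arg, habs, show z.im = x.2 from rfl,
      mul_div_cancel₀ _ (ne_of_gt hr)]
  set k : ℤ := ⌊θ / α⌋ with hkdef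
  have hAθ : (k : ℝ) * α ≤ θ := (le_div_iff₀ hα0).1 (Int.floor_le _)
  have hθB : θ < ((k : ℝ) + 1) * α := by
    have := Int.lt_floor_add_one (θ / α)
    rw [div_lt_iff₀ hα0] at this
    exact_mod_cast this
  set A : ℝ := (k : ℝ) * α with hAdef
  set B : ℝ := A + α with hBdef
  have hθB' : θ < B := by rw [hBdef, hAdef]; linarith [hθB]
  have hs : 0 < Real.sin α := Real.sin_pos_of_pos_of_lt_pi hα0 (by linarith)
  have hsin_ne : Real.sin α ≠ 0 := ne_of_gt hs
  have hsBθ : 0 ≤ Real.sin (B - θ) :=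
    Real.sin_nonneg_of_nonneg_of_le_pi (by linarith) (by rw [hBdef]; nlinarith)
  have hsθA : 0 ≤ Real.sin (θ - A) :=
    Real.sin_nonneg_of_nonneg_of_le_pi (by linarith) (by nlinarith)
  set a := r * Real.sin (B - θ) / Real.sin α with hadef
  set b := r * Real.sin (θ - A) / Real.sin α with hbdef
  have ha : 0 ≤ a := div_nonneg (mul_nonneg hr.le hsBθ) hs.le
  have hb : 0 ≤ b := div_nonneg (mul_nonneg hr.le hsθA) hs.le
  have hc0 : 0 < Real.cos (α / 2) := by
    apply Real.cos_pos_of_mem_Ioo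
    constructor <;> [linarith; nlinarith]
  have hab : a + b ≤ 1 := by
    rw [hadef, hbdef, ← add_div, div_le_one hs]
    have e1 : Real.sin (B - θ) + Real.sin (θ - A)
        = 2 * Real.sin (α/2) * Real.cos (A + α/2 - θ) := by
      have hss := Real.sin_sub_sin (B - θ) (A - θ)
      rw [show (B - θ - (A - θ)) / 2 = α/2 from by rw [hBdef]; ring,
        show (B - θ + (A - θ)) / 2 = A + α/2 - θ from by rw [hBdef]; ring] at hss
      rw [show θ - A = -(A - θ) by ring, Real.sin_neg]
      linarith
    have e2 : Real.sin α = 2 * Real.sin (α/2) * Real.cos (α/2) := by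
      nth_rewrite 1 [show α = 2 * (α/2) by ring]
      rw [Real.sin_two_mul]
    have hsh : 0 < Real.sin (α/2) :=
      Real.sin_pos_of_pos_of_lt_pi (by linarith) (by nlinarith)
    have hcos1 : Real.cos (A + α/2 - θ) ≤ 1 := Real.cos_le_one _
    have hxr : r ≤ Real.cos (α/2) := by rw [hhalf]; exact hx
    calc r * Real.sin (B-θ) + r * Real.sin (θ-A)
        = r * (Real.sin (B-θ) + Real.sin (θ-A)) := by ring
      _ = r * (2 * Real.sin (α/2) * Real.cos (A + α/2 - θ)) := by rw [e1]
      _ ≤ Real.cos (α/2) * (2 * Real.sin (α/2) * 1) := by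
          have hh1 : r * (2 * Real.sin (α/2) * Real.cos (A + α/2 - θ))
              ≤ r * (2 * Real.sin (α/2) * 1) := by
            apply mul_le_mul_of_nonneg_left _ hr.le
            exact mul_le_mul_of_nonneg_left hcos1 (mul_nonneg two_pos.le hsh.le)
          have hh2 : r * (2 * Real.sin (α/2) * 1) ≤ Real.cos (α/2) * (2 * Real.sin (α/2) * 1) := by
            exact mul_le_mul_of_nonneg_right hxr (mul_nonneg (mul_nonneg two_pos.le hsh.le) zero_le_one)
          linarith
      _ = Real.sin α := by rw [e2]; ring
  have hsubA : Real.sin α = Real.sin B * Real.cos A - Real.cos B * Real.sin A := by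
    rw [show α = B - A by rw [hBdef]; ring, Real.sin_sub]
  have hcomp1 : a * Real.cos A + b * Real.cos B = r * Real.cos θ := by
    rw [hadef, hbdef, div_mul_eq_mul_div, div_mul_eq_mul_div, ← add_div,
      div_eq_iff hsin_ne, Real.sin_sub, Real.sin_sub, hsubA]
    ring
  have hcomp2 : a * Real.sin A + b * Real.sin B = r * Real.sin θ := by
    rw [hadef, hbdef, div_mul_eq_mul_div, div_mul_eq_mul_div, ← add_div,
      div_eq_iff hsin_ne, Real.sin_sub, Real.sin_sub, hsubA]
    ring
  have hvA := vertex_mem_polyBall hi1 k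
  have hvB := vertex_mem_polyBall hi1 (k + 1)
  have hAang : ((k : ℤ) : ℝ) * Real.pi / (i:ℝ) = A := by rw [hAdef, hαdef]; ring
  have hBang : (((k + 1) : ℤ) : ℝ) * Real.pi / (i:ℝ) = B := by
    rw [hBdef, hAdef, hαdef]; push_cast; ring
  rw [hAang] at hvA
  rw [hBang] at hvB
  have hfinal : x = a • (Real.cos A, Real.sin A) + b • (Real.cos B, Real.sin B)
      + (1 - a - b) • (0 : ℝ × ℝ) := by
    apply Prod.ext
    · simp only [Prod.fst_add, Prod.smul_fst, smul_eq_mul, Prod.fst_zero, mul_zero, add_zero]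
      rw [h1, ← hcomp1]
    · simp only [Prod.snd_add, Prod.smul_snd, smul_eq_mul, Prod.snd_zero, mul_zero, add_zero]
      rw [h2, ← hcomp2]
  rw [hfinal]
  exact convex_combo3 (polyBall_convex i) hvA hvB (zero_mem_polyBall hi1)
    ha hb (by linarith) (by ring)

lemma cos_half_pos {i : ℕ} (hi : 2 ≤ i) : 0 < Real.cos (Real.pi / (2 * i)) := by
  have hpi := Real.pi_pos
  have hiR : (2:ℝ) ≤ (i:ℝ) := by exact_mod_cast hi
  apply Real.cos_pos_of_mem_Ioo
  constructor
  · have : 0 < Real.pi / (2 * (i:ℝ)) := by positivity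
    linarith
  · rw [div_lt_div_iff₀ (by linarith) two_pos]
    nlinarith

lemma mem_scaled {i : ℕ} (hi : 2 ≤ i) {x : ℝ × ℝ} (hx : x ≠ 0) :
    0 < euclNorm x / Real.cos (Real.pi / (2 * i)) ∧
      x ∈ (euclNorm x / Real.cos (Real.pi / (2 * i))) • polyBall i := by
  have hc := cos_half_pos hi
  have hr := euclNorm_pos hx
  have ht : 0 < euclNorm x / Real.cos (Real.pi / (2 * i)) := div_pos hr hc
  refine ⟨ht, ?_⟩
  rw [Set.mem_smul_set_iff_inv_smul_mem₀ (ne_of_gt ht)]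
  apply mem_polyBall_of_le hi
  rw [euclNorm_smul, abs_of_pos (inv_pos.mpr ht), inv_div,
    div_mul_cancel₀ _ (ne_of_gt hr)]



lemma polyNorm_le {i : ℕ} (hi : 2 ≤ i) (x : ℝ × ℝ) :
    polyNorm i x ≤ euclNorm x / Real.cos (Real.pi / (2 * i)) := by
  rcases eq_or_ne x 0 with rfl | hx
  · rw [polyNorm, gauge_zero, euclNorm_zero, zero_div]
  · obtain ⟨ht, hmem⟩ := mem_scaled hi hx
    exact gauge_le_of_mem ht.le hmem

lemma le_polyNorm_of_forall {i : ℕ} (hi : 2 ≤ i) {x : ℝ × ℝ} (hx : x ≠ 0) {m : ℝ}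
    (hm : ∀ r : ℝ, 0 < r → x ∈ r • polyBall i → m ≤ r) : m ≤ polyNorm i x := by
  rw [polyNorm, gauge_def]
  apply le_csInf
  · obtain ⟨ht, hmem⟩ := mem_scaled hi hx
    exact ⟨_, Set.mem_sep (Set.mem_Ioi.2 ht) hmem⟩
  · rintro b ⟨hb, hbm⟩
    exact hm b hb hbm

lemma le_polyNorm {i : ℕ} (hi : 2 ≤ i) (x : ℝ × ℝ) : euclNorm x ≤ polyNorm i x := by
  rcases eq_or_ne x 0 with rfl | hx
  · rw [euclNorm_zero]; exact gauge_nonneg _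
  · apply le_polyNorm_of_forall hi hx
    intro r hr hmem
    obtain ⟨y, hy, rfl⟩ := hmem
    rw [euclNorm_smul, abs_of_pos hr]
    have := polyBall_subset i hy
    simp only [Set.mem_setOf_eq] at this
    calc r * euclNorm y ≤ r * 1 := mul_le_mul_of_nonneg_left this hr.le
      _ = r := mul_one r

lemma tendsto_polyNorm (x : ℝ × ℝ) :
    Tendsto (fun j : ℕ => polyNorm j x) atTop (nhds (euclNorm x)) := by
  have hcos : Tendsto (fun j : ℕ => Real.cos (Real.pi / (2 * (j:ℝ)))) atTop (nhds 1) := by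
    have h0 : Tendsto (fun j : ℕ => Real.pi / (2 * (j:ℝ))) atTop (nhds 0) := by
      have := tendsto_const_div_atTop_nhds_zero_nat (Real.pi / 2)
      simp only [div_div] at this
      exact this
    have := (Real.continuous_cos.tendsto 0).comp h0
    simpa [Function.comp_def] using this
  have hupper : Tendsto (fun j : ℕ => euclNorm x / Real.cos (Real.pi / (2 * (j:ℝ)))) atTop
      (nhds (euclNorm x)) := by
    have := Tendsto.div (tendsto_const_nhds (x := euclNorm x) (f := atTop)) hcos one_ne_zero
    simpa [Pi.div_def] using this
  apply tendsto_of_tendsto_of_tendsto_of_le_of_le' tendsto_const_nhds hupper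
  · filter_upwards [eventually_ge_atTop 2] with j hj
    exact le_polyNorm hj x
  · filter_upwards [eventually_ge_atTop 2] with j hj
    exact polyNorm_le hj x

lemma iInf_polyNorm {i : ℕ} (hi : 2 ≤ i) (x : ℝ × ℝ) :
    euclNorm x = ⨅ j : {j : ℕ // i ≤ j}, polyNorm j.1 x := by
  have hbdd : BddBelow (Set.range fun j : {j : ℕ // i ≤ j} => polyNorm j.1 x) := by
    refine ⟨euclNorm x, ?_⟩
    rintro _ ⟨j, rfl⟩
    exact le_polyNorm (le_trans hi j.2) x
  apply le_antisymm
  · exact le_ciInf fun j => le_polyNorm (le_trans hi j.2) x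
  · by_contra h
    push_neg at h
    have hev := Tendsto.eventually_lt_const h (tendsto_polyNorm x)
    obtain ⟨j, hjlt, hji⟩ := (hev.and (eventually_ge_atTop i)).exists
    have := ciInf_le hbdd (⟨j, hji⟩ : {j : ℕ // i ≤ j})
    simp only at this
    linarith

lemma cos_mul_le {β u : ℝ} (hβ0 : 0 < β) (h1 : 1 ≤ u) (h2 : u * β ≤ Real.pi) :
    Real.cos (u * β) ≤ Real.cos β :=
  Real.cos_le_cos_of_nonneg_of_le_pi hβ0.le h2 (by nlinarith)

lemma exists_bad {i : ℕ} (hi : 2 ≤ i) :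
    ∃ x : ℝ × ℝ, euclNorm x = 1 ∧ 1 < polyNorm i x := by
  have hpi := Real.pi_pos
  have hiR : (2:ℝ) ≤ (i:ℝ) := by exact_mod_cast hi
  have hi0 : (0:ℝ) < (i:ℝ) := by linarith
  have hi0' : (i:ℝ) ≠ 0 := ne_of_gt hi0
  set β : ℝ := Real.pi / (2 * i) with hβ
  have hβ0 : 0 < β := by positivity
  have hc : 0 < Real.cos β := cos_half_pos hi
  have hβle : β ≤ Real.pi / 4 := by
    rw [hβ, div_le_div_iff₀ (by linarith) (by norm_num)]
    nlinarith
  have hclt : Real.cos β < 1 := by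
    have := Real.cos_lt_cos_of_nonneg_of_le_pi (le_refl 0) (by linarith : β ≤ Real.pi) hβ0
    rwa [Real.cos_zero] at this
  have h2iβ : 2 * (i:ℝ) * β = Real.pi := by rw [hβ]; field_simp
  set x : ℝ × ℝ := (Real.cos β, Real.sin β) with hxdef
  have hx1 : euclNorm x = 1 := by
    have := euclNorm_cos_sin 1 β zero_le_one
    simpa [hxdef] using this
  have hxne : x ≠ 0 := by
    intro h
    rw [h, euclNorm_zero] at hx1
    norm_num at hx1
  have hface : ∀ y ∈ polyBall i, Real.cos β * y.1 + Real.sin β * y.2 ≤ Real.cos β := by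
    apply convexHull_min
    · rintro p ⟨k, rfl⟩
      show Real.cos β * Real.cos ((k:ℝ) * Real.pi / (i:ℝ))
          + Real.sin β * Real.sin ((k:ℝ) * Real.pi / (i:ℝ)) ≤ Real.cos β
      have hdot : Real.cos β * Real.cos ((k:ℝ) * Real.pi / (i:ℝ))
          + Real.sin β * Real.sin ((k:ℝ) * Real.pi / (i:ℝ))
          = Real.cos ((k:ℝ) * Real.pi / (i:ℝ) - β) := by
        rw [Real.cos_sub]; ring
      rw [hdot]
      have hang : (k:ℝ) * Real.pi / (i:ℝ) - β = (2 * (k:ℝ) - 1) * β := by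
        rw [hβ]; field_simp
      rw [hang]
      have hKlt : (k:ℝ) ≤ 2 * (i:ℝ) - 1 := by
        have hk := k.isLt
        have : ((k:ℕ) : ℝ) + 1 ≤ ((2 * i : ℕ) : ℝ) := by exact_mod_cast hk
        push_cast at this
        linarith
      rcases Nat.eq_zero_or_pos (k : ℕ) with hk0 | hk1
    -- k = 0
      · rw [show (2 * (k:ℝ) - 1) * β = -β by rw [hk0]; push_cast; ring, Real.cos_neg]
      · have hK1 : (1:ℝ) ≤ (k:ℝ) := by exact_mod_cast hk1
        rcases le_or_gt ((k:ℕ) : ℝ) (i:ℝ) with hKi | hKi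
        · exact cos_mul_le hβ0 (by linarith) (by nlinarith)
        · have hKi' : (i:ℝ) + 1 ≤ ((k:ℕ) : ℝ) := by
            have : i < (k:ℕ) := by exact_mod_cast hKi
            exact_mod_cast this
          nth_rewrite 1 [← Real.cos_two_pi_sub]
          rw [show 2 * Real.pi - (2 * (k:ℝ) - 1) * β = (4 * (i:ℝ) - 2 * (k:ℝ) + 1) * β by
            rw [← h2iβ]; ring]
          exact cos_mul_le hβ0 (by nlinarith) (by nlinarith)
    · show Convex ℝ {w : ℝ × ℝ | Real.cos β * w.1 + Real.sin β * w.2 ≤ Real.cos β}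
      exact convex_halfSpace_le
        ⟨fun p q => by simp only [Prod.fst_add, Prod.snd_add]; ring,
          fun c p => by simp only [Prod.smul_fst, Prod.smul_snd, smul_eq_mul]; ring⟩ _
  have hlow : 1 / Real.cos β ≤ polyNorm i x := by
    apply le_polyNorm_of_forall hi hxne
    intro r hr hmem
    obtain ⟨y, hy, hyx⟩ := hmem
    have hfy := hface y hy
    have hone : Real.cos β * x.1 + Real.sin β * x.2 = 1 := by
      rw [hxdef]
      have := Real.sin_sq_add_cos_sq β
      nlinarith
    have hxy : Real.cos β * x.1 + Real.sin β * x.2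
        = r * (Real.cos β * y.1 + Real.sin β * y.2) := by
      rw [← hyx]
      simp only [Prod.smul_fst, Prod.smul_snd, smul_eq_mul]
      ring
    rw [div_le_iff₀ hc]
    have : r * (Real.cos β * y.1 + Real.sin β * y.2) ≤ r * Real.cos β :=
      mul_le_mul_of_nonneg_left hfy hr.le
    linarith [hone ▸ hxy]
  refine ⟨x, hx1, lt_of_lt_of_le ?_ hlow⟩
  rw [lt_div_iff₀ hc]
  linarith

/-- (i) `polyBall i` is contained in the closed Euclidean unit disk,
so the identity map `(ℝ², ‖·‖_i) → (ℝ², ‖·‖)` is a linear contraction for every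
`i ≥ 2`, and `‖x‖ = inf_{j ≥ i} ‖x‖_j = lim_j ‖x‖_j` for every `x`, presenting
`(ℝ², ‖·‖)` as a filtered colimit of the `(ℝ², ‖·‖_i)` in the category of Banach
spaces and linear contractions; but (ii) for every `i ≥ 2` there is no linear
contraction `ψ : (ℝ², ‖·‖) → (ℝ², ‖·‖_i)` whose composition with the identity map
`(ℝ², ‖·‖_i) → (ℝ², ‖·‖)` is the identity of `ℝ²`; equivalently, for every `i ≥ 2`
there is `x` with `‖x‖ = 1 < ‖x‖_i`. -/
theorem stmt13 :
    (∀ i : ℕ, 2 ≤ i → polyBall i ⊆ {x : ℝ × ℝ | euclNorm x ≤ 1}) ∧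
    (∀ i : ℕ, 2 ≤ i → ∀ x : ℝ × ℝ, euclNorm x ≤ polyNorm i x) ∧
    (∀ i : ℕ, 2 ≤ i → ∀ x : ℝ × ℝ,
      euclNorm x = ⨅ j : {j : ℕ // i ≤ j}, polyNorm j.1 x) ∧
    (∀ x : ℝ × ℝ,
      Tendsto (fun j : ℕ => polyNorm j x) atTop (nhds (euclNorm x))) ∧
    (∀ i : ℕ, 2 ≤ i →
      ¬ ∃ ψ : (ℝ × ℝ) →ₗ[ℝ] (ℝ × ℝ),
        (∀ x, polyNorm i (ψ x) ≤ euclNorm x) ∧ (∀ x, ψ x = x)) ∧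
    (∀ i : ℕ, 2 ≤ i → ∃ x : ℝ × ℝ, euclNorm x = 1 ∧ 1 < polyNorm i x) := by
  refine ⟨fun i _ => polyBall_subset i, fun i hi x => le_polyNorm hi x,
    fun i hi x => iInf_polyNorm hi x, tendsto_polyNorm, ?_, fun i hi => exists_bad hi⟩
  rintro i hi ⟨ψ, hψ1, hψ2⟩
  obtain ⟨x, hx1, hx2⟩ := exists_bad hi
  have h := hψ1 x
  rw [hψ2 x, hx1] at h
  linarith
end
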